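/- arXiv:math/0611275 — 8 statements merged into one kernel-verified Lean document; each statement's English description precedes it below -/
import Mathlib

section
/- Let φ : [0,∞) → (0,1] be a continuous, strictly decreasing bijection with φ(0) = 1 whose restriction to (0,∞) is completely monotone, and let φ⁻¹ : (0,1] → [0,∞) denote its inverse. Then (i) for all n ≥ 1 and all u_1, …, u_n ∈ (0,1] one has ∏_{i=1}^n u_i ≤ φ(∑_{i=1}^n φ⁻¹(u_i)); and (ii) for all nonnegative weights θ_1, …, θ_n with ∑_{i=1}^n θ_i = 1 and all u_1, …, u_n ∈ (0,1], one has φ(∑_{i=1}^n θ_i φ⁻¹(u_i)) ≤ ∑_{i=1}^n θ_i u_i. (These are the lower geometric bound and the upper arithmetic bound of Proposition 1 for quasi-arithmetic compositions with completely monotone generator.) -/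
/-- A function `f : ℝ → ℝ` is completely monotone on `(0,∞)` if it is infinitely
differentiable there and `(-1)^k f^(k)(t) ≥ 0` for all `k` and `t > 0`. -/
def IsCompletelyMonotoneOn (f : ℝ → ℝ) : Prop :=
  ContDiffOn ℝ (⊤ : ℕ∞) f (Set.Ioi 0) ∧
  ∀ (k : ℕ) (t : ℝ), 0 < t →
    0 ≤ (-1 : ℝ) ^ k * iteratedDerivWithin k f (Set.Ioi 0) t

namespace QA
open Finset


def N (b : ℕ → ℝ) : ℕ → ℝ := fun k => b k - b (k + 1)

lemma N_iter_succ (a : ℕ → ℝ) (j k : ℕ) :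
    (N^[j+1] a) k = (N^[j] a) k - (N^[j] a) (k+1) := by
  rw [Function.iterate_succ_apply']; rfl

lemma sum_choose_N (p : ℕ) : ∀ (a : ℕ → ℝ) (m : ℕ),
    ∑ j ∈ Finset.range (p+1), (p.choose j : ℝ) * (N^[p-j] a) (m+j) = a m := by
  induction p with
  | zero => intro a m; simp
  | succ p IH =>
    intro a m
    have esub : ∀ j : ℕ, p + 1 - (j+1) = p - j := fun j => by omega
    have hU : ∑ j ∈ Finset.range (p+1), (p.choose j : ℝ) * (N^[p+1-j] a) (m+j)
        = a m - a (m+1) := by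
      have hc : ∀ j ∈ Finset.range (p+1),
          (p.choose j : ℝ) * (N^[p+1-j] a) (m+j)
            = (p.choose j : ℝ) * (N^[p-j] (N a)) (m+j) := by
        intro j hj
        rw [Finset.mem_range] at hj
        have e : p + 1 - j = (p - j) + 1 := by omega
        rw [e, Function.iterate_succ_apply]
      rw [Finset.sum_congr rfl hc, IH (N a) m]; rfl
    have hS : ∑ j ∈ Finset.range (p+2), (p.choose j : ℝ) * (N^[p+1-j] a) (m+j)
        = ∑ j ∈ Finset.range (p+1), (p.choose (j+1) : ℝ) * (N^[p-j] a) (m+(j+1))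
          + (N^[p+1] a) m := by
      rw [Finset.sum_range_succ']
      simp only [esub, Nat.sub_zero, Nat.add_zero, Nat.choose_zero_right, Nat.cast_one, one_mul]
    have hS2 : ∑ j ∈ Finset.range (p+2), (p.choose j : ℝ) * (N^[p+1-j] a) (m+j)
        = ∑ j ∈ Finset.range (p+1), (p.choose j : ℝ) * (N^[p+1-j] a) (m+j) := by
      rw [Finset.sum_range_succ]
      simp [Nat.choose_succ_self]
    have hT2 : ∑ j ∈ Finset.range (p+1), (p.choose (j+1) : ℝ) * (N^[p-j] a) (m+(j+1))
        = a m - a (m+1) - (N^[p+1] a) m := by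
      have h := hS.symm.trans hS2
      rw [hU] at h
      linarith
    rw [Finset.sum_range_succ']
    have h1 : ∀ j ∈ Finset.range (p+1),
        (((p+1).choose (j+1) : ℕ) : ℝ) * (N^[p+1-(j+1)] a) (m+(j+1))
          = (p.choose j : ℝ) * (N^[p-j] a) ((m+1)+j)
            + (p.choose (j+1) : ℝ) * (N^[p-j] a) (m+(j+1)) := by
      intro j hj
      rw [esub j, Nat.choose_succ_succ]
      push_cast
      have e2 : m + (j+1) = (m+1) + j := by omega
      rw [e2]; ring
    rw [Finset.sum_congr rfl h1, Finset.sum_add_distrib, IH a (m+1)]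
    rw [hT2]
    simp only [Nat.sub_zero, Nat.add_zero, Nat.choose_zero_right, Nat.cast_one, one_mul]
    ring


lemma descFactorial_choose (m : ℕ) : ∀ k n : ℕ, m ≤ k → k ≤ n →
    k.descFactorial m * n.choose k = n.descFactorial m * (n-m).choose (k-m) := by
  induction m with
  | zero => intro k n _ _; simp
  | succ m IH =>
    intro k n hmk hkn
    have h1 : m ≤ k := by omega
    rw [Nat.descFactorial_succ, Nat.descFactorial_succ]
    have IH' := IH k n h1 hkn
    have key : (k - m) * (n-m).choose (k-m) = (n - m) * ((n-m)-1).choose ((k-m)-1) := by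
      obtain ⟨a, ha⟩ : ∃ a, n - m = a + 1 := ⟨n - m - 1, by omega⟩
      obtain ⟨b, hb⟩ : ∃ b, k - m = b + 1 := ⟨k - m - 1, by omega⟩
      rw [ha, hb]
      simp only [Nat.add_sub_cancel]
      rw [Nat.mul_comm (b+1)]
      exact (Nat.add_one_mul_choose_eq a b).symm
    have e1 : n - (m+1) = (n - m) - 1 := by omega
    have e2 : k - (m+1) = (k - m) - 1 := by omega
    rw [e1, e2]
    calc (k - m) * k.descFactorial m * n.choose k
        = (k - m) * (k.descFactorial m * n.choose k) := by ring
      _ = (k - m) * (n.descFactorial m * (n-m).choose (k-m)) := by rw [IH']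
      _ = n.descFactorial m * ((k - m) * (n-m).choose (k-m)) := by ring
      _ = n.descFactorial m * ((n - m) * ((n-m)-1).choose ((k-m)-1)) := by rw [key]
      _ = (n - m) * n.descFactorial m * ((n-m)-1).choose ((k-m)-1) := by ring

lemma descFactorial_mul_pow_le (m : ℕ) : ∀ k n : ℕ, k ≤ n →
    k.descFactorial m * n ^ m ≤ n.descFactorial m * k ^ m := by
  induction m with
  | zero => intro k n _; simp
  | succ m IH =>
    intro k n hkn
    rw [Nat.descFactorial_succ, Nat.descFactorial_succ, pow_succ, pow_succ]
    have h1 : (k - m) * n ≤ (n - m) * k := by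
      rw [Nat.sub_mul, Nat.sub_mul]
      have h2 : m * k ≤ m * n := Nat.mul_le_mul_left m hkn
      have h3 : k * n = n * k := Nat.mul_comm k n
      omega
    calc (k - m) * k.descFactorial m * (n ^ m * n)
        = ((k-m) * n) * (k.descFactorial m * n ^ m) := by ring
      _ ≤ ((n-m) * k) * (n.descFactorial m * k ^ m) :=
          Nat.mul_le_mul h1 (IH k n hkn)
      _ = (n - m) * n.descFactorial m * (k ^ m * k) := by ring

lemma pow_sub_descFactorial_le (q : ℕ) : ∀ k : ℕ,
    (k:ℝ)^(q+1) - (k.descFactorial (q+1) : ℝ) ≤ ((q:ℝ)+1)^2 * (k:ℝ)^q := by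
  induction q with
  | zero => intro k; simp
  | succ q IH =>
    intro k
    have IHk := IH k
    have hd : (k.descFactorial (q+2) : ℝ) = ((k - (q+1) : ℕ) : ℝ) * k.descFactorial (q+1) := by
      rw [Nat.descFactorial_succ]; push_cast; ring
    have hsub : (k:ℝ) - ((q:ℝ)+1) ≤ ((k - (q+1) : ℕ) : ℝ) := by
      rcases le_or_gt (q+1) k with h | h
      · rw [Nat.cast_sub h]; push_cast; ring_nf; exact le_refl _
      · have : k - (q+1) = 0 := by omega
        rw [this]
        have : (k:ℝ) ≤ (q:ℝ)+1 := by exact_mod_cast h.le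
        simpa using by linarith
    have hdle : (k.descFactorial (q+1) : ℝ) ≤ (k:ℝ)^(q+1) := by
      exact_mod_cast Nat.descFactorial_le_pow k (q+1)
    have hknn : (0:ℝ) ≤ (k:ℝ) := Nat.cast_nonneg k
    have hpq : (0:ℝ) ≤ (k:ℝ)^q := pow_nonneg hknn q
    have hdnn : (0:ℝ) ≤ (k.descFactorial (q+1) : ℝ) := Nat.cast_nonneg _
    -- k^{q+2} - dF(q+2) = k*(k^{q+1} - dF(q+1)) + (k - (k-(q+1)))*dF(q+1)
    have expand : (k:ℝ)^(q+2) - (k.descFactorial (q+2) : ℝ)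
        = (k:ℝ) * ((k:ℝ)^(q+1) - k.descFactorial (q+1))
          + ((k:ℝ) - ((k - (q+1) : ℕ) : ℝ)) * k.descFactorial (q+1) := by
      rw [hd]; ring
    have hsub2 : (k:ℝ) - ((k - (q+1) : ℕ) : ℝ) ≤ (q:ℝ)+1 := by linarith
    have t1 : (k:ℝ) * ((k:ℝ)^(q+1) - k.descFactorial (q+1)) ≤ ((q:ℝ)+1)^2 * (k:ℝ)^(q+1) := by
      calc (k:ℝ) * ((k:ℝ)^(q+1) - k.descFactorial (q+1))
          ≤ (k:ℝ) * (((q:ℝ)+1)^2 * (k:ℝ)^q) := by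
            apply mul_le_mul_of_nonneg_left IHk hknn
        _ = ((q:ℝ)+1)^2 * (k:ℝ)^(q+1) := by ring
    have t2 : ((k:ℝ) - ((k - (q+1) : ℕ) : ℝ)) * k.descFactorial (q+1)
        ≤ ((q:ℝ)+1) * (k:ℝ)^(q+1) := by
      calc ((k:ℝ) - ((k - (q+1) : ℕ) : ℝ)) * k.descFactorial (q+1)
          ≤ ((q:ℝ)+1) * k.descFactorial (q+1) := by
            apply mul_le_mul_of_nonneg_right hsub2 hdnn
        _ ≤ ((q:ℝ)+1) * (k:ℝ)^(q+1) := by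
            apply mul_le_mul_of_nonneg_left hdle (by positivity)
    have hpq1 : (0:ℝ) ≤ (k:ℝ)^(q+1) := pow_nonneg hknn _
    calc (k:ℝ)^(q+2) - (k.descFactorial (q+2) : ℝ)
        ≤ ((q:ℝ)+1)^2 * (k:ℝ)^(q+1) + ((q:ℝ)+1) * (k:ℝ)^(q+1) := by
          rw [expand]; linarith
      _ ≤ ((q:ℝ)+1+1)^2 * (k:ℝ)^(q+1) := by nlinarith [hpq1]
      _ = (((q+1:ℕ):ℝ)+1)^2 * (k:ℝ)^(q+1) := by push_cast; ring


noncomputable def X (n m k : ℕ) : ℝ := (k.descFactorial m : ℝ) / (n.descFactorial m)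

lemma X_nonneg (n m k : ℕ) : 0 ≤ X n m k := by
  unfold X; positivity

lemma X_mono (n m : ℕ) {k l : ℕ} (hkl : k ≤ l) : X n m k ≤ X n m l := by
  unfold X
  rcases Nat.eq_zero_or_pos (n.descFactorial m) with h | h
  · simp [h]
  · have hd : (0:ℝ) < (n.descFactorial m : ℝ) := by exact_mod_cast h
    rw [div_le_div_iff_of_pos_right hd]
    exact_mod_cast Nat.descFactorial_le m hkl

lemma X_zero (n k : ℕ) : X n 0 k = 1 := by
  unfold X; simp

lemma descFactorial_pos {m n : ℕ} (hmn : m ≤ n) : (0:ℝ) < (n.descFactorial m : ℝ) := by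
  have : n.descFactorial m ≠ 0 := by
    intro h0
    have := Nat.descFactorial_eq_zero_iff_lt.mp h0
    omega
  exact_mod_cast Nat.pos_of_ne_zero this

lemma X_le_pow {n m k : ℕ} (hmn : m ≤ n) (hn : 0 < n) (hkn : k ≤ n) :
    X n m k ≤ ((k:ℝ)/n)^m := by
  have hdpos := descFactorial_pos hmn
  have hnpos : (0:ℝ) < (n:ℝ) := by exact_mod_cast hn
  have hnm : (0:ℝ) < (n:ℝ)^m := by positivity
  unfold X
  rw [div_pow, div_le_div_iff₀ hdpos hnm]
  calc (k.descFactorial m : ℝ) * (n:ℝ)^m = ((k.descFactorial m * n^m : ℕ) : ℝ) := by push_cast; ring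
    _ ≤ ((n.descFactorial m * k^m : ℕ) : ℝ) := by
        exact_mod_cast descFactorial_mul_pow_le m k n hkn
    _ = (k:ℝ)^m * (n.descFactorial m : ℝ) := by push_cast; ring

lemma pow_le_X {n r k : ℕ} (hrn : r ≤ n) (hn : 0 < n) (hkn : k ≤ n) :
    ((k:ℝ)/n)^r ≤ X n r k + (r:ℝ)^2/n := by
  have hnpos : (0:ℝ) < (n:ℝ) := by exact_mod_cast hn
  cases r with
  | zero => simp [X_zero]
  | succ q =>
    set r := q + 1 with hr
    have hdpos := descFactorial_pos hrn
    have hnr : (0:ℝ) < (n:ℝ)^r := by positivity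
    have hknn : (0:ℝ) ≤ (k:ℝ) := Nat.cast_nonneg k
    have h1 : (k:ℝ)^r ≤ (k.descFactorial r : ℝ) + (r:ℝ)^2 * (k:ℝ)^q := by
      have := pow_sub_descFactorial_le q k
      have e : ((q:ℝ)+1) = (r:ℝ) := by push_cast [hr]; ring
      rw [e] at this
      linarith
    have h2 : (k.descFactorial r : ℝ)/(n:ℝ)^r ≤ X n r k := by
      unfold X
      apply div_le_div_of_nonneg_left (Nat.cast_nonneg _) hdpos
      exact_mod_cast Nat.descFactorial_le_pow n r
    have h3 : (r:ℝ)^2 * (k:ℝ)^q / (n:ℝ)^r ≤ (r:ℝ)^2/n := by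
      have hk : (k:ℝ)^q ≤ (n:ℝ)^q := pow_le_pow_left₀ hknn (by exact_mod_cast hkn) q
      have e : (n:ℝ)^r = (n:ℝ)^q * n := by rw [hr, pow_succ]
      rw [e]
      rw [div_le_div_iff₀ (by positivity) hnpos]
      have hq : (0:ℝ) < (n:ℝ)^q := by positivity
      calc (r:ℝ)^2 * (k:ℝ)^q * n ≤ (r:ℝ)^2 * (n:ℝ)^q * n := by
            have hh := mul_le_mul_of_nonneg_left hk (sq_nonneg (r:ℝ))
            nlinarith [hnpos.le]
        _ = (r:ℝ)^2 * ((n:ℝ)^q * n) := by ring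
    calc ((k:ℝ)/n)^r = (k:ℝ)^r/(n:ℝ)^r := by rw [div_pow]
      _ ≤ ((k.descFactorial r : ℝ) + (r:ℝ)^2 * (k:ℝ)^q)/(n:ℝ)^r := by
          gcongr
      _ = (k.descFactorial r : ℝ)/(n:ℝ)^r + (r:ℝ)^2 * (k:ℝ)^q/(n:ℝ)^r := by rw [add_div]
      _ ≤ X n r k + (r:ℝ)^2/n := add_le_add h2 h3

lemma X_mul_le {n m m' k : ℕ} (hmn : m + m' ≤ n) (hn : 0 < n) (hkn : k ≤ n) :
    X n m k * X n m' k ≤ X n (m+m') k + ((m+m' : ℕ):ℝ)^2/n := by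
  have h1 : X n m k ≤ ((k:ℝ)/n)^m := X_le_pow (by omega) hn hkn
  have h2 : X n m' k ≤ ((k:ℝ)/n)^m' := X_le_pow (by omega) hn hkn
  have hp : (0:ℝ) ≤ ((k:ℝ)/n)^m := by positivity
  calc X n m k * X n m' k ≤ ((k:ℝ)/n)^m * ((k:ℝ)/n)^m' :=
        mul_le_mul h1 h2 (X_nonneg n m' k) hp
    _ = ((k:ℝ)/n)^(m+m') := by rw [pow_add]
    _ ≤ X n (m+m') k + ((m+m' : ℕ):ℝ)^2/n := by
        have := pow_le_X (r := m+m') hmn hn hkn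
        push_cast at this ⊢
        linarith


lemma chebyshev_weighted (s : Finset ℕ) (w f g : ℕ → ℝ)
    (hw : ∀ i ∈ s, 0 ≤ w i)
    (hfg : ∀ i ∈ s, ∀ j ∈ s, 0 ≤ (f i - f j) * (g i - g j)) :
    (∑ i ∈ s, w i * f i) * (∑ i ∈ s, w i * g i)
      ≤ (∑ i ∈ s, w i) * (∑ i ∈ s, w i * (f i * g i)) := by
  have h1 : 0 ≤ ∑ i ∈ s, ∑ j ∈ s, w i * w j * ((f i - f j) * (g i - g j)) := by
    apply Finset.sum_nonneg; intro i hi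
    apply Finset.sum_nonneg; intro j hj
    exact mul_nonneg (mul_nonneg (hw i hi) (hw j hj)) (hfg i hi j hj)
  have e1 : (∑ i ∈ s, w i) * (∑ i ∈ s, w i * (f i * g i))
      = ∑ i ∈ s, ∑ j ∈ s, w i * (w j * (f j * g j)) := Finset.sum_mul_sum s s _ _
  have e2 : (∑ i ∈ s, w i * f i) * (∑ i ∈ s, w i * g i)
      = ∑ i ∈ s, ∑ j ∈ s, (w i * f i) * (w j * g j) := Finset.sum_mul_sum s s _ _
  have e3 : ∑ i ∈ s, ∑ j ∈ s, w i * (w j * (f j * g j))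
      = ∑ i ∈ s, ∑ j ∈ s, w j * (w i * (f i * g i)) := Finset.sum_comm
  have e4 : ∑ i ∈ s, ∑ j ∈ s, (w i * f i) * (w j * g j)
      = ∑ i ∈ s, ∑ j ∈ s, (w j * f j) * (w i * g i) := Finset.sum_comm
  have expand : ∑ i ∈ s, ∑ j ∈ s, w i * w j * ((f i - f j) * (g i - g j))
      = (∑ i ∈ s, ∑ j ∈ s, w i * (w j * (f j * g j)))
        + (∑ i ∈ s, ∑ j ∈ s, w j * (w i * (f i * g i)))
        - ((∑ i ∈ s, ∑ j ∈ s, (w i * f i) * (w j * g j))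
        + (∑ i ∈ s, ∑ j ∈ s, (w j * f j) * (w i * g i))) := by
    rw [← Finset.sum_add_distrib, ← Finset.sum_add_distrib, ← Finset.sum_sub_distrib]
    apply Finset.sum_congr rfl; intro i _
    rw [← Finset.sum_add_distrib, ← Finset.sum_add_distrib, ← Finset.sum_sub_distrib]
    apply Finset.sum_congr rfl; intro j _
    ring
  rw [expand, ← e3, ← e4] at h1
  linarith [h1, e1, e2]


/-- representation: for `m ≤ n`, `a m = ∑ k, X n m k * w k` with
`w k = C(n,k) * (N^[n-k] a) k`. -/
lemma repr_X (a : ℕ → ℝ) {m n : ℕ} (hmn : m ≤ n) :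
    a m = ∑ k ∈ Finset.range (n+1),
      X n m k * ((n.choose k : ℝ) * (N^[n-k] a) k) := by
  have hid := sum_choose_N (n - m) a m
  have hd := descFactorial_pos hmn
  -- rewrite the RHS sum: terms with k < m vanish
  have hsplit : ∑ k ∈ Finset.range (n+1), X n m k * ((n.choose k : ℝ) * (N^[n-k] a) k)
      = ∑ j ∈ Finset.range (n-m+1), X n m (m+j) * ((n.choose (m+j) : ℝ) * (N^[n-(m+j)] a) (m+j)) := by
    have e : n + 1 = m + (n - m + 1) := by omega
    rw [e, Finset.sum_range_add]
    have hz : ∑ k ∈ Finset.range m, X n m k * ((n.choose k : ℝ) * (N^[n-k] a) k) = 0 := by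
      apply Finset.sum_eq_zero; intro k hk
      rw [Finset.mem_range] at hk
      have : k.descFactorial m = 0 := Nat.descFactorial_eq_zero_iff_lt.mpr hk
      unfold X; rw [this]; simp
    rw [hz, zero_add]
  rw [hsplit]
  have hterm : ∀ j ∈ Finset.range (n-m+1),
      X n m (m+j) * ((n.choose (m+j) : ℝ) * (N^[n-(m+j)] a) (m+j))
        = ((n-m).choose j : ℝ) * (N^[n-m-j] a) (m+j) := by
    intro j hj
    rw [Finset.mem_range] at hj
    have hkn : m + j ≤ n := by omega
    have hDL := descFactorial_choose m (m+j) n (by omega) hkn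
    have e1 : (m+j) - m = j := by omega
    rw [e1] at hDL
    have e2 : n - (m+j) = n - m - j := by omega
    rw [e2]
    unfold X
    have hcast : (((m+j).descFactorial m : ℕ) : ℝ) * (n.choose (m+j) : ℝ)
        = (n.descFactorial m : ℝ) * ((n-m).choose j : ℝ) := by exact_mod_cast hDL
    rw [div_mul_eq_mul_div, div_eq_iff (ne_of_gt hd)]
    linear_combination ((N^[n-m-j] a) (m+j)) * hcast
  rw [Finset.sum_congr rfl hterm, hid]

/-- main discrete inequality for totally monotone sequences -/
lemma discrete_logconvex (a : ℕ → ℝ) (hTM : ∀ j k, 0 ≤ (N^[j] a) k)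
    (m m' : ℕ) : a m * a m' ≤ a 0 * a (m + m') := by
  set r := m + m' with hr
  have key : ∀ n : ℕ, r ≤ n → 0 < n →
      a m * a m' ≤ a 0 * a r + ((r:ℝ)^2 / n) * (a 0 * a 0) := by
    intro n hrn hn
    set w : ℕ → ℝ := fun k => (n.choose k : ℝ) * (N^[n-k] a) k with hw
    have hwnn : ∀ k ∈ Finset.range (n+1), 0 ≤ w k := fun k _ =>
      mul_nonneg (Nat.cast_nonneg _) (hTM _ _)
    have hrm : a m = ∑ k ∈ Finset.range (n+1), w k * X n m k := by
      rw [repr_X a (show m ≤ n by omega)]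
      exact Finset.sum_congr rfl fun k _ => by ring
    have hrm' : a m' = ∑ k ∈ Finset.range (n+1), w k * X n m' k := by
      rw [repr_X a (show m' ≤ n by omega)]
      exact Finset.sum_congr rfl fun k _ => by ring
    have hrr : a r = ∑ k ∈ Finset.range (n+1), w k * X n r k := by
      rw [repr_X a hrn]
      exact Finset.sum_congr rfl fun k _ => by ring
    have hr0 : a 0 = ∑ k ∈ Finset.range (n+1), w k := by
      have := repr_X a (show 0 ≤ n by omega)
      simpa [X_zero] using this
    have hmono : ∀ i ∈ Finset.range (n+1), ∀ j ∈ Finset.range (n+1),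
        0 ≤ (X n m i - X n m j) * (X n m' i - X n m' j) := by
      intro i _ j _
      rcases le_total i j with h | h
      · have h1 : X n m i ≤ X n m j := X_mono n m h
        have h2 : X n m' i ≤ X n m' j := X_mono n m' h
        nlinarith
      · have h1 : X n m j ≤ X n m i := X_mono n m h
        have h2 : X n m' j ≤ X n m' i := X_mono n m' h
        nlinarith
    have cheb := chebyshev_weighted (Finset.range (n+1)) w (X n m) (X n m') hwnn hmono
    have step2 : ∑ k ∈ Finset.range (n+1), w k * (X n m k * X n m' k)
        ≤ ∑ k ∈ Finset.range (n+1), w k * (X n r k + (r:ℝ)^2/n) := by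
      apply Finset.sum_le_sum
      intro k hk
      rw [Finset.mem_range] at hk
      apply mul_le_mul_of_nonneg_left _ (hwnn k (by rw [Finset.mem_range]; omega))
      have := X_mul_le (n := n) (m := m) (m' := m') (k := k) (by omega) hn (by omega)
      rw [← hr] at this
      exact this
    have hsum_expand : ∑ k ∈ Finset.range (n+1), w k * (X n r k + (r:ℝ)^2/n)
        = a r + (r:ℝ)^2/n * a 0 := by
      rw [Finset.sum_congr rfl (fun k _ => mul_add (w k) (X n r k) ((r:ℝ)^2/n)),
        Finset.sum_add_distrib, ← hrr]
      congr 1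
      rw [hr0, Finset.mul_sum]
      exact Finset.sum_congr rfl fun k _ => by ring
    have h0nn : 0 ≤ a 0 := hTM 0 0
    calc a m * a m' = (∑ k ∈ Finset.range (n+1), w k * X n m k)
          * (∑ k ∈ Finset.range (n+1), w k * X n m' k) := by rw [← hrm, ← hrm']
      _ ≤ (∑ k ∈ Finset.range (n+1), w k) * (∑ k ∈ Finset.range (n+1), w k * (X n m k * X n m' k)) := cheb
      _ ≤ (∑ k ∈ Finset.range (n+1), w k) * (∑ k ∈ Finset.range (n+1), w k * (X n r k + (r:ℝ)^2/n)) := by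
          apply mul_le_mul_of_nonneg_left step2
          rw [← hr0]; exact h0nn
      _ = a 0 * (a r + (r:ℝ)^2/n * a 0) := by rw [← hr0, hsum_expand]
      _ = a 0 * a r + ((r:ℝ)^2/n) * (a 0 * a 0) := by ring
  -- let n → ∞
  have hlim : Filter.Tendsto (fun n : ℕ => a 0 * a r + ((r:ℝ)^2 / n) * (a 0 * a 0))
      Filter.atTop (nhds (a 0 * a r)) := by
    have h1 : Filter.Tendsto (fun n : ℕ => ((r:ℝ)^2 / n)) Filter.atTop (nhds 0) :=
      tendsto_const_div_atTop_nhds_zero_nat _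
    have h2 := (h1.mul_const (a 0 * a 0)).const_add (a 0 * a r)
    simpa using h2
  apply ge_of_tendsto hlim
  filter_upwards [Filter.eventually_ge_atTop (r+1)] with n hn
  exact key n (by omega) (by omega)

lemma iDW_Ioi (f : ℝ → ℝ) (n : ℕ) {x : ℝ} (hx : 0 < x) :
    iteratedDerivWithin n f (Set.Ioi 0) x = iteratedDeriv n f x := by
  rw [iteratedDerivWithin_eq_iteratedFDerivWithin, iteratedDeriv_eq_iteratedFDeriv,
    iteratedFDerivWithin_of_isOpen n isOpen_Ioi hx]

lemma cm_iter_smooth {f : ℝ → ℝ} (hf : ContDiffOn ℝ (⊤ : ℕ∞) f (Set.Ioi 0)) (k : ℕ) :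
    ContDiffOn ℝ (⊤ : ℕ∞) (iteratedDeriv k f) (Set.Ioi (0:ℝ)) := by
  induction k with
  | zero => simpa [iteratedDeriv_zero] using hf
  | succ k IH =>
    rw [iteratedDeriv_succ]
    exact IH.deriv_of_isOpen isOpen_Ioi (by simp)

lemma cm_diffAt {f : ℝ → ℝ} (hf : ContDiffOn ℝ (⊤ : ℕ∞) f (Set.Ioi 0)) (k : ℕ) {t : ℝ}
    (ht : 0 < t) : DifferentiableAt ℝ (iteratedDeriv k f) t := by
  have h1 : DifferentiableOn ℝ (iteratedDeriv k f) (Set.Ioi 0) :=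
    (cm_iter_smooth hf k).differentiableOn (by simp)
  exact h1.differentiableAt (isOpen_Ioi.mem_nhds ht)

lemma cm_sign {f : ℝ → ℝ} (hf : IsCompletelyMonotoneOn f) (k : ℕ) {t : ℝ} (ht : 0 < t) :
    0 ≤ (-1:ℝ)^k * iteratedDeriv k f t := by
  have := hf.2 k t ht
  rwa [iDW_Ioi f k ht] at this

lemma cm_anti {f : ℝ → ℝ} (hf : IsCompletelyMonotoneOn f) (k : ℕ) :
    AntitoneOn (fun t => (-1:ℝ)^k * iteratedDeriv k f t) (Set.Ioi 0) := by
  apply antitoneOn_of_deriv_nonpos (convex_Ioi 0)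
  · exact continuousOn_const.mul (cm_iter_smooth hf.1 k).continuousOn
  · rw [interior_Ioi]
    intro x hx
    exact ((cm_diffAt hf.1 k hx).const_mul _).differentiableWithinAt
  · rw [interior_Ioi]
    intro x hx
    rw [deriv_const_mul _ (cm_diffAt hf.1 k hx)]
    have hsign := cm_sign hf (k+1) hx
    have e : deriv (iteratedDeriv k f) x = iteratedDeriv (k+1) f x := by
      rw [iteratedDeriv_succ]
    rw [e]
    have : ((-1:ℝ))^(k+1) = -((-1:ℝ))^k := by ring
    rw [this] at hsign
    linarith

lemma cm_shift_sub {f : ℝ → ℝ} (hf : IsCompletelyMonotoneOn f) {h : ℝ} (hh : 0 ≤ h) :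
    IsCompletelyMonotoneOn (fun t => f t - f (t + h)) := by
  have hmaps : Set.MapsTo (fun t : ℝ => t + h) (Set.Ioi 0) (Set.Ioi 0) := by
    intro t ht
    simp only [Set.mem_Ioi] at *
    linarith
  have hsm2 : ContDiffOn ℝ (⊤ : ℕ∞) (fun t => f (t + h)) (Set.Ioi 0) :=
    hf.1.comp ((contDiff_id.add contDiff_const).contDiffOn) hmaps
  have hsm : ContDiffOn ℝ (⊤ : ℕ∞) (fun t => f t - f (t + h)) (Set.Ioi 0) := hf.1.sub hsm2
  have hformula : ∀ k : ℕ, ∀ t ∈ Set.Ioi (0:ℝ),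
      iteratedDeriv k (fun s => f s - f (s + h)) t
        = iteratedDeriv k f t - iteratedDeriv k f (t + h) := by
    intro k
    induction k with
    | zero => intro t _; simp [iteratedDeriv_zero]
    | succ k IH =>
      intro t ht
      rw [iteratedDeriv_succ]
      have hev : iteratedDeriv k (fun s => f s - f (s + h))
          =ᶠ[nhds t] fun s => iteratedDeriv k f s - iteratedDeriv k f (s + h) :=
        Filter.eventuallyEq_of_mem (isOpen_Ioi.mem_nhds ht) IH
      rw [hev.deriv_eq]
      have ht' : (0:ℝ) < t + h := by
        simp only [Set.mem_Ioi] at ht; linarith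
      have d1 : DifferentiableAt ℝ (iteratedDeriv k f) t := cm_diffAt hf.1 k ht
      have d2 : DifferentiableAt ℝ (fun s => iteratedDeriv k f (s + h)) t := by
        have := DifferentiableAt.comp t (cm_diffAt hf.1 k ht')
          (differentiableAt_id.add_const h)
        exact this
      rw [deriv_fun_sub d1 d2, deriv_comp_add_const (iteratedDeriv k f) h,
        iteratedDeriv_succ]
  refine ⟨hsm, ?_⟩
  intro k t ht
  rw [iDW_Ioi _ k ht, hformula k t ht]
  have ht' : (0:ℝ) < t + h := by linarith
  have hanti : (-1:ℝ)^k * iteratedDeriv k f (t+h) ≤ (-1:ℝ)^k * iteratedDeriv k f t :=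
    cm_anti hf k ht (Set.mem_Ioi.mpr ht') (by linarith)
  simp only [mul_sub]
  linarith


def Nd (h : ℝ) (g : ℝ → ℝ) : ℝ → ℝ := fun t => g t - g (t + h)

lemma sample_comm (h : ℝ) (j : ℕ) : ∀ (f : ℝ → ℝ) (k : ℕ),
    (N^[j] (fun i : ℕ => f (i * h))) k = ((Nd h)^[j] f) ((k : ℝ) * h) := by
  induction j with
  | zero => intro f k; rfl
  | succ j IH =>
    intro f k
    have e : N (fun i : ℕ => f (i * h)) = fun i : ℕ => (Nd h f) ((i:ℝ) * h) := by
      funext i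
      show f (i*h) - f (((i+1 : ℕ):ℝ)*h) = f ((i:ℝ)*h) - f ((i:ℝ)*h + h)
      push_cast
      ring_nf
    rw [Function.iterate_succ_apply, Function.iterate_succ_apply, e, IH (Nd h f) k]

lemma tm_sample {φ : ℝ → ℝ} (hφcm : IsCompletelyMonotoneOn φ)
    (hφc : ContinuousOn φ (Set.Ici 0)) {h : ℝ} (hh : 0 < h) :
    ∀ j k, 0 ≤ (N^[j] (fun i : ℕ => φ (i * h))) k := by
  have main : ∀ j, IsCompletelyMonotoneOn ((Nd h)^[j] φ) ∧
      ContinuousOn ((Nd h)^[j] φ) (Set.Ici 0) := by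
    intro j
    induction j with
    | zero => exact ⟨hφcm, hφc⟩
    | succ j IH =>
      rw [Function.iterate_succ_apply']
      refine ⟨cm_shift_sub IH.1 hh.le, ?_⟩
      exact IH.2.sub (IH.2.comp (Continuous.continuousOn (by continuity))
        (fun t ht => by simp only [Set.mem_Ici] at *; linarith))
  intro j k
  rw [sample_comm h j φ k]
  have hg0 : ∀ t : ℝ, 0 < t → 0 ≤ ((Nd h)^[j] φ) t := by
    intro t ht
    have := (main j).1.2 0 t ht
    simpa [iteratedDerivWithin_zero] using this
  have hkh : 0 ≤ (k:ℝ) * h := by positivity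
  rcases eq_or_lt_of_le hkh with hez | hlt
  · rw [← hez]
    have hc : ContinuousWithinAt ((Nd h)^[j] φ) (Set.Ici 0) 0 :=
      (main j).2.continuousWithinAt Set.self_mem_Ici
    have ht : Filter.Tendsto ((Nd h)^[j] φ) (nhdsWithin 0 (Set.Ioi 0))
        (nhds (((Nd h)^[j] φ) 0)) :=
      hc.tendsto.mono_left (nhdsWithin_mono 0 Set.Ioi_subset_Ici_self)
    exact ge_of_tendsto ht (eventually_mem_nhdsWithin.mono fun x hx => hg0 x hx)
  · exact hg0 _ hlt

lemma key_nat {φ : ℝ → ℝ} (hφcm : IsCompletelyMonotoneOn φ)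
    (hφc : ContinuousOn φ (Set.Ici 0)) (hφ0 : φ 0 = 1) {h : ℝ} (hh : 0 < h)
    (m m' : ℕ) : φ (m * h) * φ (m' * h) ≤ φ (((m + m' : ℕ) : ℝ) * h) := by
  have := discrete_logconvex (fun i : ℕ => φ (i*h)) (tm_sample hφcm hφc hh) m m'
  simpa [hφ0] using this

end QA

/-- Proposition 1 (lower geometric and upper arithmetic bounds) for
quasi-arithmetic compositions with a completely monotone generator
`φ : [0,∞) → (0,1]` (continuous, strictly decreasing bijection with `φ 0 = 1`),
with inverse `φinv : (0,1] → [0,∞)`. -/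
theorem quasiArithmetic_geometric_lower_arithmetic_upper
    (φ φinv : ℝ → ℝ)
    (hcont : ContinuousOn φ (Set.Ici 0))
    (hanti : StrictAntiOn φ (Set.Ici 0))
    (hbij : Set.BijOn φ (Set.Ici 0) (Set.Ioc 0 1))
    (hφ0 : φ 0 = 1)
    (hcm : IsCompletelyMonotoneOn φ)
    (hinv_left : ∀ t ∈ Set.Ici (0 : ℝ), φinv (φ t) = t)
    (hinv_right : ∀ u ∈ Set.Ioc (0 : ℝ) 1, φ (φinv u) = u)
    (hinv_mem : ∀ u ∈ Set.Ioc (0 : ℝ) 1, φinv u ∈ Set.Ici (0 : ℝ)) :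
    -- (i) lower geometric bound
    (∀ (n : ℕ), 1 ≤ n → ∀ u : Fin n → ℝ, (∀ i, u i ∈ Set.Ioc (0 : ℝ) 1) →
      ∏ i, u i ≤ φ (∑ i, φinv (u i))) ∧
    -- (ii) upper arithmetic bound
    (∀ (n : ℕ), 1 ≤ n → ∀ (θ u : Fin n → ℝ),
      (∀ i, 0 ≤ θ i) → (∑ i, θ i) = 1 → (∀ i, u i ∈ Set.Ioc (0 : ℝ) 1) →
      φ (∑ i, θ i * φinv (u i)) ≤ ∑ i, θ i * u i) := by
  have hφpos : ∀ x : ℝ, 0 ≤ x → 0 < φ x := fun x hx => (hbij.mapsTo hx).1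
  have hantile : ∀ x y : ℝ, 0 ≤ x → x ≤ y → φ y ≤ φ x := by
    intro x y hx hxy
    rcases eq_or_lt_of_le hxy with rfl | hlt
    · exact le_refl _
    · exact (hanti hx (le_trans hx hxy) hlt).le
  -- the key superadditivity inequality
  have key : ∀ u v : ℝ, 0 ≤ u → 0 ≤ v → φ u * φ v ≤ φ (u + v) := by
    intro u v hu hv
    rcases eq_or_lt_of_le hu with he | hupos
    · rw [← he, hφ0, one_mul, zero_add]
    · have hP : ∀ j : ℕ, 1 ≤ j → φ u * φ (v + u / j) ≤ φ (u + v) := by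
        intro j hj
        have hjpos : (0:ℝ) < j := by exact_mod_cast hj
        set h := u / j with hhdef
        have hhpos : 0 < h := div_pos hupos hjpos
        set m' := Nat.ceil (v / h) with hm'
        have h1 : v ≤ (m' : ℝ) * h := by
          rw [← div_le_iff₀ hhpos]
          exact Nat.le_ceil _
        have h2 : (m' : ℝ) * h ≤ v + h := by
          have hlt1 : (m' : ℝ) < v / h + 1 := by
            have := Nat.ceil_lt_add_one (a := v/h) (by positivity)
            exact_mod_cast this
          have : (m':ℝ) * h ≤ (v/h + 1) * h := by nlinarith
          calc (m':ℝ) * h ≤ (v/h + 1) * h := this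
            _ = v + h := by field_simp
        have hju : (j : ℝ) * h = u := by
          rw [hhdef]; field_simp
        have hkn := QA.key_nat (φ := φ) hcm hcont hφ0 hhpos j m'
        push_cast at hkn
        rw [add_mul, hju] at hkn
        have c1 : φ (v + h) ≤ φ ((m':ℝ) * h) := hantile _ _ (by positivity) h2
        have c2 : φ (u + (m':ℝ)*h) ≤ φ (u + v) := hantile _ _ (by linarith) (by linarith)
        have hφu : 0 ≤ φ u := (hφpos u hupos.le).le
        calc φ u * φ (v + h) ≤ φ u * φ ((m':ℝ)*h) := mul_le_mul_of_nonneg_left c1 hφu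
          _ ≤ φ (u + (m':ℝ)*h) := hkn
          _ ≤ φ (u + v) := c2
      have hlim : Filter.Tendsto (fun j : ℕ => φ u * φ (v + u / j)) Filter.atTop
          (nhds (φ u * φ v)) := by
        have l1 : Filter.Tendsto (fun j : ℕ => v + u / j) Filter.atTop (nhds v) := by
          have := tendsto_const_div_atTop_nhds_zero_nat u
          simpa using (tendsto_const_nhds.add this)
        have l2 : Filter.Tendsto (fun j : ℕ => v + u / j) Filter.atTop
            (nhdsWithin v (Set.Ici 0)) := by
          apply tendsto_nhdsWithin_of_tendsto_nhds_of_eventually_within _ l1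
          filter_upwards with j
          have hj0 : 0 ≤ u / (j:ℝ) := by positivity
          simp only [Set.mem_Ici]
          linarith
        have l3 := (hcont.continuousWithinAt (Set.mem_Ici.mpr hv)).tendsto.comp l2
        exact l3.const_mul _
      apply le_of_tendsto hlim
      filter_upwards [Filter.eventually_ge_atTop 1] with j hj using hP j hj
  constructor
  · -- (i)
    intro n hn u hu
    have main : ∀ s : Finset (Fin n), ∏ i ∈ s, u i ≤ φ (∑ i ∈ s, φinv (u i)) := by
      intro s
      induction s using Finset.induction_on with
      | empty => simp [hφ0]
      | @insert a s ha IH =>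
        rw [Finset.prod_insert ha, Finset.sum_insert ha]
        have hsum_nn : 0 ≤ ∑ i ∈ s, φinv (u i) :=
          Finset.sum_nonneg fun i _ => hinv_mem _ (hu i)
        have hua := hu a
        have h2 : u a * ∏ i ∈ s, u i ≤ u a * φ (∑ i ∈ s, φinv (u i)) :=
          mul_le_mul_of_nonneg_left IH hua.1.le
        calc u a * ∏ i ∈ s, u i ≤ u a * φ (∑ i ∈ s, φinv (u i)) := h2
          _ = φ (φinv (u a)) * φ (∑ i ∈ s, φinv (u i)) := by rw [hinv_right _ hua]
          _ ≤ φ (φinv (u a) + ∑ i ∈ s, φinv (u i)) :=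
              key _ _ (hinv_mem _ hua) hsum_nn
    exact main Finset.univ
  · -- (ii)
    intro n hn θ u hθ hθ1 hu
    have hconv : ConvexOn ℝ (Set.Ici 0) φ := by
      apply convexOn_of_deriv2_nonneg (convex_Ici 0) hcont
      · rw [interior_Ici]
        exact hcm.1.differentiableOn (by simp)
      · rw [interior_Ici]
        intro x hx
        have hd : DifferentiableAt ℝ (deriv φ) x := by
          have := QA.cm_diffAt hcm.1 1 hx
          simpa [iteratedDeriv_one] using this
        exact hd.differentiableWithinAt
      · rw [interior_Ici]
        intro x hx
        have hs := QA.cm_sign hcm 2 hx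
        rw [iteratedDeriv_eq_iterate] at hs
        simpa using hs
    have hmem : ∀ i ∈ Finset.univ, φinv (u i) ∈ Set.Ici (0:ℝ) :=
      fun i _ => hinv_mem _ (hu i)
    have hJ := hconv.map_sum_le (fun i _ => hθ i) hθ1 hmem
    simp only [smul_eq_mul] at hJ
    calc φ (∑ i, θ i * φinv (u i)) ≤ ∑ i, θ i * φ (φinv (u i)) := hJ
      _ = ∑ i, θ i * u i := Finset.sum_congr rfl fun i _ => by rw [hinv_right _ (hu i)]
end

section
/- Let φ_1, φ_2 : [0,∞) → (0,1] be continuous, strictly decreasing bijections with φ_1(0) = φ_2(0) = 1, with inverses φ_1⁻¹, φ_2⁻¹ : (0,1] → [0,∞). Then the inequality φ_1(∑_{i=1}^n φ_1⁻¹(u_i)) ≤ φ_2(∑_{i=1}^n φ_2⁻¹(u_i)) holds for every n ≥ 1 and all u_1, …, u_n ∈ (0,1] if and only if the function φ_1⁻¹ ∘ φ_2 : [0,∞) → [0,∞) is subadditive, i.e. (φ_1⁻¹ ∘ φ_2)(a + b) ≤ (φ_1⁻¹ ∘ φ_2)(a) + (φ_1⁻¹ ∘ φ_2)(b) for all a,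 b ≥ 0. -/
/-- Ordering of quasi-arithmetic compositions: `φ₁(∑ φ₁⁻¹(uᵢ)) ≤ φ₂(∑ φ₂⁻¹(uᵢ))`
for all finite families of values in `(0,1]` if and only if `φ₁⁻¹ ∘ φ₂` is
subadditive on `[0,∞)`. Here `φ₁, φ₂ : [0,∞) → (0,1]` are continuous strictly
decreasing bijections with `φᵢ(0) = 1` and inverses `φinv₁, φinv₂`. -/
theorem quasiArithmetic_ordering_iff_subadditive
    (φ₁ φ₂ φinv₁ φinv₂ : ℝ → ℝ)
    (hcont₁ : ContinuousOn φ₁ (Set.Ici 0))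
    (hcont₂ : ContinuousOn φ₂ (Set.Ici 0))
    (hanti₁ : StrictAntiOn φ₁ (Set.Ici 0))
    (hanti₂ : StrictAntiOn φ₂ (Set.Ici 0))
    (hbij₁ : Set.BijOn φ₁ (Set.Ici 0) (Set.Ioc 0 1))
    (hbij₂ : Set.BijOn φ₂ (Set.Ici 0) (Set.Ioc 0 1))
    (hφ₁0 : φ₁ 0 = 1) (hφ₂0 : φ₂ 0 = 1)
    (hinv₁_left : ∀ t ∈ Set.Ici (0 : ℝ), φinv₁ (φ₁ t) = t)
    (hinv₁_right : ∀ u ∈ Set.Ioc (0 : ℝ) 1, φ₁ (φinv₁ u) = u)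
    (hinv₁_mem : ∀ u ∈ Set.Ioc (0 : ℝ) 1, φinv₁ u ∈ Set.Ici (0 : ℝ))
    (hinv₂_left : ∀ t ∈ Set.Ici (0 : ℝ), φinv₂ (φ₂ t) = t)
    (hinv₂_right : ∀ u ∈ Set.Ioc (0 : ℝ) 1, φ₂ (φinv₂ u) = u)
    (hinv₂_mem : ∀ u ∈ Set.Ioc (0 : ℝ) 1, φinv₂ u ∈ Set.Ici (0 : ℝ)) :
    (∀ (n : ℕ), 1 ≤ n → ∀ u : Fin n → ℝ, (∀ i, u i ∈ Set.Ioc (0 : ℝ) 1) →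
      φ₁ (∑ i, φinv₁ (u i)) ≤ φ₂ (∑ i, φinv₂ (u i))) ↔
    (∀ a b : ℝ, 0 ≤ a → 0 ≤ b →
      φinv₁ (φ₂ (a + b)) ≤ φinv₁ (φ₂ a) + φinv₁ (φ₂ b)) := by
  set g : ℝ → ℝ := fun t => φinv₁ (φ₂ t) with hg
  have hφ₂mem : ∀ t : ℝ, 0 ≤ t → φ₂ t ∈ Set.Ioc (0 : ℝ) 1 := fun t ht => hbij₂.mapsTo ht
  have hgnn : ∀ t : ℝ, 0 ≤ t → 0 ≤ g t := fun t ht => hinv₁_mem _ (hφ₂mem t ht)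
  have hg0 : g 0 = 0 := by
    have : φinv₁ (φ₁ 0) = 0 := hinv₁_left 0 (Set.mem_Ici.mpr le_rfl)
    simp only [hg, hφ₂0, ← hφ₁0, this]
  have hφ₁g : ∀ t : ℝ, 0 ≤ t → φ₁ (g t) = φ₂ t := fun t ht =>
    hinv₁_right _ (hφ₂mem t ht)
  constructor
  · intro H a b ha hb
    have hmem : ∀ i : Fin 2, (![φ₂ a, φ₂ b]) i ∈ Set.Ioc (0 : ℝ) 1 := by
      intro i
      fin_cases i
      · exact hφ₂mem a ha
      · exact hφ₂mem b hb
    have h2 := H 2 (by norm_num) ![φ₂ a, φ₂ b] hmem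
    simp only [Fin.sum_univ_two, Matrix.cons_val_zero, Matrix.cons_val_one, Matrix.head_cons,
      hinv₂_left a ha, hinv₂_left b hb] at h2
    -- h2 : φ₁ (g a + g b) ≤ φ₂ (a + b)
    by_contra hlt
    push_neg at hlt
    have hab : (0:ℝ) ≤ a + b := by linarith
    have hsum : (0:ℝ) ≤ g a + g b := by
      have := hgnn a ha; have := hgnn b hb; linarith
    have := hanti₁ hsum (hinv₁_mem _ (hφ₂mem _ hab)) hlt
    rw [hφ₁g (a + b) hab] at this
    exact absurd h2 (not_le.mpr this)
  · intro H n hn u hu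
    -- iterated subadditivity
    have key : ∀ m : ℕ, ∀ t : Fin m → ℝ, (∀ i, 0 ≤ t i) →
        g (∑ i, t i) ≤ ∑ i, g (t i) := by
      intro m
      induction m with
      | zero => intro t ht; simpa using hg0.le
      | succ k ih =>
        intro t ht
        have hsnn : 0 ≤ ∑ i : Fin k, t i.succ :=
          Finset.sum_nonneg fun i _ => ht i.succ
        calc g (∑ i, t i) = g (t 0 + ∑ i : Fin k, t i.succ) := by
              rw [Fin.sum_univ_succ]
          _ ≤ g (t 0) + g (∑ i : Fin k, t i.succ) := H _ _ (ht 0) hsnn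
          _ ≤ g (t 0) + ∑ i : Fin k, g (t i.succ) := by
              have := ih (fun i => t i.succ) (fun i => ht i.succ)
              linarith
          _ = ∑ i, g (t i) := (Fin.sum_univ_succ fun i => g (t i)).symm
    set t : Fin n → ℝ := fun i => φinv₂ (u i) with hT
    have htnn : ∀ i, 0 ≤ t i := fun i => hinv₂_mem _ (hu i)
    have hut : ∀ i, φinv₁ (u i) = g (t i) := by
      intro i
      simp only [hg, hT, hinv₂_right _ (hu i)]
    have hst : (0:ℝ) ≤ ∑ i, t i := Finset.sum_nonneg fun i _ => htnn i
    have hkey := key n t htnn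
    have hgsnn : 0 ≤ ∑ i, g (t i) := Finset.sum_nonneg fun i _ => hgnn _ (htnn i)
    have h1 : φ₁ (∑ i, g (t i)) ≤ φ₁ (g (∑ i, t i)) :=
      hanti₁.antitoneOn (hgnn _ hst) hgsnn hkey
    calc φ₁ (∑ i, φinv₁ (u i)) = φ₁ (∑ i, g (t i)) := by
          simp only [hut]
      _ ≤ φ₁ (g (∑ i, t i)) := h1
      _ = φ₂ (∑ i, t i) := hφ₁g _ hst
end

section
/- (Proposition 2(a), general case.) Let F be a finite nonnegative Borel measure on [0,∞) and define φ(t) = ∫_{[0,∞)} e^{−rt} dF(r) for t ≥ 0. Let d_1, …, d_n be positive integers with d = d_1 + ⋯ + d_n, let θ_1, …, θ_n ≥ 0, and for each i let γ_i : ℝ^{d_i} → [0,∞) be an even (γ_i(−x) = γ_i(x)) conditionally negative definite function. Then the function C : ℝ^{d_1} × ⋯ × ℝ^{d_n} → ℝ defined by C(x_1, …, x_n) = φ(∑_{i=1}^n θ_i γ_i(x_i)) is positive definite on ℝ^d, i.e. for every m ∈ ℕ, all points z_1, …, z_m ∈ ℝ^d and all reals c_1, …, c_m, ∑_{k,l}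 c_k c_l C(z_k − z_l) ≥ 0. (In the paper, γ_i = φ⁻¹ ∘ C_i for continuous stationary covariance functions C_i.) -/
open MeasureTheory

/-- `C : V → ℝ` is a positive definite function on the additive group `V`. -/
def IsPosDefFn {V : Type*} [AddCommGroup V] (C : V → ℝ) : Prop :=
  ∀ (m : ℕ) (z : Fin m → V) (c : Fin m → ℝ),
    0 ≤ ∑ k : Fin m, ∑ l : Fin m, c k * c l * C (z k - z l)

/-- `γ : V → ℝ` is conditionally negative definite (a variogram). -/
def IsCondNegDefFn {V : Type*} [AddCommGroup V] (γ : V → ℝ) : Prop :=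
  ∀ (m : ℕ) (z : Fin m → V) (a : Fin m → ℝ), (∑ k, a k) = 0 →
    ∑ k : Fin m, ∑ l : Fin m, a k * a l * γ (z k - z l) ≤ 0

/-- Quadratic form nonnegativity for a finite kernel. -/
def QFNonneg {m : ℕ} (K : Fin m → Fin m → ℝ) : Prop :=
  ∀ c : Fin m → ℝ, 0 ≤ ∑ k : Fin m, ∑ l : Fin m, c k * c l * K k l

lemma qf_schur {m : ℕ} {K L : Fin m → Fin m → ℝ}
    (hKsym : ∀ k l, K k l = K l k) (hK : QFNonneg K) (hL : QFNonneg L) :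
    QFNonneg (fun k l => K k l * L k l) := by
  classical
  -- K as a matrix is PSD
  have hpsd : Matrix.PosSemidef (Matrix.of K) := by
    refine Matrix.PosSemidef.of_dotProduct_mulVec_nonneg ?_ ?_
    · ext k l
      simp [Matrix.conjTranspose_apply, hKsym k l]
    · intro x
      have := hK x
      simp only [dotProduct, Matrix.mulVec, Matrix.of_apply, RCLike.star_def]
      calc (0:ℝ) ≤ ∑ k, ∑ l, x k * x l * K k l := this
        _ = ∑ k, (starRingEnd ℝ) (x k) * ∑ l, K k l * x l := by
            refine Finset.sum_congr rfl fun k _ => ?_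
            rw [Finset.mul_sum]
            exact Finset.sum_congr rfl fun l _ => by simp [mul_comm, mul_left_comm]
  obtain ⟨B, hB⟩ : ∃ B : Matrix (Fin m) (Fin m) ℝ, Matrix.of K = B.conjTranspose * B := by
    open scoped MatrixOrder in exact CStarAlgebra.nonneg_iff_eq_star_mul_self.mp hpsd.nonneg
  have hBK : ∀ k l, K k l = ∑ j, B j k * B j l := by
    intro k l
    have := congrArg (fun M => M k l) hB
    simpa [Matrix.mul_apply, Matrix.conjTranspose_apply] using this
  intro c
  have step : ∑ k, ∑ l, c k * c l * (K k l * L k l)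
      = ∑ j, ∑ k, ∑ l, (c k * B j k) * (c l * B j l) * L k l := by
    have e1 : ∀ k, ∑ l, c k * c l * (K k l * L k l)
        = ∑ j, ∑ l, (c k * B j k) * (c l * B j l) * L k l := by
      intro k
      rw [Finset.sum_comm]
      refine Finset.sum_congr rfl fun l _ => ?_
      rw [hBK k l, Finset.sum_mul, Finset.mul_sum]
      exact Finset.sum_congr rfl fun j _ => by ring
    rw [Finset.sum_congr rfl fun k _ => e1 k, Finset.sum_comm]
  rw [step]
  exact Finset.sum_nonneg fun j _ => hL (fun k => c k * B j k)

lemma qf_ones {m : ℕ} : QFNonneg (fun _ _ : Fin m => (1:ℝ)) := by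
  intro c
  have : ∑ k : Fin m, ∑ l : Fin m, c k * c l * 1 = (∑ k, c k) * (∑ l, c l) := by
    rw [Finset.sum_mul_sum]
    exact Finset.sum_congr rfl fun k _ => Finset.sum_congr rfl fun l _ => by ring
  rw [this, ← sq]
  positivity

lemma qf_pow {m : ℕ} {K : Fin m → Fin m → ℝ}
    (hKsym : ∀ k l, K k l = K l k) (hK : QFNonneg K) (p : ℕ) :
    QFNonneg (fun k l => K k l ^ p) := by
  induction p with
  | zero => simpa using (qf_ones (m := m))
  | succ p ih =>
      have := qf_schur hKsym hK ih
      simpa [pow_succ, mul_comm, mul_left_comm] using this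

lemma qf_exp {m : ℕ} {K : Fin m → Fin m → ℝ}
    (hKsym : ∀ k l, K k l = K l k) (hK : QFNonneg K) :
    QFNonneg (fun k l => Real.exp (K k l)) := by
  intro c
  have hexp : ∀ x : ℝ, Real.exp x = ∑' p : ℕ, x ^ p / p.factorial := by
    intro x
    rw [Real.exp_eq_exp_ℝ, NormedSpace.exp_eq_tsum_div]
  have hsumm : ∀ (k l : Fin m), Summable (fun p : ℕ => c k * c l * (K k l ^ p / p.factorial)) :=
    fun k l => (Real.summable_pow_div_factorial (K k l)).mul_left _
  have step : ∑ k, ∑ l, c k * c l * Real.exp (K k l)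
      = ∑' p : ℕ, ∑ k, ∑ l, c k * c l * (K k l ^ p / p.factorial) := by
    have inner : ∀ k, ∑ l, c k * c l * Real.exp (K k l)
        = ∑' p : ℕ, ∑ l, c k * c l * (K k l ^ p / p.factorial) := by
      intro k
      rw [Summable.tsum_finsetSum (fun l _ => hsumm k l)]
      refine Finset.sum_congr rfl fun l _ => ?_
      rw [hexp, ← tsum_mul_left]
    rw [Finset.sum_congr rfl fun k _ => inner k,
      Summable.tsum_finsetSum (fun k _ => summable_sum (fun l _ => hsumm k l))]
  rw [step]
  refine tsum_nonneg fun p => ?_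
  have : ∑ k, ∑ l, c k * c l * (K k l ^ p / p.factorial)
      = (∑ k, ∑ l, c k * c l * K k l ^ p) / p.factorial := by
    rw [Finset.sum_div]
    refine Finset.sum_congr rfl fun k _ => ?_
    rw [Finset.sum_div]
    exact Finset.sum_congr rfl fun l _ => by ring
  rw [this]
  exact div_nonneg (qf_pow hKsym hK p c) (by positivity)

/-- Schoenberg: if `γ` is even, conditionally negative definite and `0 ≤ γ 0`,
then `exp (-γ)` is positive definite. -/
lemma schoenberg_expNeg {V : Type*} [AddCommGroup V] (γ : V → ℝ)
    (h0 : 0 ≤ γ 0) (he : ∀ x, γ (-x) = γ x) (hc : IsCondNegDefFn γ) :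
    IsPosDefFn (fun x => Real.exp (-γ x)) := by
  intro m z c
  set s : ℝ := ∑ k, c k with hs
  set Bq : ℝ := ∑ k, c k * γ (z k) with hBq
  set A : ℝ := ∑ k, ∑ l, c k * c l * γ (z k - z l) with hA
  -- the kernel K
  set K : Fin m → Fin m → ℝ := fun k l => γ (z k) + γ (z l) - γ (z k - z l) with hKdef
  have hKsym : ∀ k l, K k l = K l k := by
    intro k l
    have : γ (z l - z k) = γ (z k - z l) := by rw [← he (z k - z l), neg_sub]
    simp [hKdef, this]; ring
  have hKqf : QFNonneg K := by
    intro a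
    set t : ℝ := ∑ k, a k with ht
    set Ba : ℝ := ∑ k, a k * γ (z k) with hBa
    set Aa : ℝ := ∑ k, ∑ l, a k * a l * γ (z k - z l) with hAa
    -- apply CND with an extra point 0 and coefficient -t
    have hzero : (∑ k, Fin.cons (-t) a k) = 0 := by
      rw [Fin.sum_cons]; ring
    have key := hc (m+1) (Fin.cons 0 z) (Fin.cons (-t) a) hzero
    have expand : ∑ k : Fin (m+1), ∑ l : Fin (m+1),
        (Fin.cons (-t) a : Fin (m+1) → ℝ) k * (Fin.cons (-t) a : Fin (m+1) → ℝ) l * γ ((Fin.cons 0 z : Fin (m+1) → V) k - (Fin.cons 0 z : Fin (m+1) → V) l)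
        = t * t * γ 0 - t * Ba - t * Ba + Aa := by
      rw [Fin.sum_univ_succ]
      rw [Fin.sum_univ_succ]
      have e1 : ∑ l : Fin m, (Fin.cons (-t) a : Fin (m+1) → ℝ) 0 * (Fin.cons (-t) a : Fin (m+1) → ℝ) l.succ *
          γ ((Fin.cons 0 z : Fin (m+1) → V) 0 - (Fin.cons 0 z : Fin (m+1) → V) l.succ) = -t * Ba := by
        rw [hBa, Finset.mul_sum]
        refine Finset.sum_congr rfl fun l _ => ?_
        simp [zero_sub, he]; ring
      have e2 : ∑ k : Fin m, ((Fin.cons (-t) a : Fin (m+1) → ℝ) k.succ * (Fin.cons (-t) a : Fin (m+1) → ℝ) 0 *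
          γ ((Fin.cons 0 z : Fin (m+1) → V) k.succ - (Fin.cons 0 z : Fin (m+1) → V) 0)
          + ∑ l : Fin m, (Fin.cons (-t) a : Fin (m+1) → ℝ) k.succ * (Fin.cons (-t) a : Fin (m+1) → ℝ) l.succ *
            γ ((Fin.cons 0 z : Fin (m+1) → V) k.succ - (Fin.cons 0 z : Fin (m+1) → V) l.succ))
          = -t * Ba + Aa := by
        have eA : ∑ k : Fin m, (Fin.cons (-t) a : Fin (m+1) → ℝ) k.succ * (Fin.cons (-t) a : Fin (m+1) → ℝ) 0 *
            γ ((Fin.cons 0 z : Fin (m+1) → V) k.succ - (Fin.cons 0 z : Fin (m+1) → V) 0) = -t * Ba := by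
          rw [hBa, Finset.mul_sum]
          refine Finset.sum_congr rfl fun k _ => ?_
          simp only [Fin.cons_succ, Fin.cons_zero, sub_zero]; ring
        have eB : ∑ k : Fin m, ∑ l : Fin m, (Fin.cons (-t) a : Fin (m+1) → ℝ) k.succ * (Fin.cons (-t) a : Fin (m+1) → ℝ) l.succ *
            γ ((Fin.cons 0 z : Fin (m+1) → V) k.succ - (Fin.cons 0 z : Fin (m+1) → V) l.succ) = Aa := by
          rw [hAa]
          refine Finset.sum_congr rfl fun k _ => Finset.sum_congr rfl fun l _ => by simp
        rw [Finset.sum_add_distrib, eA, eB]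
      have e3 : ∑ k : Fin m, ∑ l : Fin (m+1), (Fin.cons (-t) a : Fin (m+1) → ℝ) k.succ * (Fin.cons (-t) a : Fin (m+1) → ℝ) l *
          γ ((Fin.cons 0 z : Fin (m+1) → V) k.succ - (Fin.cons 0 z : Fin (m+1) → V) l)
          = -t * Ba + Aa := by
        rw [← e2]
        exact Finset.sum_congr rfl fun k _ => by rw [Fin.sum_univ_succ]
      rw [e1, e3]
      simp only [Fin.cons_zero, sub_self]
      ring
    rw [expand] at key
    -- goal: 0 ≤ ∑∑ a k a l K k l = 2 t Ba - Aa
    have goal_eq : ∑ k, ∑ l, a k * a l * K k l = t * Ba + t * Ba - Aa := by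
      simp only [hKdef]
      have split : ∀ k, ∑ l, a k * a l * (γ (z k) + γ (z l) - γ (z k - z l))
          = (∑ l, a k * a l * γ (z k)) + (∑ l, a k * a l * γ (z l))
            - ∑ l, a k * a l * γ (z k - z l) := by
        intro k
        rw [← Finset.sum_add_distrib, ← Finset.sum_sub_distrib]
        exact Finset.sum_congr rfl fun l _ => by ring
      rw [Finset.sum_congr rfl fun k _ => split k, Finset.sum_sub_distrib,
        Finset.sum_add_distrib]
      have p1 : ∑ k, ∑ l, a k * a l * γ (z k) = Ba * t := by
        rw [hBa, ht, Finset.sum_mul_sum]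
        exact Finset.sum_congr rfl fun k _ => Finset.sum_congr rfl fun l _ => by ring
      have p2 : ∑ k, ∑ l, a k * a l * γ (z l) = t * Ba := by
        rw [hBa, ht, Finset.sum_mul_sum]
        exact Finset.sum_congr rfl fun k _ => Finset.sum_congr rfl fun l _ => by ring
      rw [p1, p2, ← hAa]
      ring
    rw [goal_eq]
    nlinarith [mul_self_nonneg t, mul_nonneg (mul_self_nonneg t) h0]
  -- now conclude via the entrywise exponential
  have hqfe := qf_exp hKsym hKqf (fun k => c k * Real.exp (-γ (z k)))
  have eq2 : ∑ k, ∑ l, (c k * Real.exp (-γ (z k))) * (c l * Real.exp (-γ (z l)))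
      * Real.exp (K k l) = ∑ k, ∑ l, c k * c l * Real.exp (-γ (z k - z l)) := by
    refine Finset.sum_congr rfl fun k _ => Finset.sum_congr rfl fun l _ => ?_
    have hKkl : K k l = γ (z k) + γ (z l) - γ (z k - z l) := rfl
    rw [hKkl]
    rw [show γ (z k) + γ (z l) - γ (z k - z l) = -γ (z k - z l) - (-γ (z k)) - (-γ (z l)) by ring,
      Real.exp_sub, Real.exp_sub]
    field_simp
  rw [← eq2]
  exact hqfe

/-- Proposition 2(a): if `φ(t) = ∫_{[0,∞)} e^{-rt} dF(r)` for a finite nonnegative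
measure `F` (i.e. `φ` is bounded completely monotone, by Bernstein's theorem),
`θᵢ ≥ 0`, and each `γᵢ : ℝ^{dᵢ} → [0,∞)` is even and conditionally negative
definite, then `C(x₁,…,xₙ) = φ(∑ θᵢ γᵢ(xᵢ))` is positive definite on
`ℝ^d = ℝ^{d₁} × ⋯ × ℝ^{dₙ}`. -/
theorem quasiArithmetic_posDef_general
    (F : Measure ℝ) [IsFiniteMeasure F]
    (n : ℕ) (hn : 1 ≤ n) (d : Fin n → ℕ) (hd : ∀ i, 0 < d i)
    (θ : Fin n → ℝ) (hθ : ∀ i, 0 ≤ θ i)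
    (γ : ∀ i : Fin n, (Fin (d i) → ℝ) → ℝ)
    (hγnonneg : ∀ i x, 0 ≤ γ i x)
    (hγeven : ∀ i x, γ i (-x) = γ i x)
    (hγcnd : ∀ i, IsCondNegDefFn (γ i)) :
    IsPosDefFn (fun x : ∀ i : Fin n, Fin (d i) → ℝ =>
      ∫ r in Set.Ici (0 : ℝ), Real.exp (-(r * ∑ i, θ i * γ i (x i))) ∂F) := by
  classical
  set V := ∀ i : Fin n, Fin (d i) → ℝ
  set S : V → ℝ := fun x => ∑ i, θ i * γ i (x i) with hSdef
  have hSnonneg : ∀ x, 0 ≤ S x :=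
    fun x => Finset.sum_nonneg fun i _ => mul_nonneg (hθ i) (hγnonneg i _)
  have hSeven : ∀ x, S (-x) = S x := by
    intro x
    refine Finset.sum_congr rfl fun i _ => ?_
    have : (-x) i = -(x i) := rfl
    rw [this, hγeven]
  have hScnd : IsCondNegDefFn S := by
    intro m z a ha
    have e1 : ∀ k, ∑ l : Fin m, a k * a l * S (z k - z l)
        = ∑ i, ∑ l : Fin m, θ i * (a k * a l * γ i (z k i - z l i)) := by
      intro k
      rw [Finset.sum_comm]
      refine Finset.sum_congr rfl fun l _ => ?_
      show a k * a l * ∑ i, θ i * γ i ((z k - z l) i) = _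
      rw [Finset.mul_sum]
      refine Finset.sum_congr rfl fun i _ => ?_
      have hzi : (z k - z l) i = z k i - z l i := rfl
      rw [hzi]; ring
    have swap : ∑ k : Fin m, ∑ l : Fin m, a k * a l * S (z k - z l)
        = ∑ i, θ i * ∑ k : Fin m, ∑ l : Fin m, a k * a l * γ i (z k i - z l i) := by
      rw [Finset.sum_congr rfl fun k _ => e1 k, Finset.sum_comm]
      refine Finset.sum_congr rfl fun i _ => ?_
      rw [Finset.mul_sum]
      refine Finset.sum_congr rfl fun k _ => ?_
      rw [Finset.mul_sum]
    rw [swap]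
    refine Finset.sum_nonpos fun i _ => ?_
    exact mul_nonpos_of_nonneg_of_nonpos (hθ i) (hγcnd i m (fun k => z k i) a ha)
  intro m z c
  -- integrability
  have hInt : ∀ v : V, IntegrableOn (fun r => Real.exp (-(r * S v))) (Set.Ici 0) F := by
    intro v
    refine Integrable.mono' (integrable_const 1)
      ((Continuous.aestronglyMeasurable (by continuity))) ?_
    filter_upwards [ae_restrict_mem measurableSet_Ici] with r hr
    rw [Real.norm_eq_abs, abs_of_pos (Real.exp_pos _)]
    exact Real.exp_le_one_iff.mpr (neg_nonpos.mpr (mul_nonneg hr (hSnonneg v)))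
  have step1 : ∑ k : Fin m, ∑ l : Fin m, c k * c l *
        ∫ r in Set.Ici (0:ℝ), Real.exp (-(r * S (z k - z l))) ∂F
      = ∫ r in Set.Ici (0:ℝ), ∑ k : Fin m, ∑ l : Fin m,
          c k * c l * Real.exp (-(r * S (z k - z l))) ∂F := by
    rw [integral_finset_sum _ (fun k _ => integrable_finset_sum _
      (fun l _ => ((hInt (z k - z l)).const_mul _)))]
    refine Finset.sum_congr rfl fun k _ => ?_
    rw [integral_finset_sum _ (fun l _ => ((hInt (z k - z l)).const_mul _))]
    refine Finset.sum_congr rfl fun l _ => ?_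
    rw [MeasureTheory.integral_const_mul]
  rw [show (fun x : V => ∫ r in Set.Ici (0:ℝ), Real.exp (-(r * ∑ i, θ i * γ i (x i))) ∂F)
    = (fun x : V => ∫ r in Set.Ici (0:ℝ), Real.exp (-(r * S x)) ∂F) from rfl, step1]
  refine setIntegral_nonneg measurableSet_Ici fun r hr => ?_
  have := schoenberg_expNeg (fun x : V => r * S x)
    (by simpa using mul_nonneg hr (hSnonneg 0))
    (fun x => by rw [hSeven])
    (by
      intro m' z' a' ha'
      have expand : ∑ k : Fin m', ∑ l : Fin m', a' k * a' l * (r * S (z' k - z' l))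
          = r * ∑ k : Fin m', ∑ l : Fin m', a' k * a' l * S (z' k - z' l) := by
        rw [Finset.mul_sum]
        refine Finset.sum_congr rfl fun k _ => ?_
        rw [Finset.mul_sum]
        exact Finset.sum_congr rfl fun l _ => by ring
      rw [expand]
      exact mul_nonpos_of_nonneg_of_nonpos hr (hScnd m' z' a' ha'))
    m z c
  simpa using this
end

section
/- (Proposition 2(c), univariate case.) Let F be a finite nonnegative Borel measure on [0,∞) and define φ(t) = ∫_{[0,∞)} e^{−rt} dF(r) for t ≥ 0. Let θ_1, …, θ_n ≥ 0 and for each i = 1, …, n let ν_i : [0,∞) → [0,∞) be continuous, nondecreasing and concave. Then the function C : ℝ^n → ℝ defined by C(x_1, …, x_n) = φ(∑_{i=1}^n θ_i ν_i(|x_i|)) is positive definite on ℝ^n. (In the paper, ν_i = φ⁻¹ ∘ C_i for continuous stationary isotropic covariance functions C_i on the real line; note C depends on the city-block distance rather than the Euclidean norm.) -/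
open MeasureTheory

namespace QuasiArithHelpers

/-- product of indicators of two length-`s` intervals -/
lemma ind_mul (a b s : ℝ) :
    (fun t => (Set.Ico a (a+s)).indicator (fun _ => (1:ℝ)) t *
      (Set.Ico b (b+s)).indicator (fun _ => (1:ℝ)) t)
    = (Set.Ico (a ⊔ b) ((a+s) ⊓ (b+s))).indicator (fun _ => (1:ℝ)) := by
  funext t
  rw [← Set.Ico_inter_Ico]
  by_cases h1 : t ∈ Set.Ico a (a+s) <;> by_cases h2 : t ∈ Set.Ico b (b+s) <;>
    simp [Set.indicator_apply, Set.mem_inter_iff, h1, h2]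

lemma tent_integral (a b s : ℝ) :
    ∫ t, (Set.Ico a (a+s)).indicator (fun _ => (1:ℝ)) t *
      (Set.Ico b (b+s)).indicator (fun _ => (1:ℝ)) t = max (s - |a - b|) 0 := by
  rw [ind_mul]
  have h1 : ((fun _ => (1:ℝ)) : ℝ → ℝ) = (1 : ℝ → ℝ) := rfl
  rw [h1, integral_indicator_one measurableSet_Ico, measureReal_def, Real.volume_Ico]
  have hd : (a+s) ⊓ (b+s) - (a ⊔ b) = s - |a - b| := by
    rcases le_total a b with h | h
    · rw [abs_of_nonpos (by linarith)]
      rw [min_eq_left (by linarith), max_eq_right h]; ring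
    · rw [abs_of_nonneg (by linarith)]
      rw [min_eq_right (by linarith), max_eq_left h]; ring
  rw [hd]
  rcases le_or_gt 0 (s - |a - b|) with h | h
  · rw [ENNReal.toReal_ofReal h, max_eq_left h]
  · rw [ENNReal.ofReal_eq_zero.mpr h.le, max_eq_right h.le]; simp

lemma ind_integrable (a b s : ℝ) :
    Integrable (fun t => (Set.Ico a (a+s)).indicator (fun _ => (1:ℝ)) t *
      (Set.Ico b (b+s)).indicator (fun _ => (1:ℝ)) t) := by
  rw [ind_mul]
  rw [integrable_indicator_iff measurableSet_Ico]
  exact integrableOn_const measure_Ico_lt_top.ne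

/-- the tent kernel is positive definite -/
lemma tentQF (m : ℕ) (x : Fin m → ℝ) (s : ℝ) (c : Fin m → ℝ) :
    0 ≤ ∑ k : Fin m, ∑ l : Fin m, c k * c l * max (s - |x k - x l|) 0 := by
  set u : Fin m → ℝ → ℝ :=
    fun k => (Set.Ico (x k) (x k + s)).indicator (fun _ => (1:ℝ)) with hu
  have key : ∑ k : Fin m, ∑ l : Fin m, c k * c l * max (s - |x k - x l|) 0
      = ∫ t, (∑ k : Fin m, c k * u k t)^2 := by
    have expand : ∀ t, (∑ k : Fin m, c k * u k t)^2
        = ∑ k : Fin m, ∑ l : Fin m, c k * c l * (u k t * u l t) := by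
      intro t
      rw [pow_two, Finset.sum_mul_sum]
      exact Finset.sum_congr rfl fun k _ => Finset.sum_congr rfl fun l _ => by ring
    rw [MeasureTheory.integral_congr_ae (Filter.Eventually.of_forall expand)]
    rw [integral_finset_sum]
    · refine Finset.sum_congr rfl fun k _ => ?_
      rw [integral_finset_sum]
      · refine Finset.sum_congr rfl fun l _ => ?_
        simp only [hu]
        rw [integral_const_mul, tent_integral]
      · exact fun l _ => ((ind_integrable _ _ _).const_mul _)
    · exact fun k _ => integrable_finset_sum _ fun l _ => ((ind_integrable _ _ _).const_mul _)
  rw [key]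
  exact integral_nonneg fun t => sq_nonneg _


lemma secant_le {S : Set ℝ} (f : ℝ → ℝ) (hconv : ConvexOn ℝ S f) {a b m₂ M : ℝ}
    (ha : a ∈ S) (hb : b ∈ S) (hm : m₂ ∈ S) (hM : M ∈ S)
    (hab : a ≤ b) (hbm : b ≤ m₂) (hmM : m₂ < M) :
    (f b - f a) * (M - m₂) ≤ (f M - f m₂) * (b - a) := by
  rcases eq_or_lt_of_le hab with rfl | hab
  · simp
  have hbM : b < M := lt_of_le_of_lt hbm hmM
  have h1 : (f b - f a) / (b - a) ≤ (f M - f b) / (M - b) :=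
    hconv.slope_mono_adjacent ha hM hab hbM
  have h2 : (f M - f b) / (M - b) ≤ (f M - f m₂) / (M - m₂) := by
    rcases eq_or_lt_of_le hbm with rfl | hbm'
    · exact le_rfl
    · have h3 : (f m₂ - f b) / (m₂ - b) ≤ (f M - f m₂) / (M - m₂) :=
        hconv.slope_mono_adjacent hb hM hbm' hmM
      rw [div_le_div_iff₀ (by linarith) (by linarith)] at h3 ⊢
      nlinarith [h3]
  have h4 := h1.trans h2
  rw [div_le_div_iff₀ (by linarith) (by linarith)] at h4
  linarith [h4]

lemma decomp : ∀ (N : ℕ) (T : Finset ℝ), T.card ≤ N → ∀ (f : ℝ → ℝ) (B : ℝ),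
    (↑T ⊆ Set.Icc (0:ℝ) B) →
    ConvexOn ℝ (Set.Icc 0 B) f → AntitoneOn f (Set.Icc 0 B) →
    (∀ t ∈ Set.Icc (0:ℝ) B, 0 ≤ f t) →
    ∃ b : ℝ, ∃ α : ℝ → ℝ, 0 ≤ b ∧ (∀ s, 0 ≤ α s) ∧
      ∀ d ∈ T, f d = b + ∑ s ∈ T, α s * max (s - d) 0 := by
  intro N
  induction N with
  | zero =>
    intro T hT f B _ _ _ _
    have : T = ∅ := Finset.card_eq_zero.mp (Nat.le_zero.mp hT)
    subst this
    exact ⟨0, fun _ => 0, le_refl 0, fun _ => le_refl 0, fun d hd => absurd hd (by simp)⟩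
  | succ N ih =>
    intro T hcard f B hTB hconv hanti hpos
    rcases T.eq_empty_or_nonempty with rfl | hne
    · exact ⟨0, fun _ => 0, le_refl 0, fun _ => le_refl 0, fun d hd => absurd hd (by simp)⟩
    set M := T.max' hne with hMdef
    have hMT : M ∈ T := T.max'_mem hne
    have hMIcc : M ∈ Set.Icc (0:ℝ) B := hTB hMT
    rcases (T.erase M).eq_empty_or_nonempty with hT' | hne'
    · refine ⟨f M, fun _ => 0, hpos M hMIcc, fun _ => le_refl 0, ?_⟩
      intro d hd
      have hdM : d = M := by
        by_contra h
        have : d ∈ T.erase M := Finset.mem_erase.mpr ⟨h, hd⟩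
        rw [hT'] at this
        exact absurd this (Finset.notMem_empty d)
      subst hdM
      simp
    · set m₂ := (T.erase M).max' hne' with hm₂def
      have hm₂T' : m₂ ∈ T.erase M := (T.erase M).max'_mem hne'
      have hm₂T : m₂ ∈ T := Finset.mem_of_mem_erase hm₂T'
      have hm₂M : m₂ < M := lt_of_le_of_ne (T.le_max' _ hm₂T) (Finset.mem_erase.mp hm₂T').1
      have hm₂Icc : m₂ ∈ Set.Icc (0:ℝ) B := hTB hm₂T
      have hm₂0 : 0 ≤ m₂ := hm₂Icc.1
      have hMB : M ≤ B := hMIcc.2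
      have hMm : 0 < M - m₂ := by linarith
      set σ := (f m₂ - f M) / (M - m₂) with hσdef
      have hσ : 0 ≤ σ := by
        have := hanti hm₂Icc hMIcc hm₂M.le
        exact div_nonneg (by linarith) (by linarith)
      have hC : ∀ a b : ℝ, a ∈ Set.Icc (0:ℝ) m₂ → b ∈ Set.Icc (0:ℝ) m₂ → a ≤ b →
          (f b - f a) * (M - m₂) ≤ (f M - f m₂) * (b - a) := by
        intro a b haI hbI hab
        exact secant_le f hconv ⟨haI.1, by linarith [haI.2]⟩ ⟨hbI.1, by linarith [hbI.2]⟩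
          hm₂Icc hMIcc hab hbI.2 hm₂M
      set ht : ℝ → ℝ := fun d => f d - f M - σ * (M - d) with htdef
      have hnn : ∀ d ∈ Set.Icc (0:ℝ) m₂, 0 ≤ ht d := by
        intro d hd
        have hc := hC d m₂ hd ⟨hm₂0, le_refl m₂⟩ hd.2
        have key : (f m₂ - f M) * (M - d) ≤ (f d - f M) * (M - m₂) := by nlinarith [hc]
        have h5 : σ * (M - d) ≤ f d - f M := by
          rw [hσdef, div_mul_eq_mul_div, div_le_iff₀ hMm]
          linarith [key]
        simp only [htdef]
        linarith
      have hanti' : AntitoneOn ht (Set.Icc (0:ℝ) m₂) := by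
        intro a haI b hbI hab
        have hc := hC a b haI hbI hab
        have h5 : σ * (b - a) ≤ f a - f b := by
          rw [hσdef, div_mul_eq_mul_div, div_le_iff₀ hMm]
          nlinarith [hc]
        simp only [htdef]
        linarith
      set g : ℝ → ℝ := fun d => max (ht d) 0 with hgdef
      have hgconv : ConvexOn ℝ (Set.Icc (0:ℝ) m₂) g := by
        have hsub : ConvexOn ℝ (Set.Icc (0:ℝ) m₂) f :=
          hconv.subset (Set.Icc_subset_Icc le_rfl (by linarith)) (convex_Icc _ _)
        have haff : ConvexOn ℝ (Set.Icc (0:ℝ) m₂) (fun d => σ * d - (f M + σ * M)) :=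
          ⟨convex_Icc _ _, by
            intro x _ y _ p q hp hq hpq
            simp only [smul_eq_mul]
            apply le_of_eq
            linear_combination (f M + σ * M) * hpq⟩
        have h1 : ConvexOn ℝ (Set.Icc (0:ℝ) m₂) ht := by
          have heq : ht = fun d => f d + (σ * d - (f M + σ * M)) := by
            funext d; simp only [htdef]; ring
          rw [heq]
          exact hsub.add haff
        have h0 : ConvexOn ℝ (Set.Icc (0:ℝ) m₂) (fun _ => (0:ℝ)) :=
          convexOn_const 0 (convex_Icc _ _)
        exact h1.sup h0
      have hganti : AntitoneOn g (Set.Icc (0:ℝ) m₂) := fun a ha b hb hab =>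
        max_le_max (hanti' ha hb hab) le_rfl
      have hgpos : ∀ t ∈ Set.Icc (0:ℝ) m₂, 0 ≤ g t := fun t _ => le_max_right _ _
      have hT'sub : ↑(T.erase M) ⊆ Set.Icc (0:ℝ) m₂ := by
        intro t ht'
        have ht'' : t ∈ T.erase M := ht'
        exact ⟨(hTB (Finset.mem_of_mem_erase ht'')).1, Finset.le_max' _ t ht''⟩
      have hcard' : (T.erase M).card ≤ N := by
        have h := Finset.card_erase_of_mem hMT
        omega
      obtain ⟨b', α', hb', hα', hrep⟩ := ih (T.erase M) hcard' g m₂ hT'sub hgconv hganti hgpos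
      have hgm₂ : g m₂ = 0 := by
        have : ht m₂ = 0 := by
          simp only [htdef, hσdef]
          field_simp
          ring
        simp only [hgdef, this, max_self]
      have hb'0 : b' = 0 := by
        have h1 := hrep m₂ hm₂T'
        have h3 : ∑ s ∈ T.erase M, α' s * max (s - m₂) 0 = 0 :=
          Finset.sum_eq_zero fun s hs => by
            have hsle : s ≤ m₂ := Finset.le_max' _ s hs
            rw [max_eq_right (by linarith)]; ring
        rw [hgm₂, h3] at h1
        linarith
      refine ⟨f M, fun s => if s = M then σ else α' s, hpos M hMIcc, ?_, ?_⟩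
      · intro s
        by_cases h : s = M
        · simp [h, hσ]
        · simp [h, hα' s]
      · intro d hd
        have hsplit : ∑ s ∈ T, (if s = M then σ else α' s) * max (s - d) 0
            = σ * max (M - d) 0 + ∑ s ∈ T.erase M, α' s * max (s - d) 0 := by
          rw [← Finset.insert_erase hMT, Finset.sum_insert (Finset.notMem_erase _ _)]
          rw [Finset.insert_erase hMT]
          congr 1
          · simp
          · exact Finset.sum_congr rfl fun s hs => by rw [if_neg (Finset.mem_erase.mp hs).1]
        rw [hsplit]
        by_cases hdM : d = M
        · have h3 : ∑ s ∈ T.erase M, α' s * max (s - d) 0 = 0 :=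
            Finset.sum_eq_zero fun s hs => by
              have hsle : s ≤ m₂ := Finset.le_max' _ s hs
              rw [max_eq_right (by rw [hdM]; linarith)]; ring
          rw [h3, hdM]
          simp
        · have hdT' : d ∈ T.erase M := Finset.mem_erase.mpr ⟨hdM, hd⟩
          have hdm₂ : d ≤ m₂ := Finset.le_max' _ d hdT'
          have hd0 : 0 ≤ d := (hTB hd).1
          have h1 := hrep d hdT'
          have h2 : g d = ht d := max_eq_left (hnn d ⟨hd0, hdm₂⟩)
          rw [h2, hb'0] at h1
          simp only [htdef] at h1
          rw [max_eq_left (by linarith : (0:ℝ) ≤ M - d)]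
          linarith [h1]


lemma QF_mul {m : ℕ} {A B : Fin m → Fin m → ℝ}
    (hBs : ∀ k l, B k l = B l k)
    (hA : ∀ c : Fin m → ℝ, 0 ≤ ∑ k, ∑ l, c k * c l * A k l)
    (hB : ∀ c : Fin m → ℝ, 0 ≤ ∑ k, ∑ l, c k * c l * B k l) :
    ∀ c : Fin m → ℝ, 0 ≤ ∑ k, ∑ l, c k * c l * (A k l * B k l) := by
  intro c
  have hM : (Matrix.of B).PosSemidef := by
    refine Matrix.PosSemidef.of_dotProduct_mulVec_nonneg ?_ ?_
    · ext k l
      simp only [Matrix.conjTranspose_apply, Matrix.of_apply, star_trivial]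
      exact hBs l k
    · intro x
      have h := hB x
      simp only [dotProduct, Matrix.mulVec, Matrix.of_apply, star_trivial]
      calc (0:ℝ) ≤ ∑ k, ∑ l, x k * x l * B k l := h
        _ = ∑ k, x k * ∑ l, B k l * x l := by
            refine Finset.sum_congr rfl fun k _ => ?_
            rw [Finset.mul_sum]
            exact Finset.sum_congr rfl fun l _ => by ring
  obtain ⟨S, hSh', -, hS2'⟩ := open scoped MatrixOrder in
    CFC.exists_sqrt_of_isSelfAdjoint_of_quasispectrumRestricts hM.isHermitian
      (QuasispectrumRestricts.nnreal_of_nonneg hM.nonneg)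
  have hSh : S.IsHermitian := hSh'
  have hS2 : S * S = Matrix.of B := hS2'
  have hBapply : ∀ k l, B k l = ∑ p, S k p * S l p := by
    intro k l
    have h1 : (S * S) k l = Matrix.of B k l := by rw [hS2]
    rw [Matrix.mul_apply, Matrix.of_apply] at h1
    rw [← h1]
    refine Finset.sum_congr rfl fun p _ => ?_
    have := hSh.apply p l
    simp only [star_trivial] at this
    rw [← this]
  have step : ∀ k l, c k * c l * (A k l * B k l)
      = ∑ p, (fun q => c q * S q p) k * (fun q => c q * S q p) l * A k l := by
    intro k l
    rw [hBapply k l, Finset.mul_sum, Finset.mul_sum]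
    exact Finset.sum_congr rfl fun p _ => by ring
  calc (0:ℝ) ≤ ∑ p : Fin m, ∑ k, ∑ l,
        (fun q => c q * S q p) k * (fun q => c q * S q p) l * A k l :=
        Finset.sum_nonneg fun p _ => hA _
    _ = ∑ k, ∑ l, ∑ p, (fun q => c q * S q p) k * (fun q => c q * S q p) l * A k l := by
        rw [Finset.sum_comm]
        exact Finset.sum_congr rfl fun k _ => Finset.sum_comm
    _ = ∑ k, ∑ l, c k * c l * (A k l * B k l) :=
        Finset.sum_congr rfl fun k _ => Finset.sum_congr rfl fun l _ => (step k l).symm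

lemma QF_prod {m n' : ℕ} (A : Fin n' → Fin m → Fin m → ℝ) (s : Finset (Fin n'))
    (hsym : ∀ i k l, A i k l = A i l k)
    (hqf : ∀ i (c : Fin m → ℝ), 0 ≤ ∑ k, ∑ l, c k * c l * A i k l) :
    ∀ c : Fin m → ℝ, 0 ≤ ∑ k, ∑ l, c k * c l * ∏ i ∈ s, A i k l := by
  induction s using Finset.induction with
  | empty =>
    intro c
    simp only [Finset.prod_empty, mul_one]
    calc (0:ℝ) ≤ (∑ k, c k) * (∑ k, c k) := mul_self_nonneg _
      _ = ∑ k, ∑ l, c k * c l := Finset.sum_mul_sum _ _ _ _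
  | @insert i s' hi ih =>
    intro c
    have h := QF_mul (A := A i) (B := fun k l => ∏ j ∈ s', A j k l)
      (fun k l => Finset.prod_congr rfl fun j _ => hsym j k l) (hqf i) ih c
    calc (0:ℝ) ≤ ∑ k, ∑ l, c k * c l * (A i k l * ∏ j ∈ s', A j k l) := h
      _ = ∑ k, ∑ l, c k * c l * ∏ j ∈ insert i s', A j k l := by
          refine Finset.sum_congr rfl fun k _ => Finset.sum_congr rfl fun l _ => ?_
          rw [Finset.prod_insert hi]


lemma QF_of_convex {m : ℕ} (f : ℝ → ℝ) (x : Fin m → ℝ)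
    (hconv : ConvexOn ℝ (Set.Ici 0) f) (hanti : AntitoneOn f (Set.Ici 0))
    (hpos : ∀ t ∈ Set.Ici (0:ℝ), 0 ≤ f t) (c : Fin m → ℝ) :
    0 ≤ ∑ k, ∑ l, c k * c l * f |x k - x l| := by
  rcases Nat.eq_zero_or_pos m with rfl | hm
  · simp
  set T : Finset ℝ := Finset.image (fun p : Fin m × Fin m => |x p.1 - x p.2|) Finset.univ
    with hTdef
  have hmem : ∀ k l : Fin m, |x k - x l| ∈ T := fun k l =>
    Finset.mem_image.mpr ⟨(k, l), Finset.mem_univ _, rfl⟩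
  have hTne : T.Nonempty := ⟨|x ⟨0, hm⟩ - x ⟨0, hm⟩|, hmem _ _⟩
  set B := T.max' hTne with hBdef
  have hTB : ↑T ⊆ Set.Icc (0:ℝ) B := by
    intro t ht
    obtain ⟨p, -, rfl⟩ := Finset.mem_image.mp ht
    exact ⟨abs_nonneg _, Finset.le_max' _ _ ht⟩
  have hsub : Set.Icc (0:ℝ) B ⊆ Set.Ici 0 := fun t ht => ht.1
  obtain ⟨b, α, hb, hα, hrep⟩ := decomp T.card T le_rfl f B hTB
    (hconv.subset hsub (convex_Icc _ _)) (hanti.mono hsub) (fun t ht => hpos t (hsub ht))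
  have key : ∀ k l : Fin m, c k * c l * f |x k - x l|
      = c k * c l * b + ∑ s ∈ T, α s * (c k * c l * max (s - |x k - x l|) 0) := by
    intro k l
    rw [hrep _ (hmem k l), mul_add, Finset.mul_sum]
    congr 1
    exact Finset.sum_congr rfl fun s _ => by ring
  calc (0:ℝ) ≤ (∑ k, ∑ l, c k * c l * b)
        + ∑ s ∈ T, α s * ∑ k, ∑ l, c k * c l * max (s - |x k - x l|) 0 := by
        apply add_nonneg
        · have h1 : (∑ k, c k) * (∑ k, c k) * b = ∑ k, ∑ l, c k * c l * b := by
            rw [Finset.sum_mul_sum, Finset.sum_mul]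
            exact Finset.sum_congr rfl fun k _ => (Finset.sum_mul _ _ _)
          rw [← h1]
          exact mul_nonneg (mul_self_nonneg _) hb
        · exact Finset.sum_nonneg fun s _ => mul_nonneg (hα s) (tentQF m x s c)
    _ = ∑ k, ∑ l, (c k * c l * b + ∑ s ∈ T, α s * (c k * c l * max (s - |x k - x l|) 0)) := by
        have h2 : ∑ s ∈ T, α s * ∑ k, ∑ l, c k * c l * max (s - |x k - x l|) 0
            = ∑ k, ∑ l, ∑ s ∈ T, α s * (c k * c l * max (s - |x k - x l|) 0) := by
          simp only [Finset.mul_sum]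
          rw [Finset.sum_comm]
          exact Finset.sum_congr rfl fun k _ => Finset.sum_comm
        rw [h2, ← Finset.sum_add_distrib]
        exact Finset.sum_congr rfl fun k _ => (Finset.sum_add_distrib).symm
    _ = ∑ k, ∑ l, c k * c l * f |x k - x l| :=
        Finset.sum_congr rfl fun k _ => Finset.sum_congr rfl fun l _ => (key k l).symm


/-- the one-coordinate factor is a positive definite kernel -/
lemma coordQF {m : ℕ} (r lt : ℝ) (hr : 0 ≤ r) (hθ : 0 ≤ lt) (ν₀ : ℝ → ℝ)
    (hνnonneg : ∀ t ∈ Set.Ici (0 : ℝ), 0 ≤ ν₀ t)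
    (hνmono : MonotoneOn ν₀ (Set.Ici 0))
    (hνconc : ConcaveOn ℝ (Set.Ici 0) ν₀)
    (x : Fin m → ℝ) (c : Fin m → ℝ) :
    0 ≤ ∑ k, ∑ l, c k * c l * Real.exp (-(r * (lt * ν₀ |x k - x l|))) := by
  have hrθ : 0 ≤ r * lt := mul_nonneg hr hθ
  refine QF_of_convex (fun t => Real.exp (-(r * (lt * ν₀ t)))) x ?_ ?_ ?_ c
  · refine ⟨convex_Ici 0, ?_⟩
    intro u hu v hv p q hp hq hpq
    simp only [smul_eq_mul]
    have hcon := (hνconc.2 hu hv hp hq hpq)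
    simp only [smul_eq_mul] at hcon
    have key : -(r * (lt * ν₀ (p * u + q * v)))
        ≤ p * (-(r * (lt * ν₀ u))) + q * (-(r * (lt * ν₀ v))) := by
      nlinarith [mul_le_mul_of_nonneg_left hcon hrθ]
    calc Real.exp (-(r * (lt * ν₀ (p * u + q * v))))
        ≤ Real.exp (p * (-(r * (lt * ν₀ u))) + q * (-(r * (lt * ν₀ v)))) :=
          Real.exp_le_exp.mpr key
      _ ≤ p * Real.exp (-(r * (lt * ν₀ u))) + q * Real.exp (-(r * (lt * ν₀ v))) := by
          have := convexOn_exp.2 (Set.mem_univ (-(r * (lt * ν₀ u))))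
            (Set.mem_univ (-(r * (lt * ν₀ v)))) hp hq hpq
          simpa only [smul_eq_mul] using this
  · intro u hu v hv huv
    have h := mul_le_mul_of_nonneg_left (hνmono hu hv huv) hrθ
    exact Real.exp_le_exp.mpr (by nlinarith [h])
  · exact fun t _ => (Real.exp_pos _).le


end QuasiArithHelpers

open QuasiArithHelpers

/-- Proposition 2(c): if `φ(t) = ∫_{[0,∞)} e^{-rt} dF(r)` for a finite nonnegative
measure `F`, `θᵢ ≥ 0`, and each `νᵢ : [0,∞) → [0,∞)` is continuous,
nondecreasing and concave, then `C(x₁,…,xₙ) = φ(∑ θᵢ νᵢ(|xᵢ|))` is positive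
definite on `ℝ^n` (it depends on the city-block distance). -/
theorem quasiArithmetic_posDef_univariate
    (F : Measure ℝ) [IsFiniteMeasure F]
    (n : ℕ) (hn : 1 ≤ n)
    (θ : Fin n → ℝ) (hθ : ∀ i, 0 ≤ θ i)
    (ν : Fin n → ℝ → ℝ)
    (hνcont : ∀ i, ContinuousOn (ν i) (Set.Ici 0))
    (hνnonneg : ∀ i, ∀ t ∈ Set.Ici (0 : ℝ), 0 ≤ ν i t)
    (hνmono : ∀ i, MonotoneOn (ν i) (Set.Ici 0))
    (hνconc : ∀ i, ConcaveOn ℝ (Set.Ici 0) (ν i)) :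
    IsPosDefFn (fun x : Fin n → ℝ =>
      ∫ r in Set.Ici (0 : ℝ), Real.exp (-(r * ∑ i, θ i * ν i |x i|)) ∂F) := by
  intro m z c
  simp only [Pi.sub_apply]
  set S : Fin m → Fin m → ℝ := fun k l => ∑ i, θ i * ν i |z k i - z l i| with hSdef
  have hS0 : ∀ k l, 0 ≤ S k l := fun k l =>
    Finset.sum_nonneg fun i _ => mul_nonneg (hθ i) (hνnonneg i _ (Set.mem_Ici.mpr (abs_nonneg _)))
  have hint : ∀ k l : Fin m,
      Integrable (fun r => Real.exp (-(r * S k l))) (F.restrict (Set.Ici 0)) := by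
    intro k l
    refine Integrable.mono' (integrable_const 1) ?_ ?_
    · exact (Real.continuous_exp.comp
        ((continuous_id.mul continuous_const).neg)).aestronglyMeasurable
    · refine (ae_restrict_iff' measurableSet_Ici).mpr (ae_of_all _ fun r hr => ?_)
      rw [Real.norm_eq_abs, abs_of_pos (Real.exp_pos _)]
      calc Real.exp (-(r * S k l)) ≤ Real.exp 0 :=
            Real.exp_le_exp.mpr (by nlinarith [mul_nonneg hr (hS0 k l)])
        _ = 1 := Real.exp_zero
  have pointwise : ∀ r ∈ Set.Ici (0:ℝ),
      0 ≤ ∑ k, ∑ l, c k * c l * Real.exp (-(r * S k l)) := by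
    intro r hr
    have hexp : ∀ k l, Real.exp (-(r * S k l))
        = ∏ i, Real.exp (-(r * (θ i * ν i |z k i - z l i|))) := by
      intro k l
      rw [← Real.exp_sum]
      congr 1
      rw [hSdef]
      simp only
      rw [Finset.mul_sum, ← Finset.sum_neg_distrib]
    have hq := QF_prod (fun i k l => Real.exp (-(r * (θ i * ν i |z k i - z l i|))))
      Finset.univ
      (fun i k l => by simp only [abs_sub_comm (z k i) (z l i)])
      (fun i c' => coordQF r (θ i) hr (hθ i) (ν i) (hνnonneg i) (hνmono i) (hνconc i)
        (fun k => z k i) c') c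
    calc (0:ℝ) ≤ ∑ k, ∑ l, c k * c l *
          ∏ i, Real.exp (-(r * (θ i * ν i |z k i - z l i|))) := hq
      _ = ∑ k, ∑ l, c k * c l * Real.exp (-(r * S k l)) :=
          Finset.sum_congr rfl fun k _ => Finset.sum_congr rfl fun l _ => by
            rw [hexp k l]
  calc (0:ℝ) ≤ ∫ r in Set.Ici (0:ℝ), (∑ k, ∑ l, c k * c l * Real.exp (-(r * S k l))) ∂F :=
        setIntegral_nonneg measurableSet_Ici pointwise
    _ = ∑ k, ∑ l, c k * c l * ∫ r in Set.Ici (0:ℝ), Real.exp (-(r * S k l)) ∂F := by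
        rw [integral_finset_sum _ (fun k _ =>
          integrable_finset_sum _ (fun l _ => ((hint k l).const_mul _)))]
        refine Finset.sum_congr rfl fun k _ => ?_
        rw [integral_finset_sum _ (fun l _ => ((hint k l).const_mul _))]
        refine Finset.sum_congr rfl fun l _ => ?_
        rw [integral_const_mul]
end

section
/- (Corollary: geometric average of covariance functions.) Let d_1, …, d_n be positive integers with d = d_1 + ⋯ + d_n, and for each i let C_i : ℝ^{d_i} → (0,1] be a continuous even function such that γ_i(x) := −ln C_i(x) is conditionally negative definite on ℝ^{d_i}. Let θ_1, …, θ_n ≥ 0 with ∑_{i=1}^n θ_i = 1. Then the weighted geometric average C(x_1, …, x_n) = ∏_{i=1}^n C_i(x_i)^{θ_i} is positive definite on ℝ^d = ℝ^{d_1} × ⋯ × ℝ^{d_n}. -/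
open Matrix

namespace Matrix

variable {ι : Type*} [Fintype ι]

theorem dotProduct_mulVec_self_eq_sum (A : Matrix ι ι ℝ) (x : ι → ℝ) :
    x ⬝ᵥ A *ᵥ x = ∑ k, ∑ l, x k * x l * A k l := by
  simp only [dotProduct, mulVec, Finset.mul_sum]
  exact Finset.sum_congr rfl fun k _ => Finset.sum_congr rfl fun l _ => by ring

theorem posSemidef_iff_sum_sum_nonneg {A : Matrix ι ι ℝ} :
    A.PosSemidef ↔ A.IsHermitian ∧ ∀ x : ι → ℝ, 0 ≤ ∑ k, ∑ l, x k * x l * A k l := by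
  simp [posSemidef_iff_dotProduct_mulVec, dotProduct_mulVec_self_eq_sum]

theorem PosSemidef.map_pow {A : Matrix ι ι ℝ} (hA : A.PosSemidef) (p : ℕ) :
    (A.map (· ^ p)).PosSemidef := by
  induction p with
  | zero =>
    convert posSemidef_vecMulVec_self_star (fun _ : ι => (1 : ℝ))
    ext; simp [vecMulVec]
  | succ p ih =>
    have hsucc : A.map (· ^ (p + 1)) = A.map (· ^ p) ⊙ A := by
      ext; simp [pow_succ]
    exact hsucc ▸ ih.hadamard hA

theorem PosSemidef.map_exp {A : Matrix ι ι ℝ} (hA : A.PosSemidef) :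
    (A.map Real.exp).PosSemidef := by
  refine posSemidef_iff_sum_sum_nonneg.2 ⟨hA.isHermitian.map _ fun _ => rfl, fun x => ?_⟩
  have hexp (t : ℝ) : HasSum (fun p : ℕ => t ^ p / p.factorial) (Real.exp t) := by
    rw [Real.exp_eq_exp_ℝ]
    exact NormedSpace.expSeries_div_hasSum_exp t
  have hsum : HasSum (fun p : ℕ => (∑ k, ∑ l, x k * x l * (A.map (· ^ p)) k l) / p.factorial)
      (∑ k, ∑ l, x k * x l * (A.map Real.exp) k l) := by
    simp only [Finset.sum_div, mul_div_assoc]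
    exact hasSum_sum fun k _ => hasSum_sum fun l _ => (hexp (A k l)).mul_left _
  exact hsum.nonneg fun p => div_nonneg ((posSemidef_iff_sum_sum_nonneg.1 (hA.map_pow p)).2 x)
    (Nat.cast_nonneg _)

end Matrix

section Schoenberg

variable {V : Type*} [AddCommGroup V]

def schoenbergKernel (γ : V → ℝ) {m : ℕ} (z : Fin m → V) : Matrix (Fin m) (Fin m) ℝ :=
  of fun k l => γ (z k) + γ (z l) - γ (z k - z l) - γ 0

theorem sum_sum_mul_schoenbergKernel (γ : V → ℝ) {m : ℕ} (z : Fin m → V) (b : Fin m → ℝ) :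
    ∑ k, ∑ l, b k * b l * schoenbergKernel γ z k l
      = 2 * (∑ k, b k) * (∑ k, b k * γ (z k)) - (∑ k, b k) * (∑ k, b k) * γ 0
        - ∑ k, ∑ l, b k * b l * γ (z k - z l) := by
  simp only [schoenbergKernel, of_apply, mul_add, mul_sub, Finset.sum_add_distrib,
    Finset.sum_sub_distrib]
  have h₁ : ∑ k, ∑ l, b k * b l * γ (z k) = (∑ k, b k) * ∑ k, b k * γ (z k) := by
    rw [mul_comm, Finset.sum_mul_sum]
    exact Finset.sum_congr rfl fun _ _ => Finset.sum_congr rfl fun _ _ => by ring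
  have h₂ : ∑ k, ∑ l, b k * b l * γ (z l) = (∑ k, b k) * ∑ k, b k * γ (z k) := by
    simp only [Finset.sum_mul_sum, mul_assoc]
  have h₃ : ∑ k, ∑ l, b k * b l * γ 0 = (∑ k, b k) * ((∑ k, b k) * γ 0) := by
    simp only [Finset.sum_mul, Finset.mul_sum, mul_assoc]
    exact Finset.sum_comm
  rw [h₁, h₂, h₃]
  ring

namespace IsCondNegDefFn

variable {γ : V → ℝ}

theorem comp_addMonoidHom {W : Type*} [AddCommGroup W] (hγ : IsCondNegDefFn γ) (f : W →+ V) :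
    IsCondNegDefFn fun x => γ (f x) := fun m z a ha => by
  simpa only [map_sub] using hγ m (fun k => f (z k)) a ha

theorem const_mul (hγ : IsCondNegDefFn γ) {c : ℝ} (hc : 0 ≤ c) :
    IsCondNegDefFn fun x => c * γ x := fun m z a ha => by
  have h : ∑ k, ∑ l, a k * a l * (c * γ (z k - z l))
      = c * ∑ k, ∑ l, a k * a l * γ (z k - z l) := by
    simp only [Finset.mul_sum]
    exact Finset.sum_congr rfl fun _ _ => Finset.sum_congr rfl fun _ _ => by ring
  exact h ▸ mul_nonpos_of_nonneg_of_nonpos hc (hγ m z a ha)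

theorem sum {ι : Type*} (s : Finset ι) {γ : ι → V → ℝ}
    (hγ : ∀ i ∈ s, IsCondNegDefFn (γ i)) : IsCondNegDefFn fun x => ∑ i ∈ s, γ i x :=
  fun m z a ha => by
  have h : ∑ k, ∑ l, a k * a l * ∑ i ∈ s, γ i (z k - z l)
      = ∑ i ∈ s, ∑ k, ∑ l, a k * a l * γ i (z k - z l) := by
    simp only [Finset.mul_sum]
    rw [Finset.sum_congr rfl fun k _ => Finset.sum_comm]
    exact Finset.sum_comm
  exact h ▸ Finset.sum_nonpos fun i hi => hγ i hi m z a ha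

theorem posSemidef_schoenbergKernel (heven : ∀ x, γ (-x) = γ x) (hγ : IsCondNegDefFn γ)
    {m : ℕ} (z : Fin m → V) : (schoenbergKernel γ z).PosSemidef := by
  refine posSemidef_iff_sum_sum_nonneg.2 ⟨?_, fun b => ?_⟩
  · ext k l
    simp only [schoenbergKernel, conjTranspose_apply, of_apply, star_trivial]
    rw [← heven (z l - z k), neg_sub]
    ring
  rw [sum_sum_mul_schoenbergKernel]
  set s := ∑ k, b k
  set T := ∑ k, b k * γ (z k)
  -- the variogram inequality at the points `0, z₁, …, zₘ` with weights `-s, b₁, …, bₘ`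
  have hcnd : s * s * γ 0 - 2 * s * T + ∑ k, ∑ l, b k * b l * γ (z k - z l) ≤ 0 := by
    convert hγ (m + 1) (Fin.cons 0 z) (Fin.cons (-s) b) (by simp [Fin.sum_cons, s]) using 1
    simp only [Fin.sum_univ_succ, Fin.cons_zero, Fin.cons_succ, sub_zero, zero_sub, heven,
      Finset.sum_add_distrib]
    have h₁ : ∑ k, -s * b k * γ (z k) = -s * T := by simp only [T, Finset.mul_sum, mul_assoc]
    have h₂ : ∑ k, b k * -s * γ (z k) = -s * T := by
      simp only [T, Finset.mul_sum]
      exact Finset.sum_congr rfl fun _ _ => by ring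
    rw [h₁, h₂]
    ring
  linarith

theorem isPosDefFn_exp_neg (heven : ∀ x, γ (-x) = γ x) (hγ : IsCondNegDefFn γ) :
    IsPosDefFn fun x => Real.exp (-γ x) := by
  intro m z c
  have hfactor (k l : Fin m) : c k * c l * Real.exp (-γ (z k - z l))
      = Real.exp (γ 0) * ((c k * Real.exp (-γ (z k))) * (c l * Real.exp (-γ (z l)))
          * (schoenbergKernel γ z).map Real.exp k l) := by
    simp only [schoenbergKernel, map_apply, of_apply]
    have hexp : Real.exp (-γ (z k - z l)) = Real.exp (γ 0) * (Real.exp (-γ (z k))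
        * Real.exp (-γ (z l)) * Real.exp (γ (z k) + γ (z l) - γ (z k - z l) - γ 0)) := by
      simp only [← Real.exp_add]
      ring_nf
    rw [hexp]
    ring
  simp only [hfactor, ← Finset.mul_sum]
  exact mul_nonneg (Real.exp_pos _).le <| (posSemidef_iff_sum_sum_nonneg.1
    (hγ.posSemidef_schoenbergKernel heven z).map_exp).2 _

end IsCondNegDefFn

end Schoenberg

theorem geometricAverage_posDef_general
    (n : ℕ) (d : Fin n → ℕ)
    (C : ∀ i : Fin n, (Fin (d i) → ℝ) → ℝ)
    (hCrange : ∀ i x, C i x ∈ Set.Ioc (0 : ℝ) 1)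
    (hCeven : ∀ i x, C i (-x) = C i x)
    (hCcnd : ∀ i, IsCondNegDefFn (fun x => -Real.log (C i x)))
    (θ : Fin n → ℝ) (hθ : ∀ i, 0 ≤ θ i) :
    IsPosDefFn (fun x : ∀ i : Fin n, Fin (d i) → ℝ =>
      ∏ i, C i (x i) ^ θ i) := by
  have hexp : (fun x : ∀ i : Fin n, Fin (d i) → ℝ => ∏ i, C i (x i) ^ θ i)
      = fun x => Real.exp (-∑ i, θ i * -Real.log (C i (x i))) := by
    funext x
    simp only [mul_neg, Finset.sum_neg_distrib, neg_neg, Real.exp_sum]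
    exact Finset.prod_congr rfl fun i _ => by
      rw [Real.rpow_def_of_pos (hCrange i (x i)).1, mul_comm]
  rw [hexp]
  have hcnd : IsCondNegDefFn fun x : ∀ i : Fin n, Fin (d i) → ℝ =>
      ∑ i, θ i * -Real.log (C i (x i)) :=
    .sum _ fun i _ => ((hCcnd i).comp_addMonoidHom
      (Pi.evalAddMonoidHom (fun i => Fin (d i) → ℝ) i)).const_mul (hθ i)
  exact hcnd.isPosDefFn_exp_neg fun x => by simp only [Pi.neg_apply, hCeven]

/-- Corollary (geometric average): if each `Cᵢ : ℝ^{dᵢ} → (0,1]` is continuous,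
even, and `-ln Cᵢ` is conditionally negative definite, and `θᵢ ≥ 0` sum to one,
then the weighted geometric average `∏ᵢ Cᵢ(xᵢ)^{θᵢ}` is positive definite on
`ℝ^d = ℝ^{d₁} × ⋯ × ℝ^{dₙ}`. -/
theorem geometricAverage_posDef
    (n : ℕ) (hn : 1 ≤ n) (d : Fin n → ℕ) (hd : ∀ i, 0 < d i)
    (C : ∀ i : Fin n, (Fin (d i) → ℝ) → ℝ)
    (hCcont : ∀ i, Continuous (C i))
    (hCrange : ∀ i x, C i x ∈ Set.Ioc (0 : ℝ) 1)
    (hCeven : ∀ i x, C i (-x) = C i x)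
    (hCcnd : ∀ i, IsCondNegDefFn (fun x => -Real.log (C i x)))
    (θ : Fin n → ℝ) (hθ : ∀ i, 0 ≤ θ i) (hθ1 : (∑ i, θ i) = 1) :
    IsPosDefFn (fun x : ∀ i : Fin n, Fin (d i) → ℝ =>
      ∏ i, C i (x i) ^ θ i) :=
  geometricAverage_posDef_general n d C hCrange hCeven hCcnd θ hθ
end

section
/- (Corollary: harmonic average of covariance functions.) Let d_1, …, d_n be positive integers with d = d_1 + ⋯ + d_n, and for each i let C_i : ℝ^{d_i} → (0,∞) be a continuous even function such that γ_i(x) := 1 / C_i(x) is conditionally negative definite on ℝ^{d_i} and C_i attains its maximum at the origin (C_i(x) ≤ C_i(0) for all x). Let θ_1, …, θ_n ≥ 0 with ∑_{i=1}^n θ_i = 1. Then the weighted harmonic average C(x_1, …, x_n) = 1 / (∑_{i=1}^n θ_i / C_i(x_i)) is positive definite on ℝ^d = ℝ^{d_1} × ⋯ × ℝ^{d_n}. -/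
open Finset MeasureTheory Set

/-- Hadamard powers of a Gram matrix have nonnegative quadratic form. -/
lemma gram_pow_nonneg {m r : ℕ} (v : Fin m → Fin r → ℝ) (p : ℕ) (c : Fin m → ℝ) :
    0 ≤ ∑ k : Fin m, ∑ l : Fin m, c k * c l * (∑ j, v k j * v l j) ^ p := by
  have key : ∀ k l : Fin m, (∑ j, v k j * v l j) ^ p =
      ∑ g : Fin p → Fin r, (∏ t, v k (g t)) * (∏ t, v l (g t)) := by
    intro k l
    rw [← Fin.prod_const p (∑ j, v k j * v l j), Finset.prod_univ_sum]
    rw [Fintype.piFinset_univ]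
    exact Finset.sum_congr rfl fun g _ => by rw [Finset.prod_mul_distrib]
  simp_rw [key, Finset.mul_sum]
  have hcomm : (∑ k : Fin m, ∑ l : Fin m, ∑ g : Fin p → Fin r,
      c k * c l * ((∏ t, v k (g t)) * (∏ t, v l (g t)))) =
      ∑ g : Fin p → Fin r, ∑ k : Fin m, ∑ l : Fin m,
      c k * c l * ((∏ t, v k (g t)) * (∏ t, v l (g t))) := by
    calc (∑ k : Fin m, ∑ l : Fin m, ∑ g : Fin p → Fin r,
        c k * c l * ((∏ t, v k (g t)) * (∏ t, v l (g t))))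
        = ∑ k : Fin m, ∑ g : Fin p → Fin r, ∑ l : Fin m,
          c k * c l * ((∏ t, v k (g t)) * (∏ t, v l (g t))) :=
          Finset.sum_congr rfl fun k _ => Finset.sum_comm
      _ = ∑ g : Fin p → Fin r, ∑ k : Fin m, ∑ l : Fin m,
          c k * c l * ((∏ t, v k (g t)) * (∏ t, v l (g t))) := Finset.sum_comm
  rw [hcomm]
  refine Finset.sum_nonneg fun g _ => ?_
  have hsq : (∑ k : Fin m, ∑ l : Fin m,
      c k * c l * ((∏ t, v k (g t)) * (∏ t, v l (g t)))) =
      (∑ k : Fin m, c k * ∏ t, v k (g t)) ^ 2 := by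
    rw [sq, Finset.sum_mul_sum]
    exact Finset.sum_congr rfl fun k _ => Finset.sum_congr rfl fun l _ => by ring
  rw [hsq]
  exact sq_nonneg _

/-- The entrywise exponential of a positive semidefinite real matrix has
nonnegative quadratic form. -/
lemma exp_psd_nonneg {m : ℕ} (A : Matrix (Fin m) (Fin m) ℝ) (hA : A.PosSemidef)
    (c : Fin m → ℝ) :
    0 ≤ ∑ k : Fin m, ∑ l : Fin m, c k * c l * Real.exp (A k l) := by
  obtain ⟨r, B, hB⟩ := Matrix.posSemidef_iff_eq_sum_vecMulVec.mp hA
  have hAkl : ∀ k l, A k l = ∑ j, B j k * B j l := by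
    intro k l
    rw [hB]
    simp [Matrix.sum_apply, Matrix.vecMulVec_apply]
  have hsumm : ∀ (a x : ℝ), Summable (fun p : ℕ => a * (x ^ p / p.factorial)) :=
    fun a x => (Real.summable_pow_div_factorial x).mul_left a
  have hexp : ∀ k l : Fin m, c k * c l * Real.exp (A k l) =
      ∑' p : ℕ, c k * c l * ((A k l) ^ p / p.factorial) := by
    intro k l
    rw [Real.exp_eq_exp_ℝ, NormedSpace.exp_eq_tsum_div]
    exact (tsum_mul_left).symm
  simp_rw [hexp]
  have hswap : (∑ k : Fin m, ∑ l : Fin m,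
      ∑' p : ℕ, c k * c l * ((A k l) ^ p / p.factorial)) =
      ∑' p : ℕ, ∑ k : Fin m, ∑ l : Fin m, c k * c l * ((A k l) ^ p / p.factorial) := by
    calc (∑ k : Fin m, ∑ l : Fin m, ∑' p : ℕ, c k * c l * ((A k l) ^ p / p.factorial))
        = ∑ k : Fin m, ∑' p : ℕ, ∑ l : Fin m, c k * c l * ((A k l) ^ p / p.factorial) :=
          Finset.sum_congr rfl fun k _ => (Summable.tsum_finsetSum (fun l _ => hsumm (c k * c l) (A k l))).symm
      _ = ∑' p : ℕ, ∑ k : Fin m, ∑ l : Fin m, c k * c l * ((A k l) ^ p / p.factorial) :=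
          (Summable.tsum_finsetSum (fun k _ => summable_sum (fun l _ => hsumm (c k * c l) (A k l)))).symm
  rw [hswap]
  refine tsum_nonneg fun p => ?_
  have hfac : (∑ k : Fin m, ∑ l : Fin m, c k * c l * ((A k l) ^ p / p.factorial)) =
      (∑ k : Fin m, ∑ l : Fin m, c k * c l * (A k l) ^ p) * ((p.factorial : ℝ))⁻¹ := by
    rw [Finset.sum_mul]
    refine Finset.sum_congr rfl fun k _ => ?_
    rw [Finset.sum_mul]
    exact Finset.sum_congr rfl fun l _ => by rw [div_eq_mul_inv]; ring
  rw [hfac]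
  refine mul_nonneg ?_ (by positivity)
  simp_rw [hAkl]
  exact gram_pow_nonneg (fun k j => B j k) p c

/-- Finite-dimensional Schoenberg: if `γ` is conditionally negative definite and even,
then `exp (-(t * γ ·))` has nonnegative quadratic forms for `t ≥ 0`. -/
lemma schoenberg_exp_nonneg {V : Type*} [AddCommGroup V] {γ : V → ℝ}
    (hcnd : IsCondNegDefFn γ) (heven : ∀ x, γ (-x) = γ x) {t : ℝ} (ht : 0 ≤ t)
    (m : ℕ) (z : Fin m → V) (c : Fin m → ℝ) :
    0 ≤ ∑ k : Fin m, ∑ l : Fin m, c k * c l * Real.exp (-(t * γ (z k - z l))) := by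
  set A : Matrix (Fin m) (Fin m) ℝ :=
    fun k l => t * (γ (z k) + γ (z l) - γ (z k - z l) - γ 0) with hAdef
  have hsym : ∀ k l : Fin m, γ (z l - z k) = γ (z k - z l) := by
    intro k l
    rw [← heven (z l - z k), neg_sub]
  have hApsd : A.PosSemidef := by
    refine Matrix.PosSemidef.of_dotProduct_mulVec_nonneg ?_ ?_
    · ext k l
      rw [Matrix.conjTranspose_apply]
      simp only [Matrix.conjTranspose_apply, hAdef, star_trivial]
      rw [hsym l k]
      ring
    · intro x
      have hquad : dotProduct (star x) (A.mulVec x) =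
          ∑ k : Fin m, ∑ l : Fin m, x k * x l * A k l := by
        simp only [dotProduct, Matrix.mulVec, star_trivial, Finset.mul_sum]
        exact Finset.sum_congr rfl fun k _ => Finset.sum_congr rfl fun l _ => by ring
      rw [hquad]
      set z' : Fin (m + 1) → V := Fin.snoc z 0 with hz'
      set a : Fin (m + 1) → ℝ := Fin.snoc x (-(∑ k, x k)) with ha
      have hasum : (∑ k, a k) = 0 := by
        rw [Fin.sum_univ_castSucc]
        simp [ha, Fin.snoc_castSucc, Fin.snoc_last]
      have hS := hcnd (m + 1) z' a hasum
      set s : ℝ := ∑ k, x k with hs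
      set P : ℝ := ∑ k, x k * γ (z k) with hP
      set Q : ℝ := ∑ k : Fin m, ∑ l : Fin m, x k * x l * γ (z k - z l) with hQ
      have hSval : (∑ k : Fin (m+1), ∑ l : Fin (m+1), a k * a l * γ (z' k - z' l)) =
          Q - s * P - s * P + s * s * γ 0 := by
        rw [Fin.sum_univ_castSucc]
        have inner : ∀ k : Fin (m + 1), (∑ l : Fin (m+1), a k * a l * γ (z' k - z' l)) =
            (∑ l : Fin m, a k * a (Fin.castSucc l) * γ (z' k - z (l))) +
            a k * (-s) * γ (z' k - 0) := by
          intro k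
          rw [Fin.sum_univ_castSucc]
          simp [hz', ha, Fin.snoc_castSucc, Fin.snoc_last, hs]
        simp only [inner]
        simp only [hz', ha, Fin.snoc_castSucc, Fin.snoc_last, sub_zero, zero_sub, heven]
        rw [Finset.sum_add_distrib]
        have h2 : (∑ k : Fin m, x k * (-s) * γ (z k)) = -(s * P) := by
          have e : ∀ k : Fin m, x k * (-s) * γ (z k) = -(s * (x k * γ (z k))) := fun k => by ring
          simp only [e]
          rw [Finset.sum_neg_distrib, ← Finset.mul_sum, ← hP]
        have h3 : (∑ l : Fin m, (-s) * x l * γ (z l)) = -(s * P) := by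
          have e : ∀ l : Fin m, (-s) * x l * γ (z l) = -(s * (x l * γ (z l))) := fun l => by ring
          simp only [e]
          rw [Finset.sum_neg_distrib, ← Finset.mul_sum, ← hP]
        rw [h2]
        rw [show (∑ l : Fin m, (-s) * x l * γ (z l)) + (-s) * (-s) * γ 0
            = -(s * P) + s * s * γ 0 by rw [h3]; ring]
        rw [← hQ]
        ring
      rw [hSval] at hS
      have hA1 : (∑ k : Fin m, ∑ l : Fin m, x k * γ (z k) * x l) = P * s := by
        rw [hP, hs, Finset.sum_mul_sum]
      have hA2 : (∑ k : Fin m, ∑ l : Fin m, x k * (x l * γ (z l))) = s * P := by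
        rw [hP, hs, Finset.sum_mul_sum]
      have hA4 : (∑ k : Fin m, ∑ l : Fin m, x k * x l * γ 0) = s * s * γ 0 := by
        have e : (∑ k : Fin m, ∑ l : Fin m, x k * x l) = s * s := by
          rw [hs, Finset.sum_mul_sum]
        calc (∑ k : Fin m, ∑ l : Fin m, x k * x l * γ 0)
            = (∑ k : Fin m, ∑ l : Fin m, x k * x l) * γ 0 := by
              rw [Finset.sum_mul]
              exact Finset.sum_congr rfl fun k _ => by rw [Finset.sum_mul]
          _ = s * s * γ 0 := by rw [e]
      have hgoal : (∑ k : Fin m, ∑ l : Fin m, x k * x l * A k l) =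
          t * (s * P + s * P - Q - s * s * γ 0) := by
        calc (∑ k : Fin m, ∑ l : Fin m, x k * x l * A k l)
            = ∑ k : Fin m, ∑ l : Fin m,
              (t * (x k * γ (z k) * x l) + t * (x k * (x l * γ (z l)))
                - t * (x k * x l * γ (z k - z l)) - t * (x k * x l * γ 0)) :=
              Finset.sum_congr rfl fun k _ => Finset.sum_congr rfl fun l _ => by
                simp only [hAdef]; ring
          _ = (∑ k : Fin m, ∑ l : Fin m, t * (x k * γ (z k) * x l))
              + (∑ k : Fin m, ∑ l : Fin m, t * (x k * (x l * γ (z l))))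
              - (∑ k : Fin m, ∑ l : Fin m, t * (x k * x l * γ (z k - z l)))
              - (∑ k : Fin m, ∑ l : Fin m, t * (x k * x l * γ 0)) := by
              simp only [Finset.sum_sub_distrib, Finset.sum_add_distrib]
          _ = t * (∑ k : Fin m, ∑ l : Fin m, x k * γ (z k) * x l)
              + t * (∑ k : Fin m, ∑ l : Fin m, x k * (x l * γ (z l)))
              - t * (∑ k : Fin m, ∑ l : Fin m, x k * x l * γ (z k - z l))
              - t * (∑ k : Fin m, ∑ l : Fin m, x k * x l * γ 0) := by
              simp only [← Finset.mul_sum]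
          _ = t * (s * P + s * P - Q - s * s * γ 0) := by
              rw [hA1, hA2, hA4, ← hQ]; ring
      rw [hgoal]
      have hbr : 0 ≤ s * P + s * P - Q - s * s * γ 0 := by linarith
      exact mul_nonneg ht hbr
  set dd : Fin m → ℝ := fun k => c k * Real.exp (-(t * γ (z k))) with hdd
  have hterm : ∀ k l : Fin m, c k * c l * Real.exp (-(t * γ (z k - z l))) =
      Real.exp (t * γ 0) * (dd k * dd l * Real.exp (A k l)) := by
    intro k l
    have harg : -(t * γ (z k - z l)) =
        t * γ 0 + (-(t * γ (z k)) + (-(t * γ (z l)) + A k l)) := by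
      simp only [hAdef]; ring
    rw [harg, Real.exp_add, Real.exp_add, Real.exp_add, hdd]
    ring
  simp_rw [hterm, ← Finset.mul_sum]
  exact mul_nonneg (Real.exp_pos _).le (exp_psd_nonneg A hApsd dd)

lemma inv_eq_integral_exp {s : ℝ} (hs : 0 < s) :
    s⁻¹ = ∫ t in Ioi (0:ℝ), Real.exp (-(s * t)) := by
  have h := integral_comp_mul_left_Ioi (fun x => Real.exp (-x)) 0 hs
  simp only [mul_zero, integral_exp_neg_Ioi_zero, smul_eq_mul, mul_one] at h
  exact h.symm

/-- Corollary (harmonic average): if each `Cᵢ : ℝ^{dᵢ} → (0,∞)` is continuous,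
even, attains its maximum at the origin, and `1/Cᵢ` is conditionally negative
definite, and `θᵢ ≥ 0` sum to one, then the weighted harmonic average
`1 / (∑ᵢ θᵢ / Cᵢ(xᵢ))` is positive definite on `ℝ^d = ℝ^{d₁} × ⋯ × ℝ^{dₙ}`. -/
theorem harmonicAverage_posDef
    (n : ℕ) (hn : 1 ≤ n) (d : Fin n → ℕ) (hd : ∀ i, 0 < d i)
    (C : ∀ i : Fin n, (Fin (d i) → ℝ) → ℝ)
    (hCcont : ∀ i, Continuous (C i))
    (hCpos : ∀ i x, 0 < C i x)
    (hCeven : ∀ i x, C i (-x) = C i x)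
    (hCmax : ∀ i x, C i x ≤ C i 0)
    (hCcnd : ∀ i, IsCondNegDefFn (fun x => (C i x)⁻¹))
    (θ : Fin n → ℝ) (hθ : ∀ i, 0 ≤ θ i) (hθ1 : (∑ i, θ i) = 1) :
    IsPosDefFn (fun x : ∀ i : Fin n, Fin (d i) → ℝ =>
      (∑ i, θ i / C i (x i))⁻¹) := by
  set γbar : (∀ i : Fin n, Fin (d i) → ℝ) → ℝ := fun x => ∑ i, θ i / C i (x i) with hγ
  have hγpos : ∀ x, 0 < γbar x := by
    intro x
    obtain ⟨i₀, hi₀⟩ : ∃ i, θ i ≠ 0 := by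
      by_contra h
      push_neg at h
      rw [Finset.sum_eq_zero (fun i _ => h i)] at hθ1
      norm_num at hθ1
    refine Finset.sum_pos' (fun i _ => div_nonneg (hθ i) (hCpos i _).le)
      ⟨i₀, Finset.mem_univ _, ?_⟩
    exact div_pos (lt_of_le_of_ne (hθ i₀) (Ne.symm hi₀)) (hCpos i₀ _)
  have hγeven : ∀ x, γbar (-x) = γbar x := by
    intro x
    refine Finset.sum_congr rfl fun i _ => ?_
    rw [show (-x) i = -(x i) from rfl, hCeven]
  have hγcnd : IsCondNegDefFn γbar := by
    intro m z a ha
    have hsplit : (∑ k : Fin m, ∑ l : Fin m, a k * a l * γbar (z k - z l)) =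
        ∑ i : Fin n, θ i * (∑ k : Fin m, ∑ l : Fin m,
          a k * a l * (C i ((z k) i - (z l) i))⁻¹) := by
      calc (∑ k : Fin m, ∑ l : Fin m, a k * a l * γbar (z k - z l))
          = ∑ k : Fin m, ∑ l : Fin m, ∑ i : Fin n,
              θ i * (a k * a l * (C i ((z k) i - (z l) i))⁻¹) :=
            Finset.sum_congr rfl fun k _ => Finset.sum_congr rfl fun l _ => by
              simp only [hγ, Finset.mul_sum]
              exact Finset.sum_congr rfl fun i _ => by
                rw [show (z k - z l) i = z k i - z l i from rfl, div_eq_mul_inv]; ring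
        _ = ∑ k : Fin m, ∑ i : Fin n, ∑ l : Fin m,
              θ i * (a k * a l * (C i ((z k) i - (z l) i))⁻¹) :=
            Finset.sum_congr rfl fun k _ => Finset.sum_comm
        _ = ∑ i : Fin n, ∑ k : Fin m, ∑ l : Fin m,
              θ i * (a k * a l * (C i ((z k) i - (z l) i))⁻¹) := Finset.sum_comm
        _ = ∑ i : Fin n, θ i * (∑ k : Fin m, ∑ l : Fin m,
              a k * a l * (C i ((z k) i - (z l) i))⁻¹) := by
            refine Finset.sum_congr rfl fun i _ => ?_
            rw [Finset.mul_sum]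
            exact Finset.sum_congr rfl fun k _ => (Finset.mul_sum _ _ _).symm
    rw [hsplit]
    refine Finset.sum_nonpos fun i _ => ?_
    have hle := hCcnd i m (fun k => z k i) a ha
    have := mul_le_mul_of_nonneg_left hle (hθ i)
    simpa using this
  intro m z c
  show 0 ≤ ∑ k : Fin m, ∑ l : Fin m, c k * c l * (γbar (z k - z l))⁻¹
  have hterm : ∀ k l : Fin m, c k * c l * (γbar (z k - z l))⁻¹ =
      ∫ t in Ioi (0:ℝ), c k * c l * Real.exp (-(γbar (z k - z l) * t)) := by
    intro k l
    rw [inv_eq_integral_exp (hγpos (z k - z l)), ← MeasureTheory.integral_const_mul]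
  have hint : ∀ k l : Fin m, IntegrableOn
      (fun t => c k * c l * Real.exp (-(γbar (z k - z l) * t))) (Ioi (0:ℝ)) := by
    intro k l
    have h := exp_neg_integrableOn_Ioi 0 (hγpos (z k - z l))
    have h2 := h.const_mul (c k * c l)
    simp only [neg_mul] at h2
    exact h2
  calc (0:ℝ) ≤ ∫ t in Ioi (0:ℝ), ∑ k : Fin m, ∑ l : Fin m,
        c k * c l * Real.exp (-(γbar (z k - z l) * t)) := by
        refine MeasureTheory.setIntegral_nonneg measurableSet_Ioi fun t ht => ?_
        have := schoenberg_exp_nonneg hγcnd hγeven (le_of_lt ht) m z c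
        simpa [mul_comm] using this
    _ = ∑ k : Fin m, ∑ l : Fin m, c k * c l * (γbar (z k - z l))⁻¹ := by
        rw [MeasureTheory.integral_finset_sum _ (fun k _ =>
          MeasureTheory.integrable_finset_sum _ (fun l _ => hint k l))]
        refine Finset.sum_congr rfl fun k _ => ?_
        rw [MeasureTheory.integral_finset_sum _ (fun l _ => hint k l)]
        exact Finset.sum_congr rfl fun l _ => (hterm k l).symm
end

section
/- (Clayton-family space-time covariance.) Let d ≥ 1, let λ_1 > 0, let ρ_1, ρ_2 ∈ (0,1], and let σ² ≥ 0. Then the function C : ℝ^d × ℝ → ℝ given by C(h, u) = σ² [ (1 + ‖h‖)^{ρ_1} + (1 + |u|)^{ρ_2} − 1 ]^{−1/λ_1}, where ‖·‖ is the Euclidean norm on ℝ^d, is positive definite on ℝ^d × ℝ, i.e. it is a valid nonseparable stationary fully symmetric space-time covariance function. -/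
namespace Clayton

open MeasureTheory Real Set

/-- negative definite function -/
def IsNegDefFn {V : Type*} [AddCommGroup V] (ψ : V → ℝ) : Prop :=
  ∀ (m : ℕ) (z : Fin m → V) (c : Fin m → ℝ), (∑ k, c k) = 0 →
    ∑ k : Fin m, ∑ l : Fin m, c k * c l * ψ (z k - z l) ≤ 0

section MatrixPart

open Matrix

variable {m : ℕ}

lemma quadform_eq_dot (M : Matrix (Fin m) (Fin m) ℝ) (c : Fin m → ℝ) :
    ∑ k, ∑ l, c k * c l * M k l = dotProduct (star c) (M.mulVec c) := by
  simp only [star_trivial, dotProduct, Matrix.mulVec, Finset.mul_sum]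
  exact Finset.sum_congr rfl fun k _ => Finset.sum_congr rfl fun l _ => by ring

lemma posSemidef_of_quadform {M : Matrix (Fin m) (Fin m) ℝ}
    (hsym : ∀ k l, M k l = M l k)
    (h : ∀ c : Fin m → ℝ, 0 ≤ ∑ k, ∑ l, c k * c l * M k l) : M.PosSemidef := by
  refine Matrix.PosSemidef.of_dotProduct_mulVec_nonneg (Matrix.ext fun k l => ?_) fun c => ?_
  · simp [Matrix.conjTranspose_apply, hsym k l]
  · rw [← quadform_eq_dot]; exact h c

lemma schur_quadform {M N : Matrix (Fin m) (Fin m) ℝ}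
    (hM : M.PosSemidef) (hN : N.PosSemidef) (c : Fin m → ℝ) :
    0 ≤ ∑ k, ∑ l, c k * c l * (M k l * N k l) := by
  obtain ⟨B, hB⟩ : ∃ B : Matrix (Fin m) (Fin m) ℝ, M = Bᴴ * B := by
    open scoped MatrixOrder in exact CStarAlgebra.nonneg_iff_eq_star_mul_self.mp hM.nonneg
  have hMe : ∀ k l, M k l = ∑ i, B i k * B i l := by
    intro k l
    rw [hB]
    simp [Matrix.mul_apply, Matrix.conjTranspose_apply]
  have key : ∑ k, ∑ l, c k * c l * (M k l * N k l)
      = ∑ i, ∑ k, ∑ l, (c k * B i k) * (c l * B i l) * N k l := by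
    have step1 : ∑ k, ∑ l, c k * c l * (M k l * N k l)
        = ∑ k, ∑ i, ∑ l, (c k * B i k) * (c l * B i l) * N k l := by
      simp_rw [hMe, Finset.sum_mul, Finset.mul_sum]
      refine Finset.sum_congr rfl fun k _ => ?_
      rw [Finset.sum_comm]
      exact Finset.sum_congr rfl fun i _ => Finset.sum_congr rfl fun l _ => by ring
    rw [step1, Finset.sum_comm]
  rw [key]
  refine Finset.sum_nonneg fun i _ => ?_
  have := hN.dotProduct_mulVec_nonneg (fun k => c k * B i k)
  rw [← quadform_eq_dot] at this
  exact this

lemma quadform_hadamard_pow {Q : Matrix (Fin m) (Fin m) ℝ}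
    (hsym : ∀ k l, Q k l = Q l k) (hq : ∀ c : Fin m → ℝ, 0 ≤ ∑ k, ∑ l, c k * c l * Q k l) :
    ∀ (n : ℕ) (c : Fin m → ℝ), 0 ≤ ∑ k, ∑ l, c k * c l * Q k l ^ n := by
  intro n
  induction n with
  | zero =>
      intro c
      have : ∑ k, ∑ l, c k * c l * Q k l ^ 0 = (∑ k, c k) * (∑ l, c l) := by
        rw [Finset.sum_mul]
        exact Finset.sum_congr rfl fun k _ => by
          rw [Finset.mul_sum]
          exact Finset.sum_congr rfl fun l _ => by ring
      rw [this]
      exact mul_self_nonneg _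
  | succ n ih =>
      intro c
      have hMp : Matrix.PosSemidef (Matrix.of fun k l : Fin m => Q k l ^ n) :=
        posSemidef_of_quadform (fun k l => by simp [hsym k l]) ih
      have hNp : Q.PosSemidef := posSemidef_of_quadform hsym hq
      have := schur_quadform hMp hNp c
      simpa [pow_succ, Matrix.of_apply] using this

lemma quadform_exp {Q : Matrix (Fin m) (Fin m) ℝ}
    (hsym : ∀ k l, Q k l = Q l k) (hq : ∀ c : Fin m → ℝ, 0 ≤ ∑ k, ∑ l, c k * c l * Q k l)
    (c : Fin m → ℝ) : 0 ≤ ∑ k, ∑ l, c k * c l * Real.exp (Q k l) := by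
  have hexp : ∀ x : ℝ, Real.exp x = ∑' n : ℕ, x ^ n / (n.factorial : ℝ) := by
    intro x
    rw [Real.exp_eq_exp_ℝ, NormedSpace.exp_eq_tsum_div]
  have hsum : ∀ k l : Fin m, Summable (fun n : ℕ => c k * c l * (Q k l ^ n / (n.factorial : ℝ))) :=
    fun k l => (Real.summable_pow_div_factorial (Q k l)).mul_left _
  have h1 : ∑ k, ∑ l, c k * c l * Real.exp (Q k l)
      = ∑' n : ℕ, ∑ k, ∑ l, c k * c l * (Q k l ^ n / (n.factorial : ℝ)) := by
    rw [Summable.tsum_finsetSum (fun k _ => summable_sum fun l _ => hsum k l)]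
    refine Finset.sum_congr rfl fun k _ => ?_
    rw [Summable.tsum_finsetSum (fun l _ => hsum k l)]
    refine Finset.sum_congr rfl fun l _ => ?_
    rw [hexp (Q k l), ← tsum_mul_left]
  rw [h1]
  refine tsum_nonneg fun n => ?_
  have h2 : ∑ k, ∑ l, c k * c l * (Q k l ^ n / (n.factorial : ℝ))
      = (∑ k, ∑ l, c k * c l * Q k l ^ n) / (n.factorial : ℝ) := by
    rw [Finset.sum_div]
    exact Finset.sum_congr rfl fun k _ => by
      rw [Finset.sum_div]
      exact Finset.sum_congr rfl fun l _ => by ring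
  rw [h2]
  exact div_nonneg (quadform_hadamard_pow hsym hq n c) (by positivity)

end MatrixPart

section Schoenberg

variable {V : Type*} [AddCommGroup V]

lemma isPosDefFn_exp_neg {ψ : V → ℝ}
    (heven : ∀ x, ψ (-x) = ψ x) (hψ : IsNegDefFn ψ) :
    IsPosDefFn fun x => Real.exp (-ψ x) := by
  intro m z c
  set Q : Matrix (Fin m) (Fin m) ℝ :=
    Matrix.of fun k l => ψ (z k) + ψ (z l) - ψ (z k - z l) - ψ 0 with hQdef
  have hsym : ∀ k l, Q k l = Q l k := by
    intro k l
    simp only [hQdef, Matrix.of_apply]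
    rw [← neg_sub (z k) (z l), heven]
    ring
  have hq : ∀ b : Fin m → ℝ, 0 ≤ ∑ k, ∑ l, b k * b l * Q k l := by
    intro b
    have hneg := hψ (m + 1) (Fin.cons 0 z) (Fin.cons (-(∑ k, b k)) b)
      (by rw [Fin.sum_cons]; ring)
    simp only [Fin.sum_univ_succ, Fin.cons_zero, Fin.cons_succ, zero_sub, sub_zero,
      sub_self, heven] at hneg
    set s : ℝ := ∑ k, b k with hs
    have e1 : ∀ w : ℝ, ∑ l, w * b l * ψ (z l) = w * ∑ l, b l * ψ (z l) := by
      intro w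
      rw [Finset.mul_sum]
      exact Finset.sum_congr rfl fun l _ => by ring
    have e2 : ∀ w : ℝ, ∑ k, b k * w * ψ (z k) = w * ∑ k, b k * ψ (z k) := by
      intro w
      rw [Finset.mul_sum]
      exact Finset.sum_congr rfl fun l _ => by ring
    have e3 : ∑ k, (b k * -s * ψ (z k) + ∑ l, b k * b l * ψ (z k - z l))
        = -s * (∑ k, b k * ψ (z k)) + ∑ k, ∑ l, b k * b l * ψ (z k - z l) := by
      rw [Finset.sum_add_distrib, e2]
    rw [e1, e3] at hneg
    have expand : ∑ k, ∑ l, b k * b l * Q k l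
        = 2 * s * (∑ k, b k * ψ (z k)) - (∑ k, ∑ l, b k * b l * ψ (z k - z l))
          - s ^ 2 * ψ 0 := by
      have hinner : ∀ k, ∑ l, b k * b l * Q k l
          = b k * ψ (z k) * s + b k * ∑ l, b l * ψ (z l)
            - (∑ l, b k * b l * ψ (z k - z l)) - b k * s * ψ 0 := by
        intro k
        simp only [hQdef, Matrix.of_apply, mul_sub, mul_add]
        rw [Finset.sum_sub_distrib, Finset.sum_sub_distrib, Finset.sum_add_distrib]
        have h1 : ∑ x, b k * b x * ψ (z k) = b k * ψ (z k) * s := by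
          rw [hs, Finset.mul_sum]
          exact Finset.sum_congr rfl fun x _ => by ring
        have h2 : ∑ x, b k * b x * ψ (z x) = b k * ∑ l, b l * ψ (z l) := by
          rw [Finset.mul_sum]
          exact Finset.sum_congr rfl fun x _ => by ring
        have h4 : ∑ x, b k * b x * ψ 0 = b k * s * ψ 0 := by
          have : b k * s * ψ 0 = b k * ψ 0 * s := by ring
          rw [this, hs, Finset.mul_sum]
          exact Finset.sum_congr rfl fun x _ => by ring
        rw [h1, h2, h4]
      rw [Finset.sum_congr rfl fun k _ => hinner k]
      rw [Finset.sum_sub_distrib, Finset.sum_sub_distrib, Finset.sum_add_distrib]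
      have g1 : ∑ x, b x * ψ (z x) * s = s * ∑ k, b k * ψ (z k) := by
        rw [Finset.mul_sum]
        exact Finset.sum_congr rfl fun x _ => by ring
      have g2 : ∑ x, b x * ∑ l, b l * ψ (z l) = s * ∑ l, b l * ψ (z l) := by
        rw [hs, Finset.sum_mul]
      have g3 : ∑ x, b x * s * ψ 0 = s ^ 2 * ψ 0 := by
        have e : ∑ x, b x * s * ψ 0 = (∑ x, b x) * (s * ψ 0) := by
          rw [Finset.sum_mul]
          exact Finset.sum_congr rfl fun x _ => by ring
        rw [e, ← hs]
        ring
      rw [g1, g2, g3]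
      ring
    rw [expand]
    nlinarith [hneg]
  have hrep : ∀ k l, Real.exp (-ψ (z k - z l))
      = Real.exp (ψ 0) * ((Real.exp (-ψ (z k)) * Real.exp (-ψ (z l))) * Real.exp (Q k l)) := by
    intro k l
    rw [← Real.exp_add, ← Real.exp_add, ← Real.exp_add]
    congr 1
    simp only [hQdef, Matrix.of_apply]
    ring
  have key : ∑ k, ∑ l, c k * c l * Real.exp (-ψ (z k - z l))
      = Real.exp (ψ 0) * ∑ k, ∑ l, (c k * Real.exp (-ψ (z k))) * (c l * Real.exp (-ψ (z l)))
          * Real.exp (Q k l) := by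
    rw [Finset.mul_sum]
    refine Finset.sum_congr rfl fun k _ => ?_
    rw [Finset.mul_sum]
    refine Finset.sum_congr rfl fun l _ => ?_
    rw [hrep k l]
    ring
  rw [key]
  exact mul_nonneg (Real.exp_nonneg _) (quadform_exp hsym hq _)

end Schoenberg

section Closure

variable {V : Type*} [AddCommGroup V]

lemma IsNegDefFn.add {ψ φ : V → ℝ} (hψ : IsNegDefFn ψ) (hφ : IsNegDefFn φ) :
    IsNegDefFn fun x => ψ x + φ x := by
  intro m z c hc
  have h1 := hψ m z c hc
  have h2 := hφ m z c hc
  have : ∑ k, ∑ l, c k * c l * (ψ (z k - z l) + φ (z k - z l))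
      = (∑ k, ∑ l, c k * c l * ψ (z k - z l)) + ∑ k, ∑ l, c k * c l * φ (z k - z l) := by
    rw [← Finset.sum_add_distrib]
    exact Finset.sum_congr rfl fun k _ => by
      rw [← Finset.sum_add_distrib]
      exact Finset.sum_congr rfl fun l _ => by ring
  rw [this]
  linarith

lemma IsNegDefFn.const (a : ℝ) : IsNegDefFn fun _ : V => a := by
  intro m z c hc
  have : ∑ k, ∑ l, c k * c l * a = (∑ k, c k) * ((∑ l, c l) * a) := by
    rw [Finset.sum_mul]
    exact Finset.sum_congr rfl fun k _ => by
      rw [Finset.sum_mul, Finset.mul_sum]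
      exact Finset.sum_congr rfl fun l _ => by ring
  rw [this, hc]
  simp

lemma IsNegDefFn.smul {ψ : V → ℝ} (hψ : IsNegDefFn ψ) {a : ℝ} (ha : 0 ≤ a) :
    IsNegDefFn fun x => a * ψ x := by
  intro m z c hc
  have : ∑ k, ∑ l, c k * c l * (a * ψ (z k - z l))
      = a * ∑ k, ∑ l, c k * c l * ψ (z k - z l) := by
    rw [Finset.mul_sum]
    exact Finset.sum_congr rfl fun k _ => by
      rw [Finset.mul_sum]
      exact Finset.sum_congr rfl fun l _ => by ring
  rw [this]
  exact mul_nonpos_of_nonneg_of_nonpos ha (hψ m z c hc)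

lemma IsNegDefFn.of_posDef_sub {φ : V → ℝ} (hφ : IsPosDefFn φ) (a : ℝ) :
    IsNegDefFn fun x => a - φ x := by
  intro m z c hc
  have h1 := hφ m z c
  have h2 := IsNegDefFn.const (V := V) a m z c hc
  have : ∑ k, ∑ l, c k * c l * (a - φ (z k - z l))
      = (∑ k, ∑ l, c k * c l * a) - ∑ k, ∑ l, c k * c l * φ (z k - z l) := by
    rw [← Finset.sum_sub_distrib]
    exact Finset.sum_congr rfl fun k _ => by
      rw [← Finset.sum_sub_distrib]
      exact Finset.sum_congr rfl fun l _ => by ring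
  rw [this]
  linarith

lemma IsPosDefFn.smul {φ : V → ℝ} (hφ : IsPosDefFn φ) {a : ℝ} (ha : 0 ≤ a) :
    IsPosDefFn fun x => a * φ x := by
  intro m z c
  have : ∑ k, ∑ l, c k * c l * (a * φ (z k - z l))
      = a * ∑ k, ∑ l, c k * c l * φ (z k - z l) := by
    rw [Finset.mul_sum]
    exact Finset.sum_congr rfl fun k _ => by
      rw [Finset.mul_sum]
      exact Finset.sum_congr rfl fun l _ => by ring
  rw [this]
  exact mul_nonneg ha (hφ m z c)

lemma IsPosDefFn.congr {φ g : V → ℝ} (h : ∀ x, φ x = g x) (hφ : IsPosDefFn φ) :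
    IsPosDefFn g := by
  have : φ = g := funext h
  rwa [← this]

lemma IsNegDefFn.congr {φ g : V → ℝ} (h : ∀ x, φ x = g x) (hφ : IsNegDefFn φ) :
    IsNegDefFn g := by
  have : φ = g := funext h
  rwa [← this]

lemma IsNegDefFn.comp_fst {W : Type*} [AddCommGroup W] {ψ : V → ℝ} (hψ : IsNegDefFn ψ) :
    IsNegDefFn fun p : V × W => ψ p.1 := by
  intro m z c hc
  simpa using hψ m (fun k => (z k).1) c hc

lemma IsNegDefFn.comp_snd {W : Type*} [AddCommGroup W] {ψ : W → ℝ} (hψ : IsNegDefFn ψ) :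
    IsNegDefFn fun p : V × W => ψ p.2 := by
  intro m z c hc
  simpa using hψ m (fun k => (z k).2) c hc

lemma isNegDefFn_normSq {E : Type*} [NormedAddCommGroup E] [InnerProductSpace ℝ E] :
    IsNegDefFn fun x : E => ‖x‖ ^ 2 := by
  intro m z c hc
  have expand : ∀ k l : Fin m, c k * c l * ‖z k - z l‖ ^ 2
      = c k * c l * ‖z k‖ ^ 2 + c k * c l * ‖z l‖ ^ 2
        - 2 * (inner ℝ (c k • z k) (c l • z l) : ℝ) := by
    intro k l
    rw [norm_sub_sq_real, real_inner_smul_left, real_inner_smul_right]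
    ring
  have sum1 : ∑ k, ∑ l, c k * c l * ‖z k‖ ^ 2 = (∑ k, c k * ‖z k‖ ^ 2) * (∑ l, c l) := by
    rw [Finset.sum_mul]
    exact Finset.sum_congr rfl fun k _ => by
      rw [Finset.mul_sum]
      exact Finset.sum_congr rfl fun l _ => by ring
  have sum2 : ∑ k, ∑ l, c k * c l * ‖z l‖ ^ 2 = (∑ k, c k) * (∑ l, c l * ‖z l‖ ^ 2) := by
    rw [Finset.sum_mul]
    exact Finset.sum_congr rfl fun k _ => by
      rw [Finset.mul_sum]
      exact Finset.sum_congr rfl fun l _ => by ring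
  have sum3 : ∑ k, ∑ l, (inner ℝ (c k • z k) (c l • z l) : ℝ)
      = ‖∑ k, c k • z k‖ ^ 2 := by
    rw [← real_inner_self_eq_norm_sq, sum_inner]
    exact Finset.sum_congr rfl fun k _ => (inner_sum _ _ _).symm
  have split : ∑ k, ∑ l, c k * c l * ‖z k - z l‖ ^ 2
      = (∑ k, ∑ l, c k * c l * ‖z k‖ ^ 2) + (∑ k, ∑ l, c k * c l * ‖z l‖ ^ 2)
        - 2 * ∑ k, ∑ l, (inner ℝ (c k • z k) (c l • z l) : ℝ) := by
    rw [Finset.mul_sum, ← Finset.sum_add_distrib, ← Finset.sum_sub_distrib]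
    refine Finset.sum_congr rfl fun k _ => ?_
    rw [Finset.mul_sum, ← Finset.sum_add_distrib, ← Finset.sum_sub_distrib]
    exact Finset.sum_congr rfl fun l _ => expand k l
  rw [split, sum1, sum2, sum3, hc]
  have := sq_nonneg ‖∑ k, c k • z k‖
  nlinarith

end Closure

section IntegralClosure

variable {V : Type*} [AddCommGroup V] {α : Type*} [MeasurableSpace α]

lemma isPosDefFn_integral (μ : Measure α) {f : α → V → ℝ}
    (hpos : ∀ᵐ s ∂μ, IsPosDefFn (f s))
    (hint : ∀ v : V, Integrable (fun s => f s v) μ) :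
    IsPosDefFn fun v => ∫ s, f s v ∂μ := by
  intro m z c
  have swap : ∫ s, ∑ k, ∑ l, c k * c l * f s (z k - z l) ∂μ
      = ∑ k, ∑ l, c k * c l * ∫ s, f s (z k - z l) ∂μ := by
    rw [integral_finset_sum _ fun k _ => integrable_finset_sum _ fun l _ =>
      ((hint _).const_mul _)]
    refine Finset.sum_congr rfl fun k _ => ?_
    rw [integral_finset_sum _ fun l _ => ((hint _).const_mul _)]
    exact Finset.sum_congr rfl fun l _ => integral_const_mul _ _
  rw [← swap]
  refine integral_nonneg_of_ae ?_
  filter_upwards [hpos] with s hs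
  exact hs m z c

lemma isNegDefFn_integral (μ : Measure α) {f : α → V → ℝ}
    (hneg : ∀ᵐ s ∂μ, IsNegDefFn (f s))
    (hint : ∀ v : V, Integrable (fun s => f s v) μ) :
    IsNegDefFn fun v => ∫ s, f s v ∂μ := by
  intro m z c hc
  have swap : ∫ s, ∑ k, ∑ l, c k * c l * f s (z k - z l) ∂μ
      = ∑ k, ∑ l, c k * c l * ∫ s, f s (z k - z l) ∂μ := by
    rw [integral_finset_sum _ fun k _ => integrable_finset_sum _ fun l _ =>
      ((hint _).const_mul _)]
    refine Finset.sum_congr rfl fun k _ => ?_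
    rw [integral_finset_sum _ fun l _ => ((hint _).const_mul _)]
    exact Finset.sum_congr rfl fun l _ => integral_const_mul _ _
  rw [← swap]
  refine integral_nonpos_of_ae ?_
  filter_upwards [hneg] with s hs
  exact hs m z c hc

end IntegralClosure

section Analysis

lemma one_sub_exp_neg_nonneg {y : ℝ} (hy : 0 ≤ y) : 0 ≤ 1 - Real.exp (-y) := by
  have : Real.exp (-y) ≤ Real.exp 0 := Real.exp_le_exp.mpr (by linarith)
  rw [Real.exp_zero] at this
  linarith

lemma one_sub_exp_neg_le_one {y : ℝ} (hy : 0 ≤ y) : 1 - Real.exp (-y) ≤ 1 := by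
  have := Real.exp_pos (-y)
  linarith

lemma one_sub_exp_neg_le {y : ℝ} : 1 - Real.exp (-y) ≤ y := by
  have := Real.add_one_le_exp (-y)
  linarith

lemma contOn_one_sub_exp {ρ b : ℝ} :
    ContinuousOn (fun s : ℝ => (1 - Real.exp (-(s * b))) * s ^ (-1 - ρ)) (Set.Ioi 0) := by
  refine ContinuousOn.mul ?_ ?_
  · exact (continuous_const.sub ((continuous_id.mul continuous_const).neg.rexp)).continuousOn
  · exact ContinuousOn.rpow_const continuousOn_id fun x hx => Or.inl (ne_of_gt hx)

lemma integrableOn_one_sub_exp {ρ : ℝ} (hρ0 : 0 < ρ) (hρ1 : ρ < 1) {b : ℝ} (hb : 0 ≤ b) :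
    MeasureTheory.IntegrableOn
      (fun s : ℝ => (1 - Real.exp (-(s * b))) * s ^ (-1 - ρ)) (Set.Ioi 0) := by
  have h01 : MeasureTheory.IntegrableOn
      (fun s : ℝ => (1 - Real.exp (-(s * b))) * s ^ (-1 - ρ)) (Set.Ioc 0 1) := by
    have hbase : MeasureTheory.IntegrableOn (fun s : ℝ => b * s ^ (-ρ)) (Set.Ioc 0 1) := by
      have := intervalIntegral.intervalIntegrable_rpow' (a := 0) (b := 1)
        (r := -ρ) (by linarith)
      rw [intervalIntegrable_iff_integrableOn_Ioc_of_le (by norm_num)] at this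
      exact this.const_mul b
    refine MeasureTheory.Integrable.mono' hbase
      (((contOn_one_sub_exp).mono Set.Ioc_subset_Ioi_self).aestronglyMeasurable
        measurableSet_Ioc) ?_
    rw [MeasureTheory.ae_restrict_iff' measurableSet_Ioc]
    refine MeasureTheory.ae_of_all _ fun s hs => ?_
    obtain ⟨hs0, _⟩ := hs
    have hsb : 0 ≤ s * b := mul_nonneg hs0.le hb
    have h1 : 0 ≤ 1 - Real.exp (-(s * b)) := one_sub_exp_neg_nonneg hsb
    have h2 : (0:ℝ) ≤ s ^ (-1 - ρ) := Real.rpow_nonneg hs0.le _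
    rw [Real.norm_of_nonneg (mul_nonneg h1 h2)]
    have h3 : 1 - Real.exp (-(s * b)) ≤ s * b := one_sub_exp_neg_le
    have h4 : (1 - Real.exp (-(s * b))) * s ^ (-1 - ρ) ≤ (s * b) * s ^ (-1 - ρ) :=
      mul_le_mul_of_nonneg_right h3 h2
    have h5 : (s * b) * s ^ (-1 - ρ) = b * (s * s ^ (-1 - ρ)) := by ring
    have h6 : s * s ^ (-1 - ρ) = s ^ (-ρ) := by
      nth_rewrite 1 [← Real.rpow_one s]
      rw [← Real.rpow_add hs0]
      congr 1
      ring
    rw [h5, h6] at h4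
    exact h4
  have h1i : MeasureTheory.IntegrableOn
      (fun s : ℝ => (1 - Real.exp (-(s * b))) * s ^ (-1 - ρ)) (Set.Ioi 1) := by
    have hbase : MeasureTheory.IntegrableOn (fun s : ℝ => s ^ (-1 - ρ)) (Set.Ioi 1) :=
      integrableOn_Ioi_rpow_of_lt (by linarith) one_pos
    refine MeasureTheory.Integrable.mono' hbase
      (((contOn_one_sub_exp).mono (Set.Ioi_subset_Ioi zero_le_one)).aestronglyMeasurable
        measurableSet_Ioi) ?_
    rw [MeasureTheory.ae_restrict_iff' measurableSet_Ioi]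
    refine MeasureTheory.ae_of_all _ fun s hs => ?_
    have hs0 : (0:ℝ) < s := lt_trans one_pos hs
    have hsb : 0 ≤ s * b := mul_nonneg hs0.le hb
    have h1 : 0 ≤ 1 - Real.exp (-(s * b)) := one_sub_exp_neg_nonneg hsb
    have h2 : (0:ℝ) ≤ s ^ (-1 - ρ) := Real.rpow_nonneg hs0.le _
    rw [Real.norm_of_nonneg (mul_nonneg h1 h2)]
    calc (1 - Real.exp (-(s * b))) * s ^ (-1 - ρ)
        ≤ 1 * s ^ (-1 - ρ) := mul_le_mul_of_nonneg_right (one_sub_exp_neg_le_one hsb) h2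
      _ = s ^ (-1 - ρ) := one_mul _
  have := h01.union h1i
  rwa [Set.Ioc_union_Ioi_eq_Ioi zero_le_one] at this

end Analysis

section Subordination

lemma inner_exp_integral {s : ℝ} (hs : 0 < s) {x : ℝ} (hx : 0 < x) :
    ∫ u in Set.Ioc (0:ℝ) x, Real.exp (-(s * u)) = (1 - Real.exp (-(s * x))) / s := by
  rw [← intervalIntegral.integral_of_le hx.le]
  have hderiv : ∀ u ∈ Set.uIcc (0:ℝ) x,
      HasDerivAt (fun u : ℝ => -Real.exp (-(s * u)) / s) (Real.exp (-(s * u))) u := by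
    intro u _
    have h1 : HasDerivAt (fun u : ℝ => -(s * u)) (-s) u := by
      exact HasDerivAt.neg (by simpa using (hasDerivAt_id u).const_mul s)
    have h2 := (h1.exp.neg).div_const s
    exact h2.congr_deriv (by field_simp)
  have hcont : IntervalIntegrable (fun u : ℝ => Real.exp (-(s * u))) MeasureTheory.volume 0 x :=
    ((continuous_const.mul continuous_id).neg.rexp).intervalIntegrable 0 x
  rw [intervalIntegral.integral_eq_sub_of_hasDerivAt hderiv hcont]
  have h0 : -(s * (0:ℝ)) = 0 := by ring
  rw [h0, Real.exp_zero]
  field_simp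
  ring

lemma integral_one_sub_exp {ρ : ℝ} (hρ0 : 0 < ρ) (hρ1 : ρ < 1) {x : ℝ} (hx : 0 ≤ x) :
    ∫ s in Set.Ioi (0:ℝ), (1 - Real.exp (-(s * x))) * s ^ (-1 - ρ)
      = Real.Gamma (1 - ρ) / ρ * x ^ ρ := by
  rcases eq_or_lt_of_le hx with h0 | hx
  · rw [← h0, Real.zero_rpow (ne_of_gt hρ0)]
    simp
  -- Fubini setup
  set μ := MeasureTheory.volume.restrict (Set.Ioi (0:ℝ)) with hμ
  set ν := MeasureTheory.volume.restrict (Set.Ioc (0:ℝ) x) with hν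
  set f : ℝ → ℝ → ℝ := fun s u => s ^ (-ρ) * Real.exp (-(s * u)) with hf
  have hfnn : ∀ s u : ℝ, 0 < s → 0 ≤ f s u := fun s u hs =>
    mul_nonneg (Real.rpow_nonneg hs.le _) (Real.exp_nonneg _)
  have step1 : ∀ s ∈ Set.Ioi (0:ℝ),
      (∫ u, f s u ∂ν) = (1 - Real.exp (-(s * x))) * s ^ (-1 - ρ) := by
    intro s hs
    have hs0 : (0:ℝ) < s := hs
    rw [hν, hf]
    simp only []
    rw [MeasureTheory.integral_const_mul, inner_exp_integral hs0 hx]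
    have hsplit : s ^ (-1 - ρ) = s ^ (-ρ) / s := by
      rw [show (-1 - ρ) = -ρ + (-1) by ring, Real.rpow_add hs0, Real.rpow_neg_one,
        div_eq_mul_inv]
    rw [hsplit]
    ring
  have hmeasf : MeasureTheory.AEStronglyMeasurable (Function.uncurry f) (μ.prod ν) := by
    rw [hμ, hν, MeasureTheory.Measure.prod_restrict]
    refine ContinuousOn.aestronglyMeasurable ?_ (measurableSet_Ioi.prod measurableSet_Ioc)
    refine ContinuousOn.mul ?_ ?_
    · exact ContinuousOn.rpow_const (continuous_fst.continuousOn)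
        fun p hp => Or.inl (ne_of_gt hp.1)
    · exact ((continuous_fst.mul continuous_snd).neg.rexp).continuousOn
  have hint : MeasureTheory.Integrable (Function.uncurry f) (μ.prod ν) := by
    refine (MeasureTheory.integrable_prod_iff hmeasf).mpr ⟨?_, ?_⟩
    · refine MeasureTheory.ae_of_all _ fun s => ?_
      simp only [Function.uncurry_apply_pair]
      exact (continuous_const.mul
        ((continuous_const.mul continuous_id).neg.rexp)).integrableOn_Ioc
    · have hcongr : ∀ s ∈ Set.Ioi (0:ℝ),
          (∫ u, ‖f s u‖ ∂ν) = (1 - Real.exp (-(s * x))) * s ^ (-1 - ρ) := by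
        intro s hs
        have hn : ∀ u, ‖f s u‖ = f s u := fun u => Real.norm_of_nonneg (hfnn s u hs)
        simp_rw [hn]
        exact step1 s hs
      simp only [Function.uncurry_apply_pair]
      exact (integrableOn_one_sub_exp hρ0 hρ1 hx.le).congr
        ((MeasureTheory.ae_restrict_mem measurableSet_Ioi).mono
          fun s hs => (hcongr s hs).symm)
  have swap := MeasureTheory.integral_integral_swap hint
  have lhs_eq : (∫ s, ∫ u, f s u ∂ν ∂μ)
      = ∫ s in Set.Ioi (0:ℝ), (1 - Real.exp (-(s * x))) * s ^ (-1 - ρ) := by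
    rw [hμ]
    exact MeasureTheory.setIntegral_congr_fun measurableSet_Ioi fun s hs => step1 s hs
  have inner2 : ∀ u ∈ Set.Ioc (0:ℝ) x,
      (∫ s, f s u ∂μ) = Real.Gamma (1 - ρ) * u ^ (ρ - 1) := by
    intro u hu
    have hu0 : (0:ℝ) < u := hu.1
    have base := Real.integral_rpow_mul_exp_neg_mul_Ioi (a := 1 - ρ) (r := u)
      (by linarith) hu0
    have hμint : (∫ s, f s u ∂μ) = (1 / u) ^ (1 - ρ) * Real.Gamma (1 - ρ) := by
      rw [hμ, ← base]
      refine MeasureTheory.setIntegral_congr_fun measurableSet_Ioi fun t ht => ?_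
      rw [hf]
      simp only []
      rw [show (1 - ρ) - 1 = -ρ by ring, mul_comm u t]
    rw [hμint, one_div, Real.inv_rpow hu0.le, ← Real.rpow_neg hu0.le,
      show -(1 - ρ) = ρ - 1 by ring, mul_comm]
  have rhs_eq : (∫ u, ∫ s, f s u ∂μ ∂ν) = Real.Gamma (1 - ρ) * (x ^ ρ / ρ) := by
    rw [hν, MeasureTheory.setIntegral_congr_fun measurableSet_Ioc inner2,
      MeasureTheory.integral_const_mul]
    congr 1
    rw [← intervalIntegral.integral_of_le hx.le,
      integral_rpow (Or.inl (by linarith : (-1:ℝ) < ρ - 1)),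
      show ρ - 1 + 1 = ρ by ring, Real.zero_rpow (ne_of_gt hρ0)]
    ring
  rw [← lhs_eq, swap, rhs_eq]
  ring

end Subordination

section Chain

variable {V : Type*} [AddCommGroup V]

lemma isNegDefFn_one_sub_exp_smul {ψ : V → ℝ} (hψ : IsNegDefFn ψ)
    (heven : ∀ x, ψ (-x) = ψ x) {s : ℝ} (hs : 0 ≤ s) :
    IsNegDefFn fun x => 1 - Real.exp (-(s * ψ x)) := by
  refine IsNegDefFn.of_posDef_sub ?_ 1
  exact isPosDefFn_exp_neg (ψ := fun x => s * ψ x)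
    (fun x => by show s * ψ (-x) = s * ψ x; rw [heven]) (hψ.smul hs)

lemma isNegDefFn_rpow {ψ : V → ℝ} (hψ : IsNegDefFn ψ) (heven : ∀ x, ψ (-x) = ψ x)
    (hnn : ∀ x, 0 ≤ ψ x) {ρ : ℝ} (hρ0 : 0 < ρ) (hρ1 : ρ < 1) :
    IsNegDefFn fun x => ψ x ^ ρ := by
  have hΓ : 0 < Real.Gamma (1 - ρ) := Real.Gamma_pos_of_pos (by linarith)
  have hrep : ∀ x : V, (ρ / Real.Gamma (1 - ρ))
      * ∫ s in Set.Ioi (0:ℝ), (1 - Real.exp (-(s * ψ x))) * s ^ (-1 - ρ) = ψ x ^ ρ := by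
    intro x
    rw [integral_one_sub_exp hρ0 hρ1 (hnn x)]
    field_simp
  refine IsNegDefFn.congr hrep ?_
  refine IsNegDefFn.smul ?_ (by positivity)
  refine isNegDefFn_integral _ ?_ fun v => integrableOn_one_sub_exp hρ0 hρ1 (hnn v)
  filter_upwards [MeasureTheory.ae_restrict_mem measurableSet_Ioi] with s hs
  have hbase := isNegDefFn_one_sub_exp_smul hψ heven (le_of_lt hs)
  have := hbase.smul (a := s ^ (-1 - ρ)) (Real.rpow_nonneg (le_of_lt hs) _)
  exact this.congr fun x => by ring

lemma isNegDefFn_norm {E : Type*} [NormedAddCommGroup E] [InnerProductSpace ℝ E] :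
    IsNegDefFn fun x : E => ‖x‖ := by
  have h := isNegDefFn_rpow (ψ := fun x : E => ‖x‖ ^ 2) isNegDefFn_normSq
    (fun x => by simp) (fun x => by positivity) (ρ := 1/2) (by norm_num) (by norm_num)
  refine h.congr fun x => ?_
  show (‖x‖ ^ 2 : ℝ) ^ ((1:ℝ)/2) = ‖x‖
  rw [← Real.rpow_natCast ‖x‖ 2, ← Real.rpow_mul (norm_nonneg x)]
  norm_num

set_option maxHeartbeats 1000000 in
lemma integrableOn_exp_one_sub_exp {ρ : ℝ} (hρ0 : 0 < ρ) (hρ1 : ρ < 1) {b : ℝ} (hb : 0 ≤ b) :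
    MeasureTheory.IntegrableOn
      (fun s : ℝ => (Real.exp (-s) * s ^ (-1 - ρ)) * (1 - Real.exp (-(s * b))))
      (Set.Ioi 0) := by
  refine MeasureTheory.Integrable.mono' (integrableOn_one_sub_exp hρ0 hρ1 hb) ?_ ?_
  · refine ContinuousOn.aestronglyMeasurable ?_ measurableSet_Ioi
    have h1 : ContinuousOn (fun s : ℝ => s ^ (-1 - ρ)) (Set.Ioi 0) :=
      fun t ht => (Real.continuousAt_rpow_const t _ (Or.inl (ne_of_gt ht))).continuousWithinAt
    have h2 : Continuous (fun s : ℝ => Real.exp (-s)) := continuous_id.neg.rexp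
    have h3 : Continuous (fun s : ℝ => 1 - Real.exp (-(s * b))) :=
      continuous_const.sub ((continuous_id.mul continuous_const).neg.rexp)
    exact (h2.continuousOn.mul h1).mul h3.continuousOn
  · rw [MeasureTheory.ae_restrict_iff' measurableSet_Ioi]
    refine MeasureTheory.ae_of_all _ fun s hs => ?_
    have hs0 : (0:ℝ) < s := hs
    have e1 : 0 ≤ 1 - Real.exp (-(s * b)) :=
      one_sub_exp_neg_nonneg (mul_nonneg hs0.le hb)
    have e2 : (0:ℝ) ≤ s ^ (-1 - ρ) := Real.rpow_nonneg hs0.le _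
    have e3 : Real.exp (-s) ≤ 1 := by
      rw [show (1:ℝ) = Real.exp 0 by rw [Real.exp_zero]]
      exact Real.exp_le_exp.mpr (by linarith)
    rw [Real.norm_of_nonneg (mul_nonneg (mul_nonneg (Real.exp_nonneg _) e2) e1)]
    calc Real.exp (-s) * s ^ (-1 - ρ) * (1 - Real.exp (-(s * b)))
        ≤ 1 * s ^ (-1 - ρ) * (1 - Real.exp (-(s * b))) :=
          mul_le_mul_of_nonneg_right (mul_le_mul_of_nonneg_right e3 e2) e1
      _ = (1 - Real.exp (-(s * b))) * s ^ (-1 - ρ) := by ring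

lemma isNegDefFn_one_add_rpow {ψ : V → ℝ} (hψ : IsNegDefFn ψ) (heven : ∀ x, ψ (-x) = ψ x)
    (hnn : ∀ x, 0 ≤ ψ x) {ρ : ℝ} (hρ0 : 0 < ρ) (hρ1 : ρ ≤ 1) :
    IsNegDefFn fun x => (1 + ψ x) ^ ρ := by
  rcases eq_or_lt_of_le hρ1 with h1 | h1
  · refine IsNegDefFn.congr (φ := fun x => 1 + ψ x) (fun x => ?_)
      ((IsNegDefFn.const 1).add hψ)
    rw [h1, Real.rpow_one]
  have hΓ : 0 < Real.Gamma (1 - ρ) := Real.Gamma_pos_of_pos (by linarith)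
  have hrep : ∀ x : V, 1 + (ρ / Real.Gamma (1 - ρ)) * (∫ s in Set.Ioi (0:ℝ),
        (Real.exp (-s) * s ^ (-1 - ρ)) * (1 - Real.exp (-(s * ψ x))))
      = (1 + ψ x) ^ ρ := by
    intro x
    have hb : (0:ℝ) ≤ ψ x := hnn x
    have hI1 := integral_one_sub_exp hρ0 h1 (by linarith : (0:ℝ) ≤ 1 + ψ x)
    have hI2 := integral_one_sub_exp hρ0 h1 (zero_le_one (α := ℝ))
    have hint1 := integrableOn_one_sub_exp hρ0 h1 (by linarith : (0:ℝ) ≤ 1 + ψ x)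
    have hint2 := integrableOn_one_sub_exp hρ0 h1 (zero_le_one (α := ℝ))
    have hdiff : (∫ s in Set.Ioi (0:ℝ),
          (Real.exp (-s) * s ^ (-1 - ρ)) * (1 - Real.exp (-(s * ψ x))))
        = Real.Gamma (1 - ρ) / ρ * (1 + ψ x) ^ ρ - Real.Gamma (1 - ρ) / ρ := by
      have hsub := MeasureTheory.integral_sub hint1 hint2
      have hptw : ∀ s ∈ Set.Ioi (0:ℝ),
          (1 - Real.exp (-(s * (1 + ψ x)))) * s ^ (-1 - ρ)
            - (1 - Real.exp (-(s * 1))) * s ^ (-1 - ρ)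
          = (Real.exp (-s) * s ^ (-1 - ρ)) * (1 - Real.exp (-(s * ψ x))) := by
        intro s hs
        have hex : Real.exp (-(s * (1 + ψ x)))
            = Real.exp (-s) * Real.exp (-(s * ψ x)) := by
          rw [← Real.exp_add]
          congr 1
          ring
        rw [hex, mul_one]
        ring
      calc (∫ s in Set.Ioi (0:ℝ),
            (Real.exp (-s) * s ^ (-1 - ρ)) * (1 - Real.exp (-(s * ψ x))))
          = ∫ s in Set.Ioi (0:ℝ),
              ((1 - Real.exp (-(s * (1 + ψ x)))) * s ^ (-1 - ρ)
                - (1 - Real.exp (-(s * 1))) * s ^ (-1 - ρ)) :=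
            (MeasureTheory.setIntegral_congr_fun measurableSet_Ioi
              fun s hs => hptw s hs).symm
        _ = _ := by
            rw [hsub, hI1, hI2, Real.one_rpow, mul_one]
    rw [hdiff]
    field_simp
    ring
  refine IsNegDefFn.congr hrep ?_
  refine (IsNegDefFn.const 1).add ?_
  refine IsNegDefFn.smul ?_ (by positivity)
  refine isNegDefFn_integral _ ?_ fun v => integrableOn_exp_one_sub_exp hρ0 h1 (hnn v)
  filter_upwards [MeasureTheory.ae_restrict_mem measurableSet_Ioi] with s hs
  have hbase := isNegDefFn_one_sub_exp_smul hψ heven (le_of_lt hs)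
  have := hbase.smul (a := Real.exp (-s) * s ^ (-1 - ρ))
    (mul_nonneg (Real.exp_nonneg _) (Real.rpow_nonneg (le_of_lt hs) _))
  exact this.congr fun x => rfl

end Chain

section Main

lemma isNegDefFn_G (d : ℕ) {ρ₁ ρ₂ : ℝ} (hρ₁ : ρ₁ ∈ Set.Ioc (0 : ℝ) 1)
    (hρ₂ : ρ₂ ∈ Set.Ioc (0 : ℝ) 1) :
    IsNegDefFn (fun v : EuclideanSpace ℝ (Fin d) × ℝ =>
      (1 + ‖v.1‖) ^ ρ₁ + (1 + |v.2|) ^ ρ₂ - 1) := by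
  have h1 : IsNegDefFn (fun h : EuclideanSpace ℝ (Fin d) => (1 + ‖h‖) ^ ρ₁) :=
    isNegDefFn_one_add_rpow isNegDefFn_norm (fun x => by simp)
      (fun x => norm_nonneg x) hρ₁.1 hρ₁.2
  have h2 : IsNegDefFn (fun u : ℝ => (1 + ‖u‖) ^ ρ₂) :=
    isNegDefFn_one_add_rpow isNegDefFn_norm (fun x => by simp)
      (fun x => norm_nonneg x) hρ₂.1 hρ₂.2
  have h3 := (h1.comp_fst (W := ℝ)).add (h2.comp_snd (V := EuclideanSpace ℝ (Fin d)))
  have h4 := h3.add (IsNegDefFn.const (-1))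
  refine h4.congr fun v => ?_
  show (1 + ‖v.1‖) ^ ρ₁ + (1 + ‖v.2‖) ^ ρ₂ + (-1)
      = (1 + ‖v.1‖) ^ ρ₁ + (1 + |v.2|) ^ ρ₂ - 1
  rw [Real.norm_eq_abs]
  ring

lemma evenG (d : ℕ) {ρ₁ ρ₂ : ℝ} :
    ∀ v : EuclideanSpace ℝ (Fin d) × ℝ,
      (1 + ‖(-v).1‖) ^ ρ₁ + (1 + |(-v).2|) ^ ρ₂ - 1
        = (1 + ‖v.1‖) ^ ρ₁ + (1 + |v.2|) ^ ρ₂ - 1 := by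
  intro v
  simp [norm_neg, abs_neg]

lemma integrableOn_gamma_scaled {a G : ℝ} (ha : 0 < a) (hG : 1 ≤ G) :
    MeasureTheory.IntegrableOn
      (fun t : ℝ => t ^ (a - 1) * Real.exp (-(G * t))) (Set.Ioi 0) := by
  refine MeasureTheory.Integrable.mono' (Real.GammaIntegral_convergent ha) ?_ ?_
  · refine ContinuousOn.aestronglyMeasurable ?_ measurableSet_Ioi
    have hc1 : ContinuousOn (fun t : ℝ => t ^ (a - 1)) (Set.Ioi 0) :=
      fun t ht => (Real.continuousAt_rpow_const t _ (Or.inl (ne_of_gt ht))).continuousWithinAt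
    have hc2 : Continuous (fun t : ℝ => Real.exp (-(G * t))) :=
      ((continuous_const.mul continuous_id).neg).rexp
    exact hc1.mul hc2.continuousOn
  · rw [MeasureTheory.ae_restrict_iff' measurableSet_Ioi]
    refine MeasureTheory.ae_of_all _ fun t ht => ?_
    have ht0 : (0:ℝ) < t := ht
    have e2 : (0:ℝ) ≤ t ^ (a - 1) := Real.rpow_nonneg ht0.le _
    rw [Real.norm_of_nonneg (mul_nonneg e2 (Real.exp_nonneg _))]
    have : Real.exp (-(G * t)) ≤ Real.exp (-t) := by
      refine Real.exp_le_exp.mpr ?_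
      have : t ≤ G * t := le_mul_of_one_le_left ht0.le hG
      linarith
    calc t ^ (a - 1) * Real.exp (-(G * t)) ≤ t ^ (a - 1) * Real.exp (-t) :=
          mul_le_mul_of_nonneg_left this e2
      _ = Real.exp (-t) * t ^ (a - 1) := by ring

end Main

end Clayton

/-- Clayton-family space-time covariance: for `λ₁ > 0`, `ρ₁, ρ₂ ∈ (0,1]` and
`σ² ≥ 0`, the function
`C(h,u) = σ² [(1 + ‖h‖)^{ρ₁} + (1 + |u|)^{ρ₂} − 1]^{−1/λ₁}`
is positive definite on `ℝ^d × ℝ` (Euclidean norm on `ℝ^d`). -/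
theorem clayton_spaceTime_posDef
    (d : ℕ) (hd : 1 ≤ d) (lam₁ : ℝ) (hlam : 0 < lam₁)
    (ρ₁ ρ₂ : ℝ) (hρ₁ : ρ₁ ∈ Set.Ioc (0 : ℝ) 1) (hρ₂ : ρ₂ ∈ Set.Ioc (0 : ℝ) 1)
    (σ2 : ℝ) (hσ2 : 0 ≤ σ2) :
    IsPosDefFn (fun hu : EuclideanSpace ℝ (Fin d) × ℝ =>
      σ2 * ((1 + ‖hu.1‖) ^ ρ₁ + (1 + |hu.2|) ^ ρ₂ - 1) ^ (-(1 / lam₁))) := by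
  classical
  set a : ℝ := 1 / lam₁ with ha_def
  have ha : 0 < a := by positivity
  have hΓ : 0 < Real.Gamma a := Real.Gamma_pos_of_pos ha
  set G : EuclideanSpace ℝ (Fin d) × ℝ → ℝ :=
    fun v => (1 + ‖v.1‖) ^ ρ₁ + (1 + |v.2|) ^ ρ₂ - 1 with hGdef
  have hG1 : ∀ v, 1 ≤ G v := by
    intro v
    have e1 : (1:ℝ) ≤ (1 + ‖v.1‖) ^ ρ₁ := by
      calc (1:ℝ) = 1 ^ ρ₁ := (Real.one_rpow _).symm
        _ ≤ (1 + ‖v.1‖) ^ ρ₁ :=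
          Real.rpow_le_rpow zero_le_one (by simpa using norm_nonneg v.1) hρ₁.1.le
    have e2 : (1:ℝ) ≤ (1 + |v.2|) ^ ρ₂ := by
      calc (1:ℝ) = 1 ^ ρ₂ := (Real.one_rpow _).symm
        _ ≤ (1 + |v.2|) ^ ρ₂ :=
          Real.rpow_le_rpow zero_le_one (by simpa using abs_nonneg v.2) hρ₂.1.le
    simp only [hGdef]
    linarith
  have hG0 : ∀ v, 0 < G v := fun v => lt_of_lt_of_le one_pos (hG1 v)
  have hrep : ∀ v, (σ2 / Real.Gamma a)
      * (∫ t in Set.Ioi (0:ℝ), t ^ (a - 1) * Real.exp (-(G v * t)))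
      = σ2 * (G v) ^ (-a) := by
    intro v
    rw [Real.integral_rpow_mul_exp_neg_mul_Ioi ha (hG0 v)]
    rw [one_div, Real.inv_rpow (hG0 v).le, ← Real.rpow_neg (hG0 v).le]
    field_simp
  have hmain : IsPosDefFn fun v : EuclideanSpace ℝ (Fin d) × ℝ =>
      (σ2 / Real.Gamma a)
        * (∫ t in Set.Ioi (0:ℝ), t ^ (a - 1) * Real.exp (-(G v * t))) := by
    refine Clayton.IsPosDefFn.smul ?_ (by positivity)
    refine Clayton.isPosDefFn_integral _ ?_ fun v =>
      Clayton.integrableOn_gamma_scaled ha (hG1 v)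
    filter_upwards [MeasureTheory.ae_restrict_mem measurableSet_Ioi] with t ht
    have hGneg : Clayton.IsNegDefFn G := Clayton.isNegDefFn_G d hρ₁ hρ₂
    have hψ : Clayton.IsNegDefFn (fun v => G v * t) :=
      (hGneg.smul (le_of_lt ht)).congr fun v => mul_comm t (G v)
    have heven : ∀ v, G (-v) * t = G v * t := fun v => by
      rw [hGdef]
      simp only []
      rw [Clayton.evenG d v]
    have hexp := Clayton.isPosDefFn_exp_neg (ψ := fun v => G v * t) heven hψ
    have := Clayton.IsPosDefFn.smul hexp (a := t ^ (a - 1))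
      (Real.rpow_nonneg (le_of_lt ht) _)
    exact Clayton.IsPosDefFn.congr (fun v => rfl) this
  refine Clayton.IsPosDefFn.congr (fun v => ?_) hmain
  rw [hrep v]
end

section
/- (Gumbel–Hougard-family space-time covariance.) Let d ≥ 1, let λ_1 ≥ 1, let ρ_1, ρ_2 ∈ (0,1], and let σ² ≥ 0. Then the function C : ℝ^d × ℝ → ℝ given by C(h, u) = σ² exp( − ( ‖h‖^{ρ_1} + |u|^{ρ_2} )^{1/λ_1} ), where ‖·‖ is the Euclidean norm on ℝ^d, is positive definite on ℝ^d × ℝ, i.e. it is a valid nonseparable stationary fully symmetric space-time covariance function. -/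
open MeasureTheory Set Matrix

section DSum

variable {m : ℕ} (c : Fin m → ℝ)

lemma dsum_add (F G : Fin m → Fin m → ℝ) :
    ∑ k, ∑ l, c k * c l * (F k l + G k l)
      = (∑ k, ∑ l, c k * c l * F k l) + ∑ k, ∑ l, c k * c l * G k l := by
  rw [← Finset.sum_add_distrib]
  refine Finset.sum_congr rfl fun k _ => ?_
  rw [← Finset.sum_add_distrib]
  exact Finset.sum_congr rfl fun l _ => by ring

lemma dsum_sub (F G : Fin m → Fin m → ℝ) :
    ∑ k, ∑ l, c k * c l * (F k l - G k l)
      = (∑ k, ∑ l, c k * c l * F k l) - ∑ k, ∑ l, c k * c l * G k l := by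
  rw [← Finset.sum_sub_distrib]
  refine Finset.sum_congr rfl fun k _ => ?_
  rw [← Finset.sum_sub_distrib]
  exact Finset.sum_congr rfl fun l _ => by ring

lemma dsum_left (a : Fin m → ℝ) :
    ∑ k, ∑ l, c k * c l * a k = (∑ k, c k * a k) * ∑ k, c k := by
  rw [Finset.sum_mul]
  refine Finset.sum_congr rfl fun k _ => ?_
  rw [Finset.mul_sum]
  exact Finset.sum_congr rfl fun l _ => by ring

lemma dsum_right (a : Fin m → ℝ) :
    ∑ k, ∑ l, c k * c l * a l = (∑ k, c k) * ∑ k, c k * a k := by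
  rw [Finset.sum_mul]
  refine Finset.sum_congr rfl fun k _ => ?_
  rw [Finset.mul_sum]
  exact Finset.sum_congr rfl fun l _ => by ring

lemma dsum_const (r : ℝ) :
    ∑ k, ∑ l, c k * c l * r = (∑ k, c k) * (∑ k, c k) * r := by
  rw [dsum_left c fun _ => r, ← Finset.sum_mul]
  ring

lemma dsum_mul_left (t : ℝ) (F : Fin m → Fin m → ℝ) :
    ∑ k, ∑ l, c k * c l * (t * F k l) = t * ∑ k, ∑ l, c k * c l * F k l := by
  rw [Finset.mul_sum]
  refine Finset.sum_congr rfl fun k _ => ?_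
  rw [Finset.mul_sum]
  exact Finset.sum_congr rfl fun l _ => by ring

end DSum

/-- Positive semidefinite symmetric kernel on `Fin m`, quadratic-form version. -/
def PSDQ {m : ℕ} (K : Fin m → Fin m → ℝ) : Prop :=
  (∀ k l, K k l = K l k) ∧ ∀ c : Fin m → ℝ, 0 ≤ ∑ k, ∑ l, c k * c l * K k l

lemma psdq_iff {m : ℕ} (K : Fin m → Fin m → ℝ) : PSDQ K ↔ (Matrix.of K).PosSemidef := by
  have hq : ∀ c : Fin m → ℝ,
      dotProduct (star c) ((Matrix.of K) *ᵥ c) = ∑ k, ∑ l, c k * c l * K k l := by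
    intro c
    simp only [star_trivial, dotProduct, Matrix.mulVec, dotProduct, Matrix.of_apply,
      Finset.mul_sum]
    exact Finset.sum_congr rfl fun k _ => Finset.sum_congr rfl fun l _ => by ring
  rw [Matrix.posSemidef_iff_dotProduct_mulVec]
  constructor
  · rintro ⟨hsym, hpos⟩
    refine ⟨?_, fun c => by rw [hq]; exact hpos c⟩
    ext k l
    simp [Matrix.conjTranspose_apply, hsym k l]
  · rintro ⟨hherm, hpos⟩
    refine ⟨fun k l => ?_, fun c => by rw [← hq]; exact hpos c⟩
    have := congrArg (fun M => M l k) hherm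
    simpa [Matrix.conjTranspose_apply] using this

open scoped MatrixOrder in
lemma PSDQ.schur {m : ℕ} {A B : Fin m → Fin m → ℝ} (hA : PSDQ A) (hB : PSDQ B) :
    PSDQ fun k l => A k l * B k l := by
  obtain ⟨M, hM⟩ := CStarAlgebra.nonneg_iff_eq_star_mul_self.mp ((psdq_iff A).mp hA).nonneg
  have hAkl : ∀ k l, A k l = ∑ j, M j k * M j l := by
    intro k l
    have := congrArg (fun N => N k l) hM
    simpa [Matrix.star_eq_conjTranspose, Matrix.mul_apply, Matrix.conjTranspose_apply] using this
  refine ⟨fun k l => by dsimp only; rw [hA.1, hB.1], fun c => ?_⟩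
  have e1 : ∀ k l, c k * c l * (A k l * B k l)
      = ∑ j, (c k * M j k) * ((c l * M j l) * B k l) := by
    intro k l
    rw [hAkl k l, Finset.sum_mul, Finset.mul_sum]
    exact Finset.sum_congr rfl fun j _ => by ring
  have key : ∑ k, ∑ l, c k * c l * (A k l * B k l)
      = ∑ j, ∑ k, ∑ l, (c k * M j k) * ((c l * M j l) * B k l) := by
    calc ∑ k, ∑ l, c k * c l * (A k l * B k l)
        = ∑ k, ∑ l, ∑ j, (c k * M j k) * ((c l * M j l) * B k l) :=
          Finset.sum_congr rfl fun k _ => Finset.sum_congr rfl fun l _ => e1 k l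
      _ = ∑ k, ∑ j, ∑ l, (c k * M j k) * ((c l * M j l) * B k l) :=
          Finset.sum_congr rfl fun k _ => Finset.sum_comm
      _ = ∑ j, ∑ k, ∑ l, (c k * M j k) * ((c l * M j l) * B k l) := Finset.sum_comm
  rw [key]
  refine Finset.sum_nonneg fun j _ => ?_
  have := hB.2 fun k => c k * M j k
  refine le_of_le_of_eq this (Finset.sum_congr rfl fun k _ => ?_)
  exact Finset.sum_congr rfl fun l _ => by ring

lemma PSDQ.const_one {m : ℕ} : PSDQ fun _ _ : Fin m => (1 : ℝ) := by
  refine ⟨fun _ _ => rfl, fun c => ?_⟩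
  dsimp only
  rw [dsum_const]
  nlinarith [sq_nonneg (∑ k, c k)]

lemma PSDQ.pow {m : ℕ} {K : Fin m → Fin m → ℝ} (hK : PSDQ K) (n : ℕ) :
    PSDQ fun k l => K k l ^ n := by
  induction n with
  | zero => simpa using (PSDQ.const_one (m := m))
  | succ n ih =>
    have h := ih.schur hK
    refine ⟨fun k l => by dsimp only; rw [hK.1], fun c => ?_⟩
    have h2 := h.2 c
    simpa [pow_succ] using h2

lemma PSDQ.exp {m : ℕ} {K : Fin m → Fin m → ℝ} (hK : PSDQ K) :
    PSDQ fun k l => Real.exp (K k l) := by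
  refine ⟨fun k l => by dsimp only; rw [hK.1], fun c => ?_⟩
  dsimp only
  have hexp : ∀ x : ℝ, Real.exp x = ∑' (n : ℕ), x ^ n / (Nat.factorial n : ℝ) := by
    intro x
    rw [Real.exp_eq_exp_ℝ, NormedSpace.exp_eq_tsum ℝ]
    exact tsum_congr fun n => by rw [smul_eq_mul, div_eq_inv_mul]
  have hsummable : ∀ k l : Fin m, Summable fun n : ℕ => c k * c l * (K k l ^ n / (Nat.factorial n : ℝ)) :=
    fun k l => (Real.summable_pow_div_factorial (K k l)).mul_left _
  have key : ∑ k, ∑ l, c k * c l * Real.exp (K k l)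
      = ∑' n : ℕ, ∑ k, ∑ l, c k * c l * (K k l ^ n / (Nat.factorial n : ℝ)) := by
    rw [Summable.tsum_finsetSum (fun k _ => summable_sum fun l _ => hsummable k l)]
    refine Finset.sum_congr rfl fun k _ => ?_
    rw [Summable.tsum_finsetSum (fun l _ => hsummable k l)]
    refine Finset.sum_congr rfl fun l _ => ?_
    rw [hexp, ← tsum_mul_left]
  rw [key]
  refine tsum_nonneg fun n => ?_
  have h := (hK.pow n).2 c
  have e : ∑ k, ∑ l, c k * c l * (K k l ^ n / (Nat.factorial n : ℝ))
      = (∑ k, ∑ l, c k * c l * K k l ^ n) * (Nat.factorial n : ℝ)⁻¹ := by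
    rw [Finset.sum_mul]
    refine Finset.sum_congr rfl fun k _ => ?_
    rw [Finset.sum_mul]
    exact Finset.sum_congr rfl fun l _ => by field_simp
  rw [e]
  positivity

/-- Conditionally negative definite symmetric function, quadratic-form version. -/
def CNDQ {V : Type*} [AddCommGroup V] (g : V → ℝ) : Prop :=
  (∀ x, g (-x) = g x) ∧ ∀ (m : ℕ) (z : Fin m → V) (c : Fin m → ℝ), (∑ k, c k) = 0 →
    ∑ k, ∑ l, c k * c l * g (z k - z l) ≤ 0

variable {V : Type*} [AddCommGroup V]

lemma CNDQ.congr {g g' : V → ℝ} (hg : CNDQ g) (h : ∀ x, g x = g' x) : CNDQ g' := by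
  have : g' = g := funext fun x => (h x).symm
  rw [this]; exact hg

lemma CNDQ.add {g₁ g₂ : V → ℝ} (h₁ : CNDQ g₁) (h₂ : CNDQ g₂) : CNDQ (fun x => g₁ x + g₂ x) := by
  refine ⟨fun x => by dsimp only; rw [h₁.1, h₂.1], fun m z c hc => ?_⟩
  rw [dsum_add]
  linarith [h₁.2 m z c hc, h₂.2 m z c hc]

lemma CNDQ.const_mul {g : V → ℝ} (hg : CNDQ g) {t : ℝ} (ht : 0 ≤ t) :
    CNDQ (fun x => t * g x) := by
  refine ⟨fun x => by dsimp only; rw [hg.1], fun m z c hc => ?_⟩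
  rw [dsum_mul_left]
  exact mul_nonpos_of_nonneg_of_nonpos ht (hg.2 m z c hc)

lemma CNDQ.comp {W : Type*} [AddCommGroup W] {g : W → ℝ} (hg : CNDQ g) (f : V →+ W) :
    CNDQ (fun x => g (f x)) := by
  refine ⟨fun x => by dsimp only; rw [map_neg, hg.1], fun m z c hc => ?_⟩
  have := hg.2 m (fun k => f (z k)) c hc
  simpa [map_sub] using this

lemma CNDQ.comp_fst {W : Type*} [AddCommGroup W] {g : V → ℝ} (hg : CNDQ g) :
    CNDQ (fun p : V × W => g p.1) := by
  refine ⟨fun x => by dsimp only; rw [show (-x).1 = -x.1 from rfl, hg.1], fun m z c hc => ?_⟩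
  exact hg.2 m (fun k => (z k).1) c hc

lemma CNDQ.comp_snd {W : Type*} [AddCommGroup W] {g : V → ℝ} (hg : CNDQ g) :
    CNDQ (fun p : W × V => g p.2) := by
  refine ⟨fun x => by dsimp only; rw [show (-x).2 = -x.2 from rfl, hg.1], fun m z c hc => ?_⟩
  exact hg.2 m (fun k => (z k).2) c hc

lemma CNDQ.kernel_psdq {g : V → ℝ} (hg : CNDQ g) {m : ℕ} (z : Fin m → V) :
    PSDQ fun k l => g (z k) + g (z l) - g (z k - z l) - g 0 := by
  constructor
  · intro k l
    have h' : g (z k - z l) = g (z l - z k) := by rw [← hg.1 (z l - z k), neg_sub]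
    dsimp only; rw [h']; ring
  intro c
  set s := ∑ k, c k with hs
  set S1 := ∑ k, c k * g (z k) with hS1
  set T := ∑ k, ∑ l, c k * c l * g (z k - z l) with hT
  have h := hg.2 (m + 1) (Fin.cons 0 z) (Fin.cons (-s) c) (by rw [Fin.sum_cons, hs]; ring)
  rw [Fin.sum_univ_succ] at h
  simp only [Fin.cons_zero, Fin.cons_succ, Fin.sum_univ_succ, sub_self, sub_zero, zero_sub,
    hg.1] at h
  have e1 : ∑ l, -s * c l * g (z l) = -s * S1 := by
    rw [hS1, Finset.mul_sum]
    exact Finset.sum_congr rfl fun l _ => by ring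
  have e2 : ∑ k, (c k * -s * g (z k) + ∑ l, c k * c l * g (z k - z l))
      = -s * S1 + T := by
    rw [Finset.sum_add_distrib, hT, hS1, Finset.mul_sum]
    congr 1
    exact Finset.sum_congr rfl fun k _ => by ring
  rw [e1, e2] at h
  -- h : -s * -s * g 0 + -s * S1 + (-s * S1 + T) ≤ 0
  have goal_eq : ∑ k, ∑ l, c k * c l *
        (g (z k) + g (z l) - g (z k - z l) - g 0)
      = S1 * s + s * S1 - T - s * s * g 0 := by
    rw [dsum_sub, dsum_sub, dsum_add, dsum_left, dsum_right, dsum_const, ← hs, ← hS1, ← hT]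
  rw [goal_eq]
  nlinarith [h]

lemma CNDQ.exp_neg_psdq {g : V → ℝ} (hg : CNDQ g) {m : ℕ} (z : Fin m → V) :
    PSDQ fun k l => Real.exp (-g (z k - z l)) := by
  have hK := (hg.kernel_psdq z).exp
  constructor
  · intro k l
    have h' : g (z k - z l) = g (z l - z k) := by rw [← hg.1 (z l - z k), neg_sub]
    dsimp only; rw [h']
  intro c
  have h := hK.2 fun k => c k * Real.exp (-g (z k))
  have key : ∑ k, ∑ l, (c k * Real.exp (-g (z k))) * (c l * Real.exp (-g (z l)))
        * Real.exp (g (z k) + g (z l) - g (z k - z l) - g 0)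
      = Real.exp (-g 0) * ∑ k, ∑ l, c k * c l * Real.exp (-g (z k - z l)) := by
    rw [Finset.mul_sum]
    refine Finset.sum_congr rfl fun k _ => ?_
    rw [Finset.mul_sum]
    refine Finset.sum_congr rfl fun l _ => ?_
    have : Real.exp (-g (z k)) * Real.exp (-g (z l))
          * Real.exp (g (z k) + g (z l) - g (z k - z l) - g 0)
        = Real.exp (-g 0) * Real.exp (-g (z k - z l)) := by
      rw [← Real.exp_add, ← Real.exp_add, ← Real.exp_add]
      ring_nf
    calc c k * Real.exp (-g (z k)) * (c l * Real.exp (-g (z l)))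
          * Real.exp (g (z k) + g (z l) - g (z k - z l) - g 0)
        = c k * c l * (Real.exp (-g (z k)) * Real.exp (-g (z l))
            * Real.exp (g (z k) + g (z l) - g (z k - z l) - g 0)) := by ring
      _ = Real.exp (-g 0) * (c k * c l * Real.exp (-g (z k - z l))) := by rw [this]; ring
  rw [key] at h
  exact nonneg_of_mul_nonneg_right h (Real.exp_pos _)

lemma cndq_norm_sq {E : Type*} [NormedAddCommGroup E] [InnerProductSpace ℝ E] :
    CNDQ (fun x : E => ‖x‖ ^ (2 : ℝ)) := by
  have habs : ∀ x : E, ‖x‖ ^ (2 : ℝ) = ‖x‖ ^ (2 : ℕ) := fun x => by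
    rw [← Real.rpow_natCast ‖x‖ 2]; norm_num
  refine ⟨fun x => by dsimp only; rw [norm_neg], fun m z c hc => ?_⟩
  have key : ∑ k, ∑ l, c k * c l * ‖z k - z l‖ ^ (2 : ℝ)
      = -(2 * (inner ℝ (∑ k, c k • z k) (∑ l, c l • z l) : ℝ)) := by
    have expand : ∀ k l, c k * c l * ‖z k - z l‖ ^ (2 : ℝ)
        = c k * c l * (‖z k‖ ^ (2 : ℕ)) + c k * c l * (‖z l‖ ^ (2 : ℕ))
          - 2 * (c k * c l * (inner ℝ (z k) (z l) : ℝ)) := by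
      intro k l
      rw [habs, norm_sub_sq_real]
      ring
    calc ∑ k, ∑ l, c k * c l * ‖z k - z l‖ ^ (2 : ℝ)
        = ∑ k, ∑ l, (c k * c l * (‖z k‖ ^ (2 : ℕ)) + c k * c l * (‖z l‖ ^ (2 : ℕ))
            - 2 * (c k * c l * (inner ℝ (z k) (z l) : ℝ))) :=
          Finset.sum_congr rfl fun k _ => Finset.sum_congr rfl fun l _ => expand k l
      _ = -(2 * (inner ℝ (∑ k, c k • z k) (∑ l, c l • z l) : ℝ)) := by
          have e1 : ∑ k, ∑ l, c k * c l * (‖z k‖ ^ (2:ℕ)) = 0 := by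
            rw [dsum_left c (fun k => ‖z k‖ ^ (2:ℕ)), hc, mul_zero]
          have e2 : ∑ k, ∑ l, c k * c l * (‖z l‖ ^ (2:ℕ)) = 0 := by
            rw [dsum_right c (fun k => ‖z k‖ ^ (2:ℕ)), hc, zero_mul]
          have e3 : ∑ k, ∑ l, c k * c l * (inner ℝ (z k) (z l) : ℝ)
              = (inner ℝ (∑ k, c k • z k) (∑ l, c l • z l) : ℝ) := by
            rw [sum_inner]
            refine Finset.sum_congr rfl fun k _ => ?_
            rw [inner_sum]
            refine Finset.sum_congr rfl fun l _ => ?_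
            rw [real_inner_smul_left, real_inner_smul_right]
            ring
          have split : ∑ k, ∑ l, (c k * c l * (‖z k‖ ^ (2:ℕ)) + c k * c l * (‖z l‖ ^ (2:ℕ))
                - 2 * (c k * c l * (inner ℝ (z k) (z l) : ℝ)))
              = (∑ k, ∑ l, c k * c l * (‖z k‖ ^ (2:ℕ)))
                + (∑ k, ∑ l, c k * c l * (‖z l‖ ^ (2:ℕ)))
                - 2 * ∑ k, ∑ l, c k * c l * (inner ℝ (z k) (z l) : ℝ) := by
            simp only [Finset.sum_sub_distrib, Finset.sum_add_distrib, Finset.mul_sum]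
          rw [split, e1, e2, e3]
          ring
  rw [key]
  have := real_inner_self_nonneg (x := ∑ k, c k • z k)
  linarith

section Bernstein

variable {β : ℝ}

/-- The subordination integrand `(1 - e^{-sx}) s^{-1-β}`. -/
noncomputable def bfn (x β s : ℝ) : ℝ :=
  (1 - Real.exp (-(s * x))) * s ^ (-1 - β)

lemma bfn_nonneg {x s : ℝ} (hx : 0 ≤ x) (hs : 0 < s) (β : ℝ) : 0 ≤ bfn x β s := by
  have h1 : Real.exp (-(s * x)) ≤ 1 := by
    rw [Real.exp_le_one_iff]
    nlinarith
  have h2 : (0:ℝ) ≤ s ^ (-1 - β) := (Real.rpow_pos_of_pos hs _).le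
  have h3 := sub_nonneg.mpr h1
  exact mul_nonneg h3 h2

lemma bfn_measurable (x β : ℝ) : Measurable (bfn x β) := by
  unfold bfn; fun_prop

lemma bfn_integrableOn (hβ0 : 0 < β) (hβ1 : β < 1) {x : ℝ} (hx : 0 ≤ x) :
    IntegrableOn (bfn x β) (Ioi 0) := by
  have hIoc : IntegrableOn (bfn x β) (Ioc 0 1) := by
    have h1 : IntervalIntegrable (fun s : ℝ => s ^ (-β)) volume 0 1 :=
      intervalIntegral.intervalIntegrable_rpow' (by linarith)
    have h2 : IntegrableOn (fun s : ℝ => s ^ (-β)) (Ioc 0 1) := by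
      rw [intervalIntegrable_iff, uIoc_of_le (by norm_num : (0:ℝ) ≤ 1)] at h1
      exact h1
    have hbound : IntegrableOn (fun s : ℝ => x * s ^ (-β)) (Ioc 0 1) := h2.const_mul x
    refine hbound.mono' ((bfn_measurable x β).aestronglyMeasurable) ?_
    refine (ae_restrict_iff' measurableSet_Ioc).mpr (Filter.Eventually.of_forall fun s hs => ?_)
    have hs0 : 0 < s := hs.1
    rw [Real.norm_of_nonneg (bfn_nonneg hx hs0 β)]
    have hle : 1 - Real.exp (-(s * x)) ≤ s * x := by
      have := Real.add_one_le_exp (-(s * x))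
      linarith
    have hrp : (0:ℝ) < s ^ (-1 - β) := Real.rpow_pos_of_pos hs0 _
    have step : bfn x β s ≤ s * x * s ^ (-1 - β) :=
      mul_le_mul_of_nonneg_right hle hrp.le
    refine le_trans step (le_of_eq ?_)
    calc s * x * s ^ (-1 - β) = x * (s ^ (1:ℝ) * s ^ (-1 - β)) := by
          rw [Real.rpow_one]; ring
      _ = x * s ^ (1 + (-1 - β)) := by rw [← Real.rpow_add hs0]
      _ = x * s ^ (-β) := by rw [show (1 + (-1 - β)) = -β by ring]
  have hIoi : IntegrableOn (bfn x β) (Ioi 1) := by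
    have hbound : IntegrableOn (fun s : ℝ => s ^ (-1 - β)) (Ioi 1) :=
      integrableOn_Ioi_rpow_of_lt (by linarith) one_pos
    refine hbound.mono' ((bfn_measurable x β).aestronglyMeasurable) ?_
    refine (ae_restrict_iff' measurableSet_Ioi).mpr (Filter.Eventually.of_forall fun s hs => ?_)
    have hs0 : 0 < s := lt_trans one_pos hs
    rw [Real.norm_of_nonneg (bfn_nonneg hx hs0 β)]
    have hrp : (0:ℝ) < s ^ (-1 - β) := Real.rpow_pos_of_pos hs0 _
    have h1 : 1 - Real.exp (-(s * x)) ≤ 1 := by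
      have := Real.exp_pos (-(s * x)); linarith
    calc bfn x β s ≤ 1 * s ^ (-1 - β) := mul_le_mul_of_nonneg_right h1 hrp.le
      _ = s ^ (-1 - β) := one_mul _
  have := hIoc.union hIoi
  rwa [Ioc_union_Ioi_eq_Ioi (le_of_lt one_pos)] at this

lemma bfn_integral_eq (hβ0 : 0 < β) (hβ1 : β < 1) {x : ℝ} (hx : 0 < x) :
    ∫ s in Ioi (0:ℝ), bfn x β s = x ^ β * ∫ s in Ioi (0:ℝ), bfn 1 β s := by
  have h1 : ∀ s ∈ Ioi (0:ℝ), bfn x β s = x ^ (1 + β) * bfn 1 β (x * s) := by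
    intro s hs
    have hs0 : (0:ℝ) < s := hs
    unfold bfn
    rw [mul_one, Real.mul_rpow hx.le hs0.le]
    have hx1 : x ^ (1 + β) * x ^ (-1 - β) = 1 := by
      rw [← Real.rpow_add hx]
      norm_num
    calc (1 - Real.exp (-(s * x))) * s ^ (-1 - β)
        = (x ^ (1 + β) * x ^ (-1 - β)) * ((1 - Real.exp (-(s * x))) * s ^ (-1 - β)) := by
          rw [hx1, one_mul]
      _ = x ^ (1 + β) * ((1 - Real.exp (-(x * s))) * (x ^ (-1 - β) * s ^ (-1 - β))) := by
          rw [mul_comm s x]; ring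
  rw [setIntegral_congr_fun measurableSet_Ioi h1]
  rw [MeasureTheory.integral_const_mul]
  rw [integral_comp_mul_left_Ioi (bfn 1 β) 0 hx]
  rw [mul_zero, smul_eq_mul, ← mul_assoc]
  congr 1
  rw [← Real.rpow_neg_one x, ← Real.rpow_add hx]
  norm_num

lemma bfn_integral_one_pos (hβ0 : 0 < β) (hβ1 : β < 1) :
    0 < ∫ s in Ioi (0:ℝ), bfn 1 β s := by
  rw [setIntegral_pos_iff_support_of_nonneg_ae
    ((ae_restrict_iff' measurableSet_Ioi).mpr
      (Filter.Eventually.of_forall fun s hs => bfn_nonneg zero_le_one hs β))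
    (bfn_integrableOn hβ0 hβ1 zero_le_one)]
  have hsub : Ioi (0:ℝ) ⊆ Function.support (bfn 1 β) ∩ Ioi 0 := by
    intro s hs
    refine ⟨?_, hs⟩
    have hs0 : (0:ℝ) < s := hs
    have h1 : Real.exp (-(s * 1)) < 1 := by
      rw [Real.exp_lt_one_iff]; linarith
    have h2 : (0:ℝ) < s ^ (-1 - β) := Real.rpow_pos_of_pos hs0 _
    have : 0 < bfn 1 β s := mul_pos (by linarith) h2
    exact ne_of_gt this
  calc (0:ENNReal) < volume (Ioi (0:ℝ)) := by simp [Real.volume_Ioi]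
    _ ≤ volume (Function.support (bfn 1 β) ∩ Ioi 0) := measure_mono hsub

lemma rpow_mul_eq_integral (hβ0 : 0 < β) (hβ1 : β < 1) {x : ℝ} (hx : 0 ≤ x) :
    x ^ β * (∫ s in Ioi (0:ℝ), bfn 1 β s) = ∫ s in Ioi (0:ℝ), bfn x β s := by
  rcases eq_or_lt_of_le hx with h | h
  · rw [← h, Real.zero_rpow hβ0.ne', zero_mul]
    symm
    have : ∀ s ∈ Ioi (0:ℝ), bfn 0 β s = 0 := by
      intro s _
      unfold bfn
      simp
    rw [setIntegral_congr_fun measurableSet_Ioi this]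
    simp
  · exact (bfn_integral_eq hβ0 hβ1 h).symm

lemma dsum_mul_right {m : ℕ} (c : Fin m → ℝ) (t : ℝ) (F : Fin m → Fin m → ℝ) :
    ∑ k, ∑ l, c k * c l * (F k l * t) = (∑ k, ∑ l, c k * c l * F k l) * t := by
  rw [Finset.sum_mul]
  refine Finset.sum_congr rfl fun k _ => ?_
  rw [Finset.sum_mul]
  exact Finset.sum_congr rfl fun l _ => by ring

lemma CNDQ.rpow {V : Type*} [AddCommGroup V] {g : V → ℝ} (hg : CNDQ g)
    (hpos : ∀ x, 0 ≤ g x) (hβ0 : 0 < β) (hβ1 : β ≤ 1) :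
    CNDQ (fun x => g x ^ β) := by
  rcases eq_or_lt_of_le hβ1 with h1 | h1
  · subst h1
    exact hg.congr fun x => (Real.rpow_one _).symm
  refine ⟨fun x => by dsimp only; rw [hg.1], fun m z c hc => ?_⟩
  set I := ∫ s in Ioi (0:ℝ), bfn 1 β s with hIdef
  have hIpos : 0 < I := bfn_integral_one_pos hβ0 h1
  have hint : ∀ k l : Fin m,
      IntegrableOn (fun s => c k * c l * bfn (g (z k - z l)) β s) (Ioi 0) :=
    fun k l => (bfn_integrableOn hβ0 h1 (hpos _)).const_mul _
  have e1 : ∀ k l : Fin m, c k * c l * g (z k - z l) ^ β * I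
      = ∫ s in Ioi (0:ℝ), c k * c l * bfn (g (z k - z l)) β s := by
    intro k l
    rw [MeasureTheory.integral_const_mul, ← rpow_mul_eq_integral hβ0 h1 (hpos _), mul_assoc]
  have hsum_eq : (∑ k, ∑ l, c k * c l * g (z k - z l) ^ β) * I
      = ∫ s in Ioi (0:ℝ), ∑ k, ∑ l, c k * c l * bfn (g (z k - z l)) β s := by
    rw [MeasureTheory.integral_finset_sum _ fun k _ => integrable_finset_sum _ fun l _ => hint k l]
    rw [Finset.sum_mul]
    refine Finset.sum_congr rfl fun k _ => ?_
    rw [MeasureTheory.integral_finset_sum _ fun l _ => hint k l, Finset.sum_mul]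
    exact Finset.sum_congr rfl fun l _ => e1 k l
  have hptwise : ∀ s ∈ Ioi (0:ℝ),
      (∑ k, ∑ l, c k * c l * bfn (g (z k - z l)) β s) ≤ 0 := by
    intro s hs
    have hs0 : (0:ℝ) < s := hs
    have hcnd : CNDQ (fun x => s * g x) := hg.const_mul hs0.le
    have hPSD := (hcnd.exp_neg_psdq z).2 c
    have expand : ∑ k, ∑ l, c k * c l * bfn (g (z k - z l)) β s
        = ((∑ k, ∑ l, c k * c l * (1:ℝ))
            - ∑ k, ∑ l, c k * c l * Real.exp (-(s * g (z k - z l)))) * s ^ (-1 - β) := by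
      rw [← dsum_sub, ← dsum_mul_right]
      rfl
    rw [expand, dsum_const, hc]
    have hrp : (0:ℝ) ≤ s ^ (-1 - β) := (Real.rpow_pos_of_pos hs0 _).le
    have : (0 * 0 * 1 - ∑ k, ∑ l, c k * c l * Real.exp (-(s * g (z k - z l)))) ≤ 0 := by
      simpa using hPSD
    exact mul_nonpos_of_nonpos_of_nonneg this hrp
  have hneg : (∫ s in Ioi (0:ℝ), ∑ k, ∑ l, c k * c l * bfn (g (z k - z l)) β s) ≤ 0 :=
    setIntegral_nonpos_ae measurableSet_Ioi (Filter.Eventually.of_forall hptwise)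
  have hfin : (∑ k, ∑ l, c k * c l * g (z k - z l) ^ β) * I ≤ 0 := by
    rw [hsum_eq]; exact hneg
  exact nonpos_of_mul_nonpos_left hfin hIpos

end Bernstein

/-- Gumbel–Hougard-family space-time covariance: for `λ₁ ≥ 1`, `ρ₁, ρ₂ ∈ (0,1]`
and `σ² ≥ 0`, the function
`C(h,u) = σ² exp(−(‖h‖^{ρ₁} + |u|^{ρ₂})^{1/λ₁})`
is positive definite on `ℝ^d × ℝ` (Euclidean norm on `ℝ^d`). -/
theorem gumbelHougard_spaceTime_posDef
    (d : ℕ) (hd : 1 ≤ d) (lam₁ : ℝ) (hlam : 1 ≤ lam₁)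
    (ρ₁ ρ₂ : ℝ) (hρ₁ : ρ₁ ∈ Set.Ioc (0 : ℝ) 1) (hρ₂ : ρ₂ ∈ Set.Ioc (0 : ℝ) 1)
    (σ2 : ℝ) (hσ2 : 0 ≤ σ2) :
    IsPosDefFn (fun hu : EuclideanSpace ℝ (Fin d) × ℝ =>
      σ2 * Real.exp (-((‖hu.1‖ ^ ρ₁ + |hu.2| ^ ρ₂) ^ (1 / lam₁)))) := by
  obtain ⟨hρ₁0, hρ₁1⟩ := hρ₁
  obtain ⟨hρ₂0, hρ₂1⟩ := hρ₂
  have hlam0 : (0:ℝ) < lam₁ := lt_of_lt_of_le one_pos hlam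
  intro m z c
  have hsq1 : CNDQ (fun x : EuclideanSpace ℝ (Fin d) => ‖x‖ ^ (2:ℝ)) := cndq_norm_sq
  have hsq2 : CNDQ (fun u : ℝ => ‖u‖ ^ (2:ℝ)) := cndq_norm_sq (E := ℝ)
  have h1 : CNDQ (fun x : EuclideanSpace ℝ (Fin d) => ‖x‖ ^ ρ₁) := by
    refine (hsq1.rpow (β := ρ₁ / 2) (fun x => Real.rpow_nonneg (norm_nonneg x) _)
      (by positivity) (by linarith)).congr fun x => ?_
    rw [← Real.rpow_mul (norm_nonneg x), show (2:ℝ) * (ρ₁ / 2) = ρ₁ by ring]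
  have h2 : CNDQ (fun u : ℝ => |u| ^ ρ₂) := by
    refine (hsq2.rpow (β := ρ₂ / 2) (fun u => Real.rpow_nonneg (norm_nonneg u) _)
      (by positivity) (by linarith)).congr fun u => ?_
    rw [← Real.rpow_mul (norm_nonneg u), show (2:ℝ) * (ρ₂ / 2) = ρ₂ by ring,
      Real.norm_eq_abs]
  have p1 : CNDQ (fun p : EuclideanSpace ℝ (Fin d) × ℝ => ‖p.1‖ ^ ρ₁) := h1.comp_fst
  have p2 : CNDQ (fun p : EuclideanSpace ℝ (Fin d) × ℝ => |p.2| ^ ρ₂) := h2.comp_snd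
  have hadd : CNDQ (fun p : EuclideanSpace ℝ (Fin d) × ℝ => ‖p.1‖ ^ ρ₁ + |p.2| ^ ρ₂) :=
    p1.add p2
  have hfin : CNDQ (fun p : EuclideanSpace ℝ (Fin d) × ℝ =>
      (‖p.1‖ ^ ρ₁ + |p.2| ^ ρ₂) ^ (1 / lam₁)) := by
    refine hadd.rpow (β := 1 / lam₁) (fun p => ?_) (by positivity) ?_
    · have := Real.rpow_nonneg (norm_nonneg p.1) ρ₁
      have := Real.rpow_nonneg (abs_nonneg p.2) ρ₂
      positivity
    · rw [div_le_one hlam0]; linarith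
  have hPSD := (hfin.exp_neg_psdq z).2 c
  dsimp only
  rw [dsum_mul_left c σ2]
  exact mul_nonneg hσ2 hPSD
end
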